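/- arXiv:2104.12018 — 9 statements merged into one kernel-verified Lean document; each statement's English description precedes it below -/
import Mathlib

section
/- For every k ∈ ℕ, there exists l ∈ ℕ such that any finite set A of k-tuples of elements of a countably infinite set (atoms), with |A| ≥ l, contains two distinct tuples α = (a₁,...,a_k) and β = (b₁,...,b_k) that are compatible: they have the same equality type (a_i = a_j ⟺ b_i = b_j for all i,j), and for every coordinate i, either a_i = b_i, or a_i ≠ b_i and a_i does not appear among b₁,...,b_k and b_i does not appear among a₁,...,a_k. -/
/-- Two k-tuples of atoms are *compatible* if they have the same equality type,
and on every coordinate they either agree, or disagree with the disagreeing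
atoms not appearing anywhere in the other tuple. -/
def Compatible {k : ℕ} (α β : Fin k → ℕ) : Prop :=
  (∀ i j : Fin k, α i = α j ↔ β i = β j) ∧
  (∀ i : Fin k, α i = β i ∨
    (α i ≠ β i ∧ (∀ j : Fin k, α i ≠ β j) ∧ (∀ j : Fin k, β i ≠ α j)))

/-!
Split a family without compatible pairs according to the equality type of its tuples; there are
at most `2 ^ (k * k)` types. Within one type, suppose all tuples agree on a set `S` of coordinates
and fix one tuple `α`. Any other tuple `β` is incompatible with `α`, and with equal equality types
and agreement on `S` this forces some coordinate `p ∉ S` with `β p = α q` for some `q`. The tuples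
sharing such a pair `(p, q)` agree on `insert p S`, so by induction on the number of free
coordinates a class has at most `(k * k + 1) ^ k` tuples.
-/

open Finset

variable {k : ℕ}

def eqType (α : Fin k → ℕ) (i j : Fin k) : Bool := decide (α i = α j)

lemma eqType_eq_eqType_iff {α β : Fin k → ℕ} :
    eqType α = eqType β ↔ ∀ i j, α i = α j ↔ β i = β j := by
  simp only [funext_iff, eqType, decide_eq_decide]

lemma exists_apply_eq_apply_of_not_compatible {α β : Fin k → ℕ} {S : Finset (Fin k)}
    (hT : eqType α = eqType β) (hS : ∀ i ∈ S, α i = β i) (h : ¬ Compatible α β) :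
    ∃ p ∉ S, ∃ q, β p = α q := by
  rw [eqType_eq_eqType_iff] at hT
  simp only [Compatible, hT, implies_true, true_and, not_forall, not_or, not_and, not_not] at h
  obtain ⟨i, hne, hi⟩ := h
  by_cases hj : ∃ j, α i = β j
  · obtain ⟨j, hij⟩ := hj
    refine ⟨j, fun hjS => hne ?_, i, hij.symm⟩
    -- `α i = β j = α j`, hence `β i = β j = α i` as the equality types agree
    exact hij.trans ((hT i j).mp (hij.trans (hS j hjS).symm)).symm
  · push Not at hj
    obtain ⟨j, hij⟩ := hi hne hj
    exact ⟨i, fun hiS => hne (hS i hiS), j, hij⟩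

lemma card_le_of_eqOn_of_pairwise_not_compatible {F : Finset (Fin k → ℕ)}
    (hT : ∀ α ∈ F, ∀ β ∈ F, eqType α = eqType β)
    (hC : (F : Set (Fin k → ℕ)).Pairwise fun α β => ¬ Compatible α β)
    {S : Finset (Fin k)} (hS : ∀ α ∈ F, ∀ β ∈ F, ∀ i ∈ S, α i = β i)
    {s : ℕ} (hs : #Sᶜ ≤ s) : #F ≤ (k * k + 1) ^ s := by
  induction s generalizing F S with
  | zero =>
    rw [Nat.le_zero, card_eq_zero, compl_eq_empty_iff] at hs
    subst hs
    exact card_le_one.mpr fun α hα β hβ => funext fun i => hS α hα β hβ i (mem_univ i)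
  | succ s ih =>
    obtain rfl | ⟨α, hα⟩ := F.eq_empty_or_nonempty
    · simp
    have hcover : F.erase α ⊆ (Sᶜ ×ˢ univ).biUnion fun pq => {β ∈ F | β pq.1 = α pq.2} := by
      intro β hβ
      obtain ⟨hβα, hβ⟩ := mem_erase.mp hβ
      obtain ⟨p, hp, q, hpq⟩ := exists_apply_eq_apply_of_not_compatible (hT α hα β hβ)
        (hS α hα β hβ) (hC hα hβ (Ne.symm hβα))
      simp only [mem_biUnion, mem_product, mem_compl, mem_univ, and_true, mem_filter]
      exact ⟨(p, q), hp, hβ, hpq⟩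
    have hfiber : ∀ pq ∈ Sᶜ ×ˢ (univ : Finset (Fin k)),
        #{β ∈ F | β pq.1 = α pq.2} ≤ (k * k + 1) ^ s := by
      intro pq hpq
      have hp : pq.1 ∈ Sᶜ := (mem_product.mp hpq).1
      refine ih (fun β hβ γ hγ => hT β (mem_filter.mp hβ).1 γ (mem_filter.mp hγ).1)
        (hC.mono (filter_subset _ F)) (S := insert pq.1 S) ?_ ?_
      · intro β hβ γ hγ i hi
        rw [mem_filter] at hβ hγ
        rcases mem_insert.mp hi with rfl | hi
        · exact hβ.2.trans hγ.2.symm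
        · exact hS β hβ.1 γ hγ.1 i hi
      · rw [compl_insert, card_erase_of_mem hp]
        omega
    have hSc : #Sᶜ ≤ k := by simpa using card_le_univ Sᶜ
    have hpos : 1 ≤ (k * k + 1) ^ s := Nat.one_le_pow _ _ (Nat.succ_pos _)
    calc #F = #(F.erase α) + 1 := (card_erase_add_one hα).symm
      _ ≤ #(Sᶜ ×ˢ (univ : Finset (Fin k))) * (k * k + 1) ^ s + 1 :=
        add_le_add_left ((card_le_card hcover).trans (card_biUnion_le_card_mul _ _ _ hfiber)) 1
      _ ≤ k * k * (k * k + 1) ^ s + (k * k + 1) ^ s := by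
        rw [card_product, card_univ, Fintype.card_fin]
        gcongr
      _ = (k * k + 1) ^ (s + 1) := by ring

lemma card_le_of_pairwise_not_compatible {A : Finset (Fin k → ℕ)}
    (hC : (A : Set (Fin k → ℕ)).Pairwise fun α β => ¬ Compatible α β) :
    #A ≤ 2 ^ (k * k) * (k * k + 1) ^ k := by
  have hcover : A ⊆ (univ : Finset (Fin k → Fin k → Bool)).biUnion
      fun t => {α ∈ A | eqType α = t} := fun α hα => by simp [hα]
  have hclass : ∀ t ∈ (univ : Finset (Fin k → Fin k → Bool)),
      #{α ∈ A | eqType α = t} ≤ (k * k + 1) ^ k := by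
    intro t _
    exact card_le_of_eqOn_of_pairwise_not_compatible
      (fun α hα β hβ => (mem_filter.mp hα).2.trans (mem_filter.mp hβ).2.symm)
      (hC.mono (filter_subset _ A)) (S := ∅) (by simp) (by simp)
  calc #A ≤ #(univ : Finset (Fin k → Fin k → Bool)) * (k * k + 1) ^ k :=
        (card_le_card hcover).trans (card_biUnion_le_card_mul _ _ _ hclass)
    _ = 2 ^ (k * k) * (k * k + 1) ^ k := by simp [pow_mul]

/-- For every k there is l such that any finite set of k-tuples of atoms of
cardinality at least l contains two distinct compatible tuples. -/
theorem compatible_pair_of_large (k : ℕ) :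
    ∃ l : ℕ, ∀ A : Finset (Fin k → ℕ), l ≤ A.card →
      ∃ α ∈ A, ∃ β ∈ A, α ≠ β ∧ Compatible α β := by
  refine ⟨2 ^ (k * k) * (k * k + 1) ^ k + 1, fun A hA => ?_⟩
  by_contra h
  push Not at h
  have := card_le_of_pairwise_not_compatible (A := A) fun α hα β hβ => h α hα β hβ
  omega
end

section
/- Let G be a strongly connected directed graph with n vertices such that for every two vertices d, d', ind(d) + outd(d') ≥ n. Then G contains a Hamiltonian cycle. (Ghouila-Houri-type condition.) -/
namespace GH

/-- A directed cycle of length `k` in the digraph `E` on `Fin n`. -/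
def IsCycF (n : ℕ) (E : Fin n → Fin n → Prop) (k : ℕ) (g : ZMod k → Fin n) : Prop :=
  1 ≤ k ∧ Function.Injective g ∧ ∀ i : ZMod k, E (g i) (g (i + 1))

/-- A directed path with `l` vertices, all inside `S`. -/
def IsPathN (n : ℕ) (E : Fin n → Fin n → Prop) (S : Finset (Fin n)) (l : ℕ) (z : ℕ → Fin n) :
    Prop :=
  (∀ a, a < l → z a ∈ S) ∧ (∀ a b, a < l → b < l → z a = z b → a = b) ∧
    (∀ a, a + 1 < l → E (z a) (z (a + 1)))

lemma val_add_one {m : ℕ} [NeZero m] (i : ZMod m) : (i + 1).val = (i.val + 1) % m := by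
  rw [← Nat.cast_one (R := ZMod m), ZMod.val_add, ZMod.val_natCast,
    Nat.add_mod i.val 1 m, Nat.mod_eq_of_lt (ZMod.val_lt i)]

lemma val_inj {m : ℕ} [NeZero m] {a b : ZMod m} (h : a.val = b.val) : a = b := by
  have ha := ZMod.natCast_rightInverse (n := m) a
  have hb := ZMod.natCast_rightInverse (n := m) b
  rw [← ha, ← hb, h]

lemma cast_val {m : ℕ} [NeZero m] (a : ZMod m) : ((a.val : ℕ) : ZMod m) = a :=
  ZMod.natCast_rightInverse a

lemma isCycF_of_fun {n : ℕ} (E : Fin n → Fin n → Prop) (m : ℕ) (hm : 1 ≤ m) (w : ℕ → Fin n)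
    (hinj : ∀ a, a < m → ∀ b, b < m → w a = w b → a = b)
    (hchain : ∀ a, a + 1 < m → E (w a) (w (a + 1)))
    (hlast : E (w (m - 1)) (w 0)) :
    IsCycF n E m (fun i => w i.val) := by
  haveI : NeZero m := ⟨by omega⟩
  refine ⟨hm, ?_, ?_⟩
  · intro a b h
    exact val_inj (hinj _ (ZMod.val_lt a) _ (ZMod.val_lt b) h)
  · intro i
    have hlt := ZMod.val_lt i
    show E (w i.val) (w (i + 1).val)
    rcases lt_or_ge (i.val + 1) m with h | h
    · have h2 : (i + 1).val = i.val + 1 := by rw [val_add_one, Nat.mod_eq_of_lt h]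
      rw [h2]
      exact hchain _ (by omega)
    · have hi : i.val = m - 1 := by omega
      have h2 : (i + 1).val = 0 := by
        rw [val_add_one, hi, show m - 1 + 1 = m by omega, Nat.mod_self]
      rw [h2, hi]
      exact hlast

lemma path_le {n : ℕ} {E : Fin n → Fin n → Prop} {S : Finset (Fin n)} {l : ℕ} {z : ℕ → Fin n}
    (h : IsPathN n E S l z) : l ≤ n := by
  have hinj : Set.InjOn z (Finset.range l) := by
    intro a ha b hb hab
    exact h.2.1 a b (by simpa using ha) (by simpa using hb) hab
  calc l = (Finset.range l).card := (Finset.card_range l).symm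
    _ = ((Finset.range l).image z).card := (Finset.card_image_of_injOn hinj).symm
    _ ≤ Finset.univ.card := Finset.card_le_univ _
    _ = n := by simp

lemma cyc_le {n : ℕ} {E : Fin n → Fin n → Prop} {k : ℕ} {g : ZMod k → Fin n}
    (h : IsCycF n E k g) : k ≤ n := by
  haveI : NeZero k := ⟨by have := h.1; omega⟩
  calc k = Fintype.card (ZMod k) := (ZMod.card k).symm
    _ ≤ Fintype.card (Fin n) := Fintype.card_le_of_injective g h.2.1
    _ = n := Fintype.card_fin n

/-- existence of a maximal path in `S`. -/
lemma exists_maxpath {n : ℕ} (E : Fin n → Fin n → Prop) (S : Finset (Fin n))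
    (hS : S.Nonempty) :
    ∃ l z, 1 ≤ l ∧ IsPathN n E S l z ∧
      (∀ w ∈ S, E (z (l - 1)) w → ∃ a, a < l ∧ z a = w) ∧
      (∀ w ∈ S, E w (z 0) → ∃ a, a < l ∧ z a = w) := by
  classical
  obtain ⟨v, hv⟩ := hS
  set P : ℕ → Prop := fun l => ∃ z, IsPathN n E S l z with hP
  have h1 : P 1 := ⟨fun _ => v, fun a _ => hv, fun a b ha hb _ => by omega, fun a h => by omega⟩
  have hbd : ∀ l, P l → l ≤ n := fun l ⟨z, hz⟩ => path_le hz
  have hn1 : 1 ≤ n := hbd 1 h1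
  set l := Nat.findGreatest P n with hl
  have hPl : P l := Nat.findGreatest_spec hn1 h1
  have hl1 : 1 ≤ l := Nat.le_findGreatest hn1 h1
  have hmax : ¬ P (l + 1) := by
    intro hq
    have hle : l + 1 ≤ n := hbd _ hq
    exact Nat.findGreatest_is_greatest (lt_add_one l) hle hq
  obtain ⟨z, hz⟩ := hPl
  refine ⟨l, z, hl1, hz, ?_, ?_⟩
  · -- append
    intro w hw hE
    by_contra hcon
    push_neg at hcon
    apply hmax
    refine ⟨fun a => if a < l then z a else w, ?_, ?_, ?_⟩
    · intro a ha
      by_cases h : a < l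
      · simpa [h] using hz.1 a h
      · simpa [h] using hw
    · intro a b ha hb hab
      by_cases h : a < l <;> by_cases h' : b < l <;> simp [h, h'] at hab
      · exact hz.2.1 a b h h' hab
      · exact absurd hab (hcon a h)
      · exact absurd hab.symm (hcon b h')
      · omega
    · intro a ha
      show E (if a < l then z a else w) (if a + 1 < l then z (a + 1) else w)
      by_cases h : a + 1 < l
      · have h2 : a < l := by omega
        simp only [if_pos h, if_pos h2]
        exact hz.2.2 a h
      · have h2 : a < l := by omega
        simp only [if_pos h2, if_neg h]
        have h3 : a = l - 1 := by omega
        rw [h3]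
        exact hE
  · -- prepend
    intro w hw hE
    by_contra hcon
    push_neg at hcon
    apply hmax
    refine ⟨fun a => if a = 0 then w else z (a - 1), ?_, ?_, ?_⟩
    · intro a ha
      by_cases h : a = 0
      · simpa [h] using hw
      · simpa [h] using hz.1 (a - 1) (by omega)
    · intro a b ha hb hab
      by_cases h : a = 0 <;> by_cases h' : b = 0 <;> simp [h, h'] at hab
      · omega
      · exact absurd hab.symm (hcon (b - 1) (by omega))
      · exact absurd hab (hcon (a - 1) (by omega))
      · have := hz.2.1 (a - 1) (b - 1) (by omega) (by omega) hab
        omega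
    · intro a ha
      show E (if a = 0 then w else z (a - 1)) (if a + 1 = 0 then w else z (a + 1 - 1))
      have h1 : ¬ (a + 1 = 0) := by omega
      by_cases h : a = 0
      · simp only [if_pos h, if_neg h1, h]
        exact hE
      · simp only [if_neg h, if_neg h1]
        have hc := hz.2.2 (a - 1) (by omega)
        rw [show a - 1 + 1 = a by omega] at hc
        rw [show a + 1 - 1 = a by omega]
        exact hc


/-- From minimum out-degree `q ≥ 1` we get a cycle of length at least `q + 1`. -/
lemma exists_cycle {n : ℕ} (E : Fin n → Fin n → Prop) [DecidableRel E] (hn : 0 < n)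
    (hirr : ∀ v, ¬ E v v) (q : ℕ) (hq1 : 1 ≤ q)
    (hq : ∀ v, q ≤ (Finset.univ.filter (fun u => E v u)).card) :
    ∃ k g, IsCycF n E k g ∧ q + 1 ≤ k := by
  classical
  obtain ⟨l, z, hl1, hz, happ, -⟩ :=
    exists_maxpath E Finset.univ ⟨⟨0, hn⟩, Finset.mem_univ _⟩
  set e := z (l - 1) with he
  -- out-neighbours of e are on the path
  have hmem : ∀ u, E e u → ∃ a, a < l ∧ z a = u := fun u hu =>
    happ u (Finset.mem_univ u) hu
  -- there is an out-neighbour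
  have hne : ∃ a, a < l ∧ E e (z a) := by
    have h1 : (Finset.univ.filter (fun u => E e u)).Nonempty := by
      have hcq := hq e
      rw [← Finset.card_pos]
      omega
    obtain ⟨u, hu⟩ := h1
    rw [Finset.mem_filter] at hu
    obtain ⟨a, ha, hza⟩ := hmem u hu.2
    exact ⟨a, ha, hza ▸ hu.2⟩
  set i0 := Nat.find hne with hi0
  obtain ⟨hi0l, hi0E⟩ := Nat.find_spec hne
  set m := l - i0 with hm
  have hm1 : 1 ≤ m := by omega
  have hcyc : IsCycF n E m (fun i => z (i0 + i.val)) := by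
    refine isCycF_of_fun E m hm1 (fun a => z (i0 + a)) ?_ ?_ ?_
    · intro a ha b hb h
      have := hz.2.1 _ _ (by omega) (by omega) h
      omega
    · intro a ha
      exact hz.2.2 (i0 + a) (by omega)
    · show E (z (i0 + (m - 1))) (z (i0 + 0))
      rw [show i0 + (m - 1) = l - 1 by omega, Nat.add_zero]
      exact hi0E
  -- count: out-neighbours of e are z a for i0 ≤ a ≤ l - 2
  have hsub : Finset.univ.filter (fun u => E e u) ⊆ (Finset.Ico i0 (l - 1)).image z := by
    intro u hu
    rw [Finset.mem_filter] at hu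
    obtain ⟨a, ha, hza⟩ := hmem u hu.2
    have ha0 : i0 ≤ a := by
      by_contra hc
      exact Nat.find_min hne (by omega) ⟨ha, hza ▸ hu.2⟩
    have ha1 : a ≠ l - 1 := by
      intro h
      have h2 : u = e := by rw [← hza, h]
      rw [h2] at hu
      exact hirr e hu.2
    exact Finset.mem_image.2 ⟨a, Finset.mem_Ico.2 ⟨ha0, by omega⟩, hza⟩
  have hcard : q ≤ l - 1 - i0 := by
    calc q ≤ _ := hq e
      _ ≤ ((Finset.Ico i0 (l - 1)).image z).card := Finset.card_le_card hsub
      _ ≤ (Finset.Ico i0 (l - 1)).card := Finset.card_image_le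
      _ = l - 1 - i0 := Nat.card_Ico _ _
  exact ⟨m, _, hcyc, by omega⟩

/-- Reversing a cycle of the reversed digraph. -/
lemma cyc_flip {n : ℕ} {E : Fin n → Fin n → Prop} {k : ℕ} {g : ZMod k → Fin n}
    (h : IsCycF n (fun a b => E b a) k g) : IsCycF n E k (fun i => g (-i)) := by
  refine ⟨h.1, ?_, ?_⟩
  · intro a b hab
    have := h.2.1 hab
    simpa using this
  · intro i
    have h2 := h.2.2 (-(i + 1))
    simpa [show -(i + 1) + 1 = -i by ring] using h2


/-- Splicing a path into a longest cycle yields a contradiction. -/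
lemma splice {n : ℕ} {E : Fin n → Fin n → Prop} {k : ℕ} {c : ZMod k → Fin n}
    (hc : IsCycF n E k c) (hmax : ∀ k' g, IsCycF n E k' g → k' ≤ k)
    {S : Finset (Fin n)} {l : ℕ} {z : ℕ → Fin n} (hz : IsPathN n E S l z) (hl : 1 ≤ l)
    (hdisj : ∀ a, a < l → ∀ i : ZMod k, z a ≠ c i)
    (i j : ZMod k) (t : ℕ) (ht1 : 1 ≤ t) (htk : t ≤ k) (htl : t ≤ l)
    (hji : j = i + (t : ZMod k)) (hin : E (c i) (z 0)) (hout : E (z (l - 1)) (c j)) :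
    False := by
  haveI : NeZero k := ⟨by have := hc.1; omega⟩
  set m' := k - t + 1 + l with hm'
  set w : ℕ → Fin n := fun a => if a ≤ k - t then c (j + (a : ZMod k)) else z (a - (k - t + 1))
    with hw
  have fc : ∀ a b : ℕ, a ≤ k - t → b ≤ k - t → j + (a : ZMod k) = j + (b : ZMod k) → a = b := by
    intro a b ha hb h
    have h2 : (a : ZMod k) = (b : ZMod k) := by
      have := add_left_cancel h
      exact this
    have h3 := congrArg ZMod.val h2
    rwa [ZMod.val_cast_of_lt (by omega), ZMod.val_cast_of_lt (by omega)] at h3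
  have fend : j + ((k - t : ℕ) : ZMod k) = i := by
    rw [hji, add_assoc, ← Nat.cast_add, show t + (k - t) = k by omega,
      ZMod.natCast_self, add_zero]
  have hcyc : IsCycF n E m' (fun a => w a.val) := by
    refine isCycF_of_fun E m' (by omega) w ?_ ?_ ?_
    · intro a ha b hb h
      rw [hw] at h
      by_cases h1 : a ≤ k - t <;> by_cases h2 : b ≤ k - t <;> simp only [h1, h2,
        if_pos, if_neg, if_true, if_false] at h
      · exact fc a b h1 h2 (hc.2.1 h)
      · exact absurd h.symm (hdisj (b - (k - t + 1)) (by omega) _)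
      · exact absurd h (hdisj (a - (k - t + 1)) (by omega) _)
      · have := hz.2.1 _ _ (by omega) (by omega) h
        omega
    · intro a ha
      rw [hw]
      by_cases h1 : a + 1 ≤ k - t
      · simp only [if_pos h1, if_pos (by omega : a ≤ k - t)]
        have h2 := hc.2.2 (j + (a : ZMod k))
        rwa [show ((a + 1 : ℕ) : ZMod k) = (a : ZMod k) + 1 by push_cast; ring, ← add_assoc]
      · by_cases h2 : a ≤ k - t
        · have h3 : a = k - t := by omega
          simp only [if_pos h2, if_neg h1]
          rw [h3, fend, show k - t + 1 - (k - t + 1) = 0 by omega]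
          exact hin
        · simp only [if_neg h1, if_neg h2]
          have h4 := hz.2.2 (a - (k - t + 1)) (by omega)
          rwa [show a - (k - t + 1) + 1 = a + 1 - (k - t + 1) by omega] at h4
    · rw [hw]
      simp only [show ¬ (m' - 1 ≤ k - t) by omega, if_neg, if_false,
        show (0 : ℕ) ≤ k - t by omega, if_pos, if_true]
      rw [show m' - 1 - (k - t + 1) = l - 1 by omega, Nat.cast_zero, add_zero]
      exact hout
  have := hmax m' _ hcyc
  omega


/-- Key counting lemma on `ZMod k`: if no element of `B` is at forward distance
`1, ..., l` from an element of `A`, then `|A| + |B| + (l-1) ≤ k`. -/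
lemma arc {k l : ℕ} (hk : l + 1 ≤ k) (hl : 1 ≤ l) (A B : Finset (ZMod k))
    (hA : A.Nonempty) (hB : B.Nonempty)
    (hex : ∀ i ∈ A, ∀ j ∈ B, ∀ t : ℕ, 1 ≤ t → t ≤ l → j ≠ i + (t : ZMod k)) :
    A.card + B.card + (l - 1) ≤ k := by
  classical
  haveI : NeZero k := ⟨by omega⟩
  obtain ⟨cb, hcb⟩ := hB
  have key : ∀ a ∈ A, (cb - a).val = 0 ∨ l + 1 ≤ (cb - a).val := by
    intro a ha
    by_contra hc
    push_neg at hc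
    obtain ⟨h1, h2⟩ := hc
    refine hex a ha cb hcb (cb - a).val (by omega) (by omega) ?_
    rw [cast_val]
    ring
  have keym : ∀ a ∈ A, l ≤ (cb - 1 - a).val := by
    intro a ha
    rcases key a ha with h | h
    · have h0 : cb - a = 0 := by
        have h5 := cast_val (cb - a)
        rw [h] at h5
        simpa using h5.symm
      have h1 : cb - 1 - a = ((k - 1 : ℕ) : ZMod k) := by
        have h3 : ((k - 1 : ℕ) : ZMod k) + 1 = 0 := by
          have h9 : ((k - 1 : ℕ) : ZMod k) + ((1 : ℕ) : ZMod k) = ((k - 1 + 1 : ℕ) : ZMod k) :=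
            (Nat.cast_add _ _).symm
          rw [Nat.cast_one] at h9
          rw [h9, show k - 1 + 1 = k by omega, ZMod.natCast_self]
        have h4 : ((k - 1 : ℕ) : ZMod k) = -1 := eq_neg_of_add_eq_zero_left h3
        rw [h4, show cb - 1 - a = (cb - a) - 1 by ring, h0]
        ring
      rw [h1, ZMod.val_cast_of_lt (by omega)]
      omega
    · have hvlt := ZMod.val_lt (cb - a)
      have h1 : cb - 1 - a = (((cb - a).val - 1 : ℕ) : ZMod k) := by
        rw [Nat.cast_sub (by omega), cast_val, Nat.cast_one]
        ring
      rw [h1, ZMod.val_cast_of_lt (by omega)]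
      omega
  obtain ⟨a0, ha0, hmin⟩ := Finset.exists_min_image A (fun a => (cb - 1 - a).val) hA
  have hM := keym a0 ha0
  have hMlt := ZMod.val_lt (cb - 1 - a0)
  have gap : ∀ s : ℕ, 1 ≤ s → s ≤ l - 1 → a0 + (s : ZMod k) ∉ A := by
    intro s hs1 hs2 hmem
    have h2 : (cb - 1 - (a0 + (s : ZMod k))).val = (cb - 1 - a0).val - s := by
      have h3 : cb - 1 - (a0 + (s : ZMod k)) = (((cb - 1 - a0).val - s : ℕ) : ZMod k) := by
        rw [Nat.cast_sub (by omega), cast_val]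
        ring
      rw [h3, ZMod.val_cast_of_lt (by omega)]
    have h4 := hmin _ hmem
    simp only [h2] at h4
    omega
  -- the three pairwise disjoint sets
  set A1 : Finset (ZMod k) := A.image (· + (1 : ZMod k)) with hA1
  set T : Finset (ZMod k) := (Finset.Icc 2 l).image (fun t : ℕ => a0 + (t : ZMod k)) with hT
  have cardA1 : A1.card = A.card := Finset.card_image_of_injective _ (add_left_injective 1)
  have cardT : T.card = l - 1 := by
    rw [hT, Finset.card_image_of_injOn, Nat.card_Icc]
    · omega
    · intro t ht t' ht' hEq
      rw [Finset.mem_coe, Finset.mem_Icc] at ht ht'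
      have h5 : (t : ZMod k) = (t' : ZMod k) := add_left_cancel hEq
      have h6 := congrArg ZMod.val h5
      rwa [ZMod.val_cast_of_lt (by omega), ZMod.val_cast_of_lt (by omega)] at h6
  have dA1B : Disjoint A1 B := by
    rw [Finset.disjoint_left]
    rintro x hx hxB
    rw [hA1, Finset.mem_image] at hx
    obtain ⟨a, ha, rfl⟩ := hx
    exact hex a ha _ hxB 1 le_rfl hl (by rw [Nat.cast_one])
  have dTB : Disjoint T B := by
    rw [Finset.disjoint_left]
    rintro x hx hxB
    rw [hT, Finset.mem_image] at hx
    obtain ⟨t, ht, rfl⟩ := hx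
    rw [Finset.mem_Icc] at ht
    exact hex a0 ha0 _ hxB t (by omega) ht.2 rfl
  have dA1T : Disjoint A1 T := by
    rw [Finset.disjoint_left]
    rintro x hx hxT
    rw [hA1, Finset.mem_image] at hx
    obtain ⟨a, ha, rfl⟩ := hx
    rw [hT, Finset.mem_image] at hxT
    obtain ⟨t, ht, hEq⟩ := hxT
    rw [Finset.mem_Icc] at ht
    have h7 : a = a0 + ((t - 1 : ℕ) : ZMod k) := by
      rw [Nat.cast_sub (by omega), Nat.cast_one]
      linear_combination -hEq
    exact gap (t - 1) (by omega) (by omega) (h7 ▸ ha)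
  have hunion : (A1 ∪ T ∪ B).card = A.card + (l - 1) + B.card := by
    rw [Finset.card_union_of_disjoint (by
      rw [Finset.disjoint_union_left]; exact ⟨dA1B, dTB⟩),
      Finset.card_union_of_disjoint dA1T, cardA1, cardT]
  have hle : (A1 ∪ T ∪ B).card ≤ k := by
    calc (A1 ∪ T ∪ B).card ≤ Finset.univ.card := Finset.card_le_univ _
      _ = Fintype.card (ZMod k) := Finset.card_univ
      _ = k := ZMod.card k
  omega

end GH

/-- Ghouila-Houri-type condition: a strongly connected directed graph on `n`
vertices (no self-loops) in which `ind(d) + outd(d') ≥ n` for all vertices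
`d, d'` contains a Hamiltonian cycle. -/
theorem hamiltonian_of_ghouila_houri (n : ℕ) (hn : 0 < n)
    (E : Fin n → Fin n → Prop)
    (hirr : ∀ v, ¬ E v v)
    (hsc : ∀ u v : Fin n, Relation.ReflTransGen E u v)
    (hdeg : ∀ d d' : Fin n,
      n ≤ Nat.card {u : Fin n // E u d} + Nat.card {u : Fin n // E d' u}) :
    ∃ f : ZMod n → Fin n, Function.Bijective f ∧ ∀ i : ZMod n, E (f i) (f (i + 1)) := by
  classical
  haveI : NeZero n := ⟨by omega⟩
  haveI hdec : DecidableRel E := fun a b => Classical.dec _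
  set Ind : Fin n → ℕ := fun d => (Finset.univ.filter (fun u => E u d)).card with hIndd
  set Outd : Fin n → ℕ := fun d => (Finset.univ.filter (fun u => E d u)).card with hOutdd
  have hdeg' : ∀ d d', n ≤ Ind d + Outd d' := by
    intro d d'
    have h1 : Nat.card {u : Fin n // E u d} = Ind d := by
      rw [Nat.card_eq_fintype_card, Fintype.card_subtype]
    have h2 : Nat.card {u : Fin n // E d' u} = Outd d' := by
      rw [Nat.card_eq_fintype_card, Fintype.card_subtype]
    rw [← h1, ← h2]
    exact hdeg d d'
  have hIndlt : ∀ d, Ind d ≤ n - 1 := by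
    intro d
    have h1 : Finset.univ.filter (fun u => E u d) ⊆ Finset.univ.erase d := by
      intro u hu
      rw [Finset.mem_filter] at hu
      refine Finset.mem_erase.2 ⟨?_, Finset.mem_univ u⟩
      rintro rfl
      exact hirr _ hu.2
    calc Ind d ≤ (Finset.univ.erase d).card := Finset.card_le_card h1
      _ = n - 1 := by rw [Finset.card_erase_of_mem (Finset.mem_univ d)]; simp
  have hOut1 : ∀ v, 1 ≤ Outd v := by
    intro v
    have h1 := hdeg' v v
    have h2 := hIndlt v
    omega
  -- longest cycle
  obtain ⟨k0, g0, hg0, hk0⟩ := GH.exists_cycle E hn hirr 1 le_rfl hOut1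
  have hex : ∃ k, (∃ g, GH.IsCycF n E k g) ∧ 2 ≤ k ∧
      (∀ k' g', GH.IsCycF n E k' g' → k' ≤ k) := by
    set K : ℕ → Prop := fun k => ∃ g, GH.IsCycF n E k g with hK
    have hKbd : ∀ m, K m → m ≤ n := fun m ⟨g, hg⟩ => GH.cyc_le hg
    have hK0 : K k0 := ⟨g0, hg0⟩
    refine ⟨Nat.findGreatest K n, Nat.findGreatest_spec (hKbd _ hK0) hK0, ?_, ?_⟩
    · exact le_trans hk0 (Nat.le_findGreatest (hKbd _ hK0) hK0)
    · intro k' g' hg'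
      by_contra h
      exact Nat.findGreatest_is_greatest (P := K) (by omega) (hKbd k' ⟨g', hg'⟩) ⟨g', hg'⟩
  obtain ⟨k, ⟨c, hc⟩, hk2, hmax⟩ := hex
  haveI : NeZero k := ⟨by omega⟩
  have hkn : k ≤ n := GH.cyc_le hc
  rcases eq_or_lt_of_le hkn with hkeq | hklt
  · subst hkeq
    exact ⟨c, (Fintype.bijective_iff_injective_and_card c).2
      ⟨hc.2.1, by rw [ZMod.card, Fintype.card_fin]⟩, hc.2.2⟩
  -- k < n : derive a contradiction
  exfalso
  set Cs : Finset (Fin n) := Finset.univ.image c with hCs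
  have hCcard : Cs.card = k := by
    rw [hCs, Finset.card_image_of_injective _ hc.2.1, Finset.card_univ, ZMod.card]
  set S : Finset (Fin n) := Finset.univ \ Cs with hS
  have hScard : S.card = n - k := by
    rw [hS, Finset.card_sdiff_of_subset (Finset.subset_univ _), Finset.card_univ, Fintype.card_fin, hCcard]
  have hSne : S.Nonempty := by rw [← Finset.card_pos]; omega
  obtain ⟨l, z, hl1, hz, happ, hpre⟩ := GH.exists_maxpath E S hSne
  have hdisj : ∀ a, a < l → ∀ i : ZMod k, z a ≠ c i := by
    intro a ha i hEq
    have h1 := hz.1 a ha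
    rw [hS, Finset.mem_sdiff] at h1
    exact h1.2 (hEq ▸ Finset.mem_image_of_mem c (Finset.mem_univ i))
  have hkl : k + l ≤ n := by
    have hdisj2 : Disjoint Cs ((Finset.range l).image z) := by
      rw [Finset.disjoint_right]
      intro x hx
      rw [Finset.mem_image] at hx
      obtain ⟨a, ha, rfl⟩ := hx
      rw [Finset.mem_range] at ha
      rw [hCs, Finset.mem_image]
      rintro ⟨i, -, hEq⟩
      exact hdisj a ha i hEq.symm
    have hzcard : ((Finset.range l).image z).card = l := by
      rw [Finset.card_image_of_injOn, Finset.card_range]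
      intro a ha b hb hab
      rw [Finset.mem_coe, Finset.mem_range] at ha hb
      exact hz.2.1 a b ha hb hab
    calc k + l = (Cs ∪ (Finset.range l).image z).card := by
          rw [Finset.card_union_of_disjoint hdisj2, hCcard, hzcard]
      _ ≤ Finset.univ.card := Finset.card_le_univ _
      _ = n := by simp
  set A : Finset (ZMod k) := Finset.univ.filter (fun i => E (c i) (z 0)) with hA
  set B : Finset (ZMod k) := Finset.univ.filter (fun i => E (z (l - 1)) (c i)) with hB
  -- degree bounds
  have himg : ((Finset.range l).image z).card = l := by
    rw [Finset.card_image_of_injOn, Finset.card_range]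
    intro a ha b hb hab
    rw [Finset.mem_coe, Finset.mem_range] at ha hb
    exact hz.2.1 a b ha hb hab
  have hIndb : Ind (z 0) ≤ A.card + (l - 1) := by
    have hz0mem : z 0 ∈ (Finset.range l).image z :=
      Finset.mem_image_of_mem z (Finset.mem_range.2 (by omega))
    have hsub : Finset.univ.filter (fun u => E u (z 0)) ⊆
        A.image c ∪ ((Finset.range l).image z).erase (z 0) := by
      intro u hu
      rw [Finset.mem_filter] at hu
      by_cases hmem : u ∈ Cs
      · rw [hCs, Finset.mem_image] at hmem
        obtain ⟨i, -, rfl⟩ := hmem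
        refine Finset.mem_union_left _ (Finset.mem_image_of_mem c ?_)
        rw [hA, Finset.mem_filter]
        exact ⟨Finset.mem_univ i, hu.2⟩
      · have huS : u ∈ S := by rw [hS, Finset.mem_sdiff]; exact ⟨Finset.mem_univ u, hmem⟩
        obtain ⟨a, ha, rfl⟩ := hpre u huS hu.2
        refine Finset.mem_union_right _ (Finset.mem_erase.2
          ⟨?_, Finset.mem_image_of_mem z (Finset.mem_range.2 ha)⟩)
        intro hEq
        rw [hEq] at hu
        exact hirr _ hu.2
    calc Ind (z 0) ≤ (A.image c ∪ ((Finset.range l).image z).erase (z 0)).card :=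
          Finset.card_le_card hsub
      _ ≤ (A.image c).card + (((Finset.range l).image z).erase (z 0)).card :=
          Finset.card_union_le _ _
      _ ≤ A.card + (l - 1) := by
          have h1 : (A.image c).card ≤ A.card := Finset.card_image_le
          have h2 : (((Finset.range l).image z).erase (z 0)).card = l - 1 := by
            rw [Finset.card_erase_of_mem hz0mem, himg]
          omega
  have hOutb : Outd (z (l - 1)) ≤ B.card + (l - 1) := by
    have hzlmem : z (l - 1) ∈ (Finset.range l).image z :=
      Finset.mem_image_of_mem z (Finset.mem_range.2 (by omega))
    have hsub : Finset.univ.filter (fun u => E (z (l - 1)) u) ⊆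
        B.image c ∪ ((Finset.range l).image z).erase (z (l - 1)) := by
      intro u hu
      rw [Finset.mem_filter] at hu
      by_cases hmem : u ∈ Cs
      · rw [hCs, Finset.mem_image] at hmem
        obtain ⟨i, -, rfl⟩ := hmem
        refine Finset.mem_union_left _ (Finset.mem_image_of_mem c ?_)
        rw [hB, Finset.mem_filter]
        exact ⟨Finset.mem_univ i, hu.2⟩
      · have huS : u ∈ S := by rw [hS, Finset.mem_sdiff]; exact ⟨Finset.mem_univ u, hmem⟩
        obtain ⟨a, ha, rfl⟩ := happ u huS hu.2
        refine Finset.mem_union_right _ (Finset.mem_erase.2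
          ⟨?_, Finset.mem_image_of_mem z (Finset.mem_range.2 ha)⟩)
        intro hEq
        rw [hEq] at hu
        exact hirr _ hu.2
    calc Outd (z (l - 1))
        ≤ (B.image c ∪ ((Finset.range l).image z).erase (z (l - 1))).card :=
          Finset.card_le_card hsub
      _ ≤ (B.image c).card + (((Finset.range l).image z).erase (z (l - 1))).card :=
          Finset.card_union_le _ _
      _ ≤ B.card + (l - 1) := by
          have h1 : (B.image c).card ≤ B.card := Finset.card_image_le
          have h2 : (((Finset.range l).image z).erase (z (l - 1))).card = l - 1 := by
            rw [Finset.card_erase_of_mem hzlmem, himg]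
          omega
  have hAne : A.Nonempty := by
    rw [← Finset.card_pos]
    by_contra h
    push_neg at h
    have hq : ∀ v, n - (l - 1) ≤ (Finset.univ.filter (fun u => E v u)).card := by
      intro v
      have h1 := hdeg' (z 0) v
      show n - (l - 1) ≤ Outd v
      omega
    obtain ⟨k2, g2, hg2, hk2'⟩ := GH.exists_cycle E hn hirr (n - (l - 1)) (by omega) hq
    have h3 := hmax k2 g2 hg2
    omega
  have hBne : B.Nonempty := by
    rw [← Finset.card_pos]
    by_contra h
    push_neg at h
    haveI hdec' : DecidableRel (fun a b : Fin n => E b a) := fun a b => hdec b a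
    have hq : ∀ v, n - (l - 1) ≤
        (Finset.univ.filter (fun u => (fun a b : Fin n => E b a) v u)).card := by
      intro v
      have h1 := hdeg' v (z (l - 1))
      have h2 : (Finset.univ.filter (fun u => (fun a b : Fin n => E b a) v u)).card = Ind v := by
        simp only [hIndd]
        congr 1
        ext u
        simp
      omega
    obtain ⟨k2, g2, hg2, hk2'⟩ := GH.exists_cycle (fun a b : Fin n => E b a) hn
      (fun v hv => hirr v hv) (n - (l - 1)) (by omega) hq
    have h3 := hmax k2 _ (GH.cyc_flip hg2)
    omega
  have hsplice : ∀ i ∈ A, ∀ j ∈ B, ∀ t : ℕ, 1 ≤ t → t ≤ k → t ≤ l →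
      j ≠ i + (t : ZMod k) := by
    intro i hi j hj t ht1 htk htl hEq
    rw [hA, Finset.mem_filter] at hi
    rw [hB, Finset.mem_filter] at hj
    exact GH.splice hc hmax hz hl1 hdisj i j t ht1 htk htl hEq hi.2 hj.2
  have hkl1 : l + 1 ≤ k := by
    by_contra h
    push_neg at h
    obtain ⟨i, hi⟩ := hAne
    obtain ⟨j, hj⟩ := hBne
    by_cases hv : (j - i).val = 0
    · refine hsplice i hi j hj k (by omega) le_rfl (by omega) ?_
      have h1 : j - i = 0 := (ZMod.val_eq_zero _).1 hv
      rw [ZMod.natCast_self, add_zero]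
      linear_combination h1
    · refine hsplice i hi j hj (j - i).val (by omega)
        (le_of_lt (ZMod.val_lt _)) (by have := ZMod.val_lt (j - i); omega) ?_
      rw [GH.cast_val]
      ring
  have harc := GH.arc hkl1 hl1 A B hAne hBne
    (fun i hi j hj t ht1 htl => hsplice i hi j hj t ht1 (by omega) htl)
  have hfinal := hdeg' (z 0) (z (l - 1))
  omega
end

section
/- Every word w over an infinite alphabet Atoms in which every pair of letters at positions 2i−1, 2i (for each i with 2i ≤ |w|) are distinct, is Parikh-equivalent to (has the same multiset of letters as) some word w' in which every two consecutive letters are distinct. -/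
open List

lemma cnt_cons (y x : ℕ) (t : List ℕ) :
    (y :: t).count x = t.count x + if y = x then 1 else 0 := by
  simp [List.count_cons]

/-- Counting bound for chains. -/
lemma chain_ne_count (x : ℕ) : ∀ l : List ℕ, l.Chain' (· ≠ ·) →
    2 * l.count x ≤ l.length + 1 ∧ (l.head? ≠ some x → 2 * l.count x ≤ l.length)
  | [], _ => by simp
  | y :: t, hc => by
    have ht : t.Chain' (· ≠ ·) := hc.tail
    have IH := chain_ne_count x t ht
    rw [cnt_cons]
    by_cases hxy : y = x
    · subst hxy
      have hh : t.head? ≠ some y := by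
        cases t with
        | nil => simp
        | cons z s =>
          simp only [head?_cons, ne_eq, Option.some.injEq]
          exact fun e => (List.isChain_cons_cons.mp hc).1 e.symm
      have h2 := IH.2 hh
      rw [if_pos rfl]
      refine ⟨by simp only [length_cons]; omega, fun hcon => absurd (by simp : (y :: t).head? = some y) hcon⟩
    · rw [if_neg hxy]
      have h1 := IH.1
      exact ⟨by simp only [length_cons]; omega, fun _ => by simp only [length_cons]; omega⟩

/-- Strict insertion: if `x` occurs strictly less than half the time, we can
insert `x` into a chain keeping the head unchanged. -/
lemma insert_strict (x : ℕ) : ∀ l : List ℕ, l.Chain' (· ≠ ·) → 2 * l.count x < l.length →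
    ∃ l' : List ℕ, l'.Perm (x :: l) ∧ l'.Chain' (· ≠ ·) ∧ l'.head? = l.head?
  | [], _, hcnt => by simp at hcnt
  | [y], _, hcnt => by
    have hxy : y ≠ x := by
      intro e; subst e
      rw [cnt_cons, if_pos rfl] at hcnt
      simp at hcnt
    refine ⟨[y, x], Perm.swap _ _ _, ?_, rfl⟩
    rw [List.Chain', List.isChain_cons_cons]
    exact ⟨hxy, List.isChain_singleton x⟩
  | y :: z :: s, hc, hcnt => by
    have hyz : y ≠ z := (List.isChain_cons_cons.mp hc).1
    have hzs : (z :: s).Chain' (· ≠ ·) := hc.tail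
    by_cases hxy : x = y
    · subst hxy
      have hxz : x ≠ z := hyz
      have hrec : 2 * (z :: s).count x < (z :: s).length := by
        rw [cnt_cons, if_pos rfl] at hcnt
        simp only [length_cons] at hcnt ⊢
        omega
      obtain ⟨t', hp, hch, hh⟩ := insert_strict x (z :: s) hzs hrec
      refine ⟨x :: t', hp.cons x, ?_, rfl⟩
      rw [List.Chain', List.isChain_cons]
      refine ⟨?_, hch⟩
      intro b hb
      rw [hh] at hb
      simp only [head?_cons, Option.mem_def, Option.some.injEq] at hb
      subst hb
      exact hxz
    · by_cases hxz : x = z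
      · subst hxz
        cases s with
        | nil =>
          exfalso
          rw [cnt_cons, if_neg (fun e => hxy e.symm), cnt_cons, if_pos rfl] at hcnt
          simp at hcnt
        | cons w s' =>
          have hxw : x ≠ w := (List.isChain_cons_cons.mp hzs).1
          have hs : (w :: s').Chain' (· ≠ ·) := hzs.tail
          have hrec : 2 * (w :: s').count x < (w :: s').length := by
            rw [cnt_cons, if_neg (fun e => hxy e.symm), cnt_cons, if_pos rfl] at hcnt
            simp only [length_cons] at hcnt ⊢
            omega
          obtain ⟨t', hp, hch, hh⟩ := insert_strict x (w :: s') hs hrec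
          refine ⟨y :: x :: t', ?_, ?_, rfl⟩
          · calc y :: x :: t' ~ y :: x :: x :: w :: s' := ((hp.cons x).cons y)
              _ ~ x :: y :: x :: w :: s' := Perm.swap _ _ _
          · rw [List.Chain', List.isChain_cons_cons]
            refine ⟨fun e => hxy e.symm, ?_⟩
            rw [List.isChain_cons]
            refine ⟨?_, hch⟩
            intro b hb
            rw [hh] at hb
            simp only [head?_cons, Option.mem_def, Option.some.injEq] at hb
            subst hb
            exact hxw
      · refine ⟨y :: x :: z :: s, Perm.swap _ _ _, ?_, rfl⟩
        rw [List.Chain', List.isChain_cons_cons, List.isChain_cons_cons]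
        exact ⟨fun e => hxy e.symm, hxz, hzs⟩

/-- Insertion: if `x` occurs at most half the time in a chain, it can be inserted. -/
lemma insert_le (x : ℕ) (l : List ℕ) (hc : l.Chain' (· ≠ ·))
    (hcnt : 2 * l.count x ≤ l.length) :
    ∃ l' : List ℕ, l'.Perm (x :: l) ∧ l'.Chain' (· ≠ ·) := by
  cases l with
  | nil => exact ⟨[x], Perm.refl _, List.isChain_singleton x⟩
  | cons y t =>
    by_cases hxy : x = y
    · subst hxy
      have ht : t.Chain' (· ≠ ·) := hc.tail
      have hrec : 2 * t.count x < t.length := by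
        rw [cnt_cons, if_pos rfl] at hcnt
        simp only [length_cons] at hcnt
        omega
      obtain ⟨t', hp, hch, hh⟩ := insert_strict x t ht hrec
      refine ⟨x :: t', hp.cons x, ?_⟩
      rw [List.Chain', List.isChain_cons]
      refine ⟨?_, hch⟩
      intro b hb
      rw [hh] at hb
      cases t with
      | nil => simp at hb
      | cons z s =>
        simp only [head?_cons, Option.mem_def, Option.some.injEq] at hb
        subst hb
        exact (List.isChain_cons_cons.mp hc).1
    · refine ⟨x :: y :: t, Perm.refl _, ?_⟩
      rw [List.Chain', List.isChain_cons_cons]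
      exact ⟨hxy, hc⟩

lemma count_two_le (a b : ℕ) (hab : a ≠ b) : ∀ l : List ℕ, l.count a + l.count b ≤ l.length
  | [] => by simp
  | y :: t => by
    have := count_two_le a b hab t
    rw [cnt_cons, cnt_cons]
    simp only [length_cons]
    by_cases h1 : y = a
    · rw [if_pos h1, if_neg (h1 ▸ hab)]; omega
    · rw [if_neg h1]
      by_cases h2 : y = b
      · rw [if_pos h2]; omega
      · rw [if_neg h2]; omega

/-- Pair insertion: a pair of distinct letters can be inserted into any chain. -/
lemma insert_pair (a b : ℕ) (hab : a ≠ b) (l : List ℕ) (hc : l.Chain' (· ≠ ·)) :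
    ∃ l' : List ℕ, l'.Perm (a :: b :: l) ∧ l'.Chain' (· ≠ ·) := by
  have key : ∀ u v : ℕ, u ≠ v → 2 * l.count u ≤ l.length →
      ∃ l' : List ℕ, l'.Perm (u :: v :: l) ∧ l'.Chain' (· ≠ ·) := by
    intro u v huv hcu
    obtain ⟨n, hnp, hnc⟩ := insert_le u l hc hcu
    have hcv : 2 * n.count v ≤ n.length := by
      have h1 : n.count v = l.count v := by
        rw [hnp.count_eq, cnt_cons, if_neg huv, Nat.add_zero]
      have h2 : n.length = l.length + 1 := by rw [hnp.length_eq]; simp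
      have := (chain_ne_count v l hc).1
      omega
    obtain ⟨l', hlp, hlc⟩ := insert_le v n hnc hcv
    refine ⟨l', ?_, hlc⟩
    calc l' ~ v :: n := hlp
      _ ~ v :: u :: l := hnp.cons v
      _ ~ u :: v :: l := Perm.swap _ _ _
  rcases le_or_gt (2 * l.count a) l.length with hca | hca
  · exact key a b hab hca
  · have hcb : 2 * l.count b ≤ l.length := by
      have := count_two_le a b hab l
      omega
    obtain ⟨l', hp, hch⟩ := key b a (Ne.symm hab) hcb
    exact ⟨l', hp.trans (Perm.swap _ _ _), hch⟩

lemma parikh_aux : ∀ w : List ℕ,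
    (∀ i : ℕ, (h2 : 2 * i + 1 < w.length) → w[2 * i]'(Nat.lt_of_succ_lt h2) ≠ w[2 * i + 1]'h2) →
    ∃ w' : List ℕ, w'.Perm w ∧ w'.Chain' (· ≠ ·)
  | [], _ => ⟨[], Perm.refl _, List.isChain_nil⟩
  | [x], _ => ⟨[x], Perm.refl _, List.isChain_singleton x⟩
  | a :: b :: t, h => by
    have hab : a ≠ b := by
      have := h 0 (by simp)
      simpa using this
    have e : ∀ (j : ℕ) (hj : j < t.length),
        (a :: b :: t)[j + 2]'(by simp; omega) = t[j]'hj := by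
      intro j hj
      rfl
    have ht : ∀ i : ℕ, (h2 : 2 * i + 1 < t.length) →
        t[2 * i]'(Nat.lt_of_succ_lt h2) ≠ t[2 * i + 1]'h2 := by
      intro i h2
      have h2' : 2 * (i + 1) + 1 < (a :: b :: t).length := by simp; omega
      have key := h (i + 1) h2'
      simp only [show 2 * (i + 1) = 2 * i + 2 from by ring,
        show 2 * i + 2 + 1 = (2 * i + 1) + 2 from by ring] at key
      rw [e (2 * i) (by omega), e (2 * i + 1) h2] at key
      exact key
    obtain ⟨t', htp, htc⟩ := parikh_aux t ht
    obtain ⟨w', hwp, hwc⟩ := insert_pair a b hab t' htc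
    exact ⟨w', hwp.trans ((htp.cons b).cons a), hwc⟩

/-- Every word over the infinite alphabet `ℕ` (atoms) in which the letters at
positions 2i-1, 2i (1-indexed; i.e. indices 2i and 2i+1, 0-indexed) are
distinct, is Parikh-equivalent (a permutation of) to a word in which every two
consecutive letters are distinct. -/
theorem parikh_equiv_nonrepeating (w : List ℕ)
    (h : ∀ i : ℕ, (h2 : 2 * i + 1 < w.length) →
      w[2 * i]'(by omega) ≠ w[2 * i + 1]'h2) :
    ∃ w' : List ℕ, w'.Perm w ∧ w'.Chain' (· ≠ ·) := by
  exact parikh_aux w h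
end

section
/- For every simple directed cycle a₁ a₂ ... a_n in the source graph G(v) of a finite multiset v over Σ, there exists an 'anti-cycle' data word w with Par(w) equal to the restriction of v to letters whose source lies in {a₁,...,a_n}. -/
/-- Atoms: a countably infinite set. -/
abbrev Atom := ℕ

/-- Letters of the alphabet Σ: pairs (a, {b,c}) with b ≠ c and a ∉ {b,c}. -/
abbrev Letter := {p : Atom × Finset Atom // p.2.card = 2 ∧ p.1 ∉ p.2}

def Letter.src (α : Letter) : Atom := α.1.1

def Letter.trg (α : Letter) : Finset Atom := α.1.2

open Letter

/-- The set of sources of letters appearing in a finite multiset `v` over Σ. -/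
def srcs (v : Letter →₀ ℕ) : Finset Atom := v.support.image Letter.src

/-- Edges of the source graph `G(v)`: `(d,e)` is an edge iff `d,e` are distinct
vertices and some letter in `v` has source `d` and target not containing `e`. -/
def Edge (v : Letter →₀ ℕ) (d e : Atom) : Prop :=
  d ≠ e ∧ d ∈ srcs v ∧ e ∈ srcs v ∧ ∃ α ∈ v.support, src α = d ∧ e ∉ trg α


/-- Anti-paths: nonempty words over Σ such that the source of each letter does
not belong to the target of the preceding letter. -/
def IsAntiPath (w : List Letter) : Prop :=
  w ≠ [] ∧ w.Chain' (fun α β => src β ∉ trg α)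

/-- Anti-cycles: anti-paths whose first source does not belong to the last target. -/
def IsAntiCycle (w : List Letter) : Prop :=
  IsAntiPath w ∧ ∀ h : w ≠ [], src (w.head h) ∉ trg (w.getLast h)

lemma getLast?_flatten_aux {γ : Type*} (L : List (List γ)) (h : [] ∉ L) :
    L.flatten.getLast? = L.getLast?.bind List.getLast? := by
  induction L with
  | nil => rfl
  | cons x L ih =>
    rcases eq_or_ne L [] with rfl | hL
    · simp
    · have h2 : [] ∉ L := fun hx => h (List.mem_cons_of_mem _ hx)
      have hfl : L.flatten ≠ [] := by
        intro hc
        rw [List.flatten_eq_nil_iff] at hc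
        obtain ⟨y, hy⟩ := List.exists_mem_of_ne_nil L hL
        exact h2 (hc y hy ▸ hy)
      obtain ⟨y, L', rfl⟩ := List.exists_cons_of_ne_nil hL
      rw [List.flatten_cons, List.getLast?_append_of_ne_nil _ hfl, ih h2]
      rfl

/-- For every simple directed cycle `a₀ a₁ ... a_m` in the source graph `G(v)`
there is an anti-cycle whose Parikh image is the restriction of `v` to the
letters whose source lies on the cycle. -/
theorem anticycle_of_simple_cycle (v : Letter →₀ ℕ) (m : ℕ)
    (a : Fin (m + 1) → Atom) (hinj : Function.Injective a)
    (hcyc : ∀ i : Fin (m + 1), Edge v (a i) (a (i + 1))) :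
    ∃ w : List Letter, IsAntiCycle w ∧
      ∀ α : Letter,
        w.count α = if src α ∈ Finset.image a Finset.univ then v α else 0 := by
  classical
  choose β hβmem hβsrc hβtrg using fun i => (hcyc i).2.2.2
  set M : Fin (m + 1) → Multiset Letter :=
    fun i => v.toMultiset.filter (fun α => src α = a i) with hM
  have hβM : ∀ i, β i ∈ M i := fun i =>
    Multiset.mem_filter.2 ⟨(Finsupp.mem_toMultiset v _).2 (hβmem i), hβsrc i⟩
  set l : Fin (m + 1) → List Letter :=
    fun i => (M i - {β i}).toList ++ [β i] with hl
  have hlne : ∀ i, l i ≠ [] := by intro i; simp [hl]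
  have hlcoe : ∀ i, (l i : Multiset Letter) = M i := by
    intro i
    have h1 : ({β i} : Multiset Letter) ≤ M i := Multiset.singleton_le.2 (hβM i)
    calc ((l i : List Letter) : Multiset Letter)
        = (M i - {β i}) + {β i} := by
          simp [hl, ← Multiset.coe_add]
      _ = M i := tsub_add_cancel_of_le h1
  have hmeml : ∀ i, ∀ x ∈ l i, src x = a i := by
    intro i x hx
    have : x ∈ M i := by rw [← hlcoe i]; exact hx
    exact (Multiset.mem_filter.1 this).2
  have hgetLast : ∀ i, (l i).getLast? = some (β i) := by
    intro i; simp [hl]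
  have hcount : ∀ i α, (l i).count α = if src α = a i then v α else 0 := by
    intro i α
    rw [show (l i).count α = Multiset.count α (l i : Multiset Letter) by convert (Multiset.coe_count α (l i)).symm, hlcoe i, hM]
    simp only [Multiset.count_filter, Finsupp.count_toMultiset]
  set w : List Letter := ((List.finRange (m + 1)).map l).flatten with hw
  have hLne : [] ∉ (List.finRange (m + 1)).map l := by
    intro hc
    obtain ⟨i, -, hi⟩ := List.mem_map.1 hc
    exact hlne i hi
  -- counts
  have hcountw : ∀ α : Letter,
      w.count α = if src α ∈ Finset.image a Finset.univ then v α else 0 := by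
    intro α
    rw [hw, List.count_flatten, List.map_map]
    have : (List.map (List.count α ∘ l) (List.finRange (m + 1))).sum
        = ∑ i : Fin (m + 1), (l i).count α := by
      rw [Fin.sum_univ_def]; rfl
    rw [this]
    simp only [hcount]
    by_cases hmem : src α ∈ Finset.image a Finset.univ
    · obtain ⟨j, -, hj⟩ := Finset.mem_image.1 hmem
      rw [if_pos hmem]
      rw [Finset.sum_eq_single j]
      · rw [if_pos hj.symm]
      · intro i _ hij
        rw [if_neg]
        intro hc
        exact hij (hinj (by rw [hj, hc]))
      · simp
    · rw [if_neg hmem, Finset.sum_eq_zero]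
      intro i _
      rw [if_neg]
      intro hc
      exact hmem (Finset.mem_image.2 ⟨i, Finset.mem_univ i, hc.symm⟩)
  have hwne : w ≠ [] := by
    intro hc
    have h0 : w.count (β 0) = v (β 0) := by
      rw [hcountw]
      rw [if_pos (Finset.mem_image.2 ⟨0, Finset.mem_univ 0, (hβsrc 0).symm⟩)]
    rw [hc] at h0
    simp only [List.count_nil] at h0
    exact (Finsupp.mem_support_iff.1 (hβmem 0)) h0.symm
  -- chain
  have hchain : w.Chain' (fun α₁ α₂ => src α₂ ∉ trg α₁) := by
    rw [hw, List.Chain', List.isChain_flatten hLne]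
    constructor
    · intro li hli
      obtain ⟨i, -, rfl⟩ := List.mem_map.1 hli
      refine List.Pairwise.isChain ?_
      refine List.pairwise_of_forall_mem_list ?_
      intro x hx y hy
      rw [hmeml i y hy, ← hmeml i x hx]
      exact x.2.2
    · rw [List.isChain_map, List.isChain_iff_getElem]
      intro k hk
      simp only [List.length_finRange] at hk
      simp only [List.getElem_finRange, Fin.cast_mk]
      intro x hx y hy
      have hxl : x = β ⟨k, by omega⟩ := by
        rw [hgetLast ⟨k, by omega⟩] at hx
        exact (Option.mem_some_iff.1 hx).symm
      have hyl : y ∈ l ⟨k + 1, by omega⟩ := List.mem_of_mem_head? hy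
      rw [hmeml _ y hyl, hxl]
      have : (⟨k, by omega⟩ : Fin (m + 1)) + 1 = ⟨k + 1, by omega⟩ := by
        apply Fin.ext
        simp [Fin.add_def, Nat.mod_eq_of_lt (by omega : k + 1 < m + 1)]
      rw [← this]
      exact hβtrg _
  refine ⟨w, ⟨⟨hwne, hchain⟩, ?_⟩, hcountw⟩
  intro h
  have hh : w.head? = (l 0).head? := by
    have h0 : List.finRange (m + 1) = 0 :: (List.finRange m).map Fin.succ :=
      List.finRange_succ
    have hw0 : w = l 0 ++ (((List.finRange m).map Fin.succ).map l).flatten := by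
      rw [hw, h0]; simp
    rw [hw0, List.head?_append_of_ne_nil _ (hlne 0)]
  have hhead : w.head h ∈ l 0 := by
    apply List.mem_of_mem_head?
    rw [← hh, List.head?_eq_head h]
    rfl
  have hlast? : w.getLast? = some (β (Fin.last m)) := by
    rw [hw, getLast?_flatten_aux _ hLne]
    have h1 : ((List.finRange (m + 1)).map l).getLast? = some (l (Fin.last m)) := by
      rw [List.getLast?_eq_getElem?]
      simp [Fin.last]
    rw [h1]
    exact hgetLast _
  have hlast : w.getLast h = β (Fin.last m) := by
    have := List.getLast?_eq_getLast_of_ne_nil h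
    rw [hlast?] at this
    exact (Option.some.inj this).symm
  rw [hlast, hmeml 0 _ hhead]
  have := hβtrg (Fin.last m)
  rwa [Fin.last_add_one] at this
end

section
/- Every finite multiset v over Σ that is the Parikh image of an anti-cycle and has order at least 3 is non-degenerate: (1) every vertex of the source graph G(v) has nonempty in-neighbourhood; (2) for all distinct sources d,e, the union of their in-neighbourhoods is not contained in {d,e}; (3) for all distinct sources d,e, the total multiplicity in v of letters α with src(α) ∉ {d,e} and d ∉ trg(α) or e ∉ trg(α) (i.e., letters that can precede a d- or e-sourced letter) is at least 2. -/
open Letter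

/-- In-neighbourhood of a vertex in the source graph. -/
def inn (v : Letter →₀ ℕ) (e : Atom) : Set Atom := {d : Atom | Edge v d e}

/-- Letters of `v` that can precede a `d`-sourced letter (and have source ≠ d). -/
def precSet (v : Letter →₀ ℕ) (d : Atom) : Set Letter :=
  {α : Letter | α ∈ v.support ∧ src α ≠ d ∧ d ∉ trg α}

open Classical in
/-- Total multiplicity in `v` of the letters belonging to a set `P`. -/
noncomputable def mass (v : Letter →₀ ℕ) (P : Set Letter) : ℕ :=
  ∑ α ∈ v.support, if α ∈ P then v α else 0

/-- Non-degeneracy of a data vector `v` over Σ: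
(1) every vertex of the source graph has an in-neighbour;
(2) for distinct sources d,e the union of in-neighbourhoods is not contained in {d,e};
(3) for distinct sources d,e the total multiplicity of letters that can precede
a d- or e-sourced letter is at least 2. -/
def NonDeg (v : Letter →₀ ℕ) : Prop :=
  (∀ e ∈ srcs v, (inn v e).Nonempty) ∧
  (∀ d ∈ srcs v, ∀ e ∈ srcs v, d ≠ e → ¬ (inn v d ∪ inn v e ⊆ {d, e})) ∧
  (∀ d ∈ srcs v, ∀ e ∈ srcs v, d ≠ e → 2 ≤ mass v (precSet v d ∪ precSet v e))

/-- Cyclic predecessor of index `i` modulo `n`. -/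
def predIdx (n i : ℕ) : ℕ := if i = 0 then n - 1 else i - 1

lemma predIdx_lt {n i : ℕ} (hn : 0 < n) (_hi : i < n) : predIdx n i < n := by
  unfold predIdx; split <;> omega

lemma predIdx_inj {n i j : ℕ} (hi : i < n) (hj : j < n)
    (h : predIdx n i = predIdx n j) : i = j := by
  unfold predIdx at h; split at h <;> split at h <;> omega

open Classical in
lemma cyclic_boundary {n : ℕ} (p : ℕ → Prop) {j k : ℕ}
    (hj : j < n) (hpj : p j) (hk : k < n) (hpk : ¬ p k) :
    ∃ i < n, p i ∧ ¬ p (predIdx n i) := by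
  classical
  set i₀ := Nat.find ⟨j, hpj⟩ with hi₀
  have hpi₀ : p i₀ := Nat.find_spec ⟨j, hpj⟩
  have hi₀j : i₀ ≤ j := Nat.find_le hpj
  by_cases h0 : i₀ = 0
  · -- p 0 holds; find greatest m with ¬ p m
    have hp0 : p 0 := h0 ▸ hpi₀
    have hk0 : k ≠ 0 := fun h => hpk (h ▸ hp0)
    set m := Nat.findGreatest (fun x => ¬ p x) (n - 1) with hm
    have hpm : ¬ p m :=
      Nat.findGreatest_spec (P := fun x => ¬ p x) (m := k) (n := n - 1) (by omega) hpk
    have hmn : m ≤ n - 1 := Nat.findGreatest_le _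
    by_cases hmtop : m = n - 1
    · refine ⟨0, by omega, hp0, ?_⟩
      simpa [predIdx, hmtop] using hpm
    · refine ⟨m + 1, by omega, ?_, ?_⟩
      · by_contra hns
        have := Nat.le_findGreatest (P := fun x => ¬ p x) (m := m + 1) (n := n - 1)
          (by omega) hns
        omega
      · simpa [predIdx] using hpm
  · refine ⟨i₀, by omega, hpi₀, ?_⟩
    have : predIdx n i₀ < i₀ := by unfold predIdx; split <;> omega
    exact Nat.find_min ⟨j, hpj⟩ this

open Classical in
/-- The total `v`-multiplicity of a subset of the support contained in `P`
is a lower bound for `mass v P`. -/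
lemma sum_le_mass (v : Letter →₀ ℕ) (P : Set Letter) {s : Finset Letter}
    (hs : s ⊆ v.support) (hP : ∀ x ∈ s, x ∈ P) : ∑ x ∈ s, v x ≤ mass v P := by
  unfold mass
  calc ∑ x ∈ s, v x = ∑ x ∈ s, (if x ∈ P then v x else 0) :=
        Finset.sum_congr rfl (fun x hx => by rw [if_pos (hP x hx)])
    _ ≤ ∑ x ∈ v.support, (if x ∈ P then v x else 0) := Finset.sum_le_sum_of_subset hs

/-- The cyclic step property of an anti-cycle: each letter's source avoids the
target of its cyclic predecessor. -/
lemma anticycle_step (w : List Letter) (hw : IsAntiCycle w) (i j : Fin w.length)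
    (hj : (j : ℕ) = predIdx w.length i) : src (w.get i) ∉ trg (w.get j) := by
  obtain ⟨⟨hne, hchain⟩, hcyc⟩ := hw
  have hn : 0 < w.length := List.length_pos_iff.mpr hne
  rcases Nat.eq_zero_or_pos i.1 with h0 | hpos
  · have hhead : w.get i = w.head hne := by
      rw [List.head_eq_getElem_zero hne, List.get_eq_getElem]
      simp only [h0]
    have hlast : w.get j = w.getLast hne := by
      rw [List.getLast_eq_getElem, List.get_eq_getElem]
      congr 1
      rw [hj, h0]; rfl
    rw [hhead, hlast]
    exact hcyc hne
  · have key := List.isChain_iff_getElem.mp hchain (i.1 - 1) (by omega)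
    have hi : i = ⟨i.1 - 1 + 1, by omega⟩ := Fin.ext (by show i.1 = i.1 - 1 + 1; omega)
    have hj' : j = ⟨i.1 - 1, by omega⟩ := by
      apply Fin.ext
      show (j : ℕ) = i.1 - 1
      rw [hj]
      unfold predIdx
      rw [if_neg (by omega)]
    rw [hi, hj']
    exact key

/-- Extraction of a cyclic boundary pair from an anti-cycle: if some letter's
source satisfies `q` and some letter's source does not, then there is a letter
whose source satisfies `q` whose cyclic predecessor's source does not. -/
lemma anticycle_boundary (w : List Letter) (hw : IsAntiCycle w) (q : Atom → Prop)
    (h1 : ∃ i : Fin w.length, q (src (w.get i)))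
    (h2 : ∃ i : Fin w.length, ¬ q (src (w.get i))) :
    ∃ i j : Fin w.length, (j : ℕ) = predIdx w.length i ∧
      q (src (w.get i)) ∧ ¬ q (src (w.get j)) ∧ src (w.get i) ∉ trg (w.get j) := by
  classical
  obtain ⟨i₁, hq1⟩ := h1
  obtain ⟨i₂, hq2⟩ := h2
  have hn' : 0 < w.length := i₁.pos
  obtain ⟨i, hi, hpi, hnpi⟩ := cyclic_boundary (n := w.length)
    (fun m => ∃ h : m < w.length, q (src (w.get ⟨m, h⟩))) i₁.2 ⟨i₁.2, hq1⟩
    i₂.2 (fun ⟨_, hq⟩ => hq2 hq)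
  refine ⟨⟨i, hi⟩, ⟨predIdx w.length i, predIdx_lt hn' hi⟩, rfl, ?_, ?_, ?_⟩
  · exact hpi.2
  · intro hq
    exact hnpi ⟨predIdx_lt hn' hi, hq⟩
  · exact anticycle_step w hw _ _ rfl

/-- Every data vector of order at least 3 which is the Parikh image of an
anti-cycle is non-degenerate. -/
theorem nondeg_of_anticycle (v : Letter →₀ ℕ) (horder : 3 ≤ (srcs v).card)
    (w : List Letter) (hw : IsAntiCycle w) (hpar : ∀ α : Letter, w.count α = v α) :
    NonDeg v := by
  classical
  have hne : w ≠ [] := hw.1.1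
  have hmem : ∀ α : Letter, α ∈ v.support ↔ α ∈ w := by
    intro α
    rw [Finsupp.mem_support_iff, ← hpar, ne_eq, List.count_eq_zero, not_not]
  have hget_mem : ∀ i : Fin w.length, w.get i ∈ v.support := by
    intro i
    rw [hmem]
    exact w.get_mem i
  have hsrc_mem : ∀ i : Fin w.length, src (w.get i) ∈ srcs v := by
    intro i
    exact Finset.mem_image_of_mem _ (hget_mem i)
  have hsrc_iff : ∀ e, e ∈ srcs v → ∃ i : Fin w.length, src (w.get i) = e := by
    intro e he
    obtain ⟨α, hα, hsrc⟩ := Finset.mem_image.mp he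
    obtain ⟨i, hi⟩ := List.mem_iff_get.mp ((hmem α).mp hα)
    exact ⟨i, by rw [hi, hsrc]⟩
  have hthird : ∀ d e : Atom, ∃ f ∈ srcs v, f ≠ d ∧ f ≠ e := by
    intro d e
    by_contra h
    push_neg at h
    have hsub : srcs v ⊆ ({d, e} : Finset Atom) := by
      intro f hf
      rcases Classical.em (f = d) with h1 | h1
      · simp [h1]
      · simp [h f hf h1]
    have := (Finset.card_le_card hsub).trans (Finset.card_insert_le d {e})
    simp at this
    omega
  refine ⟨?_, ?_, ?_⟩
  · -- (1)
    intro e he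
    obtain ⟨f, hf, hfe, _⟩ := hthird e e
    obtain ⟨i₁, hi₁⟩ := hsrc_iff e he
    obtain ⟨i₂, hi₂⟩ := hsrc_iff f hf
    obtain ⟨i, j, _, hq, hnq, hnt⟩ := anticycle_boundary w hw (fun a => a = e)
      ⟨i₁, hi₁⟩ ⟨i₂, by rw [hi₂]; exact hfe⟩
    exact ⟨src (w.get j), hnq, hsrc_mem j, he, w.get j, hget_mem j, rfl, by rwa [hq] at hnt⟩
  · -- (2)
    intro d hd e he hde hsub
    obtain ⟨f, hf, hfd, hfe⟩ := hthird d e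
    obtain ⟨i₁, hi₁⟩ := hsrc_iff d hd
    obtain ⟨i₂, hi₂⟩ := hsrc_iff f hf
    obtain ⟨i, j, _, hq, hnq, hnt⟩ := anticycle_boundary w hw (fun a => a = d ∨ a = e)
      ⟨i₁, by rw [hi₁]; exact Or.inl rfl⟩ ⟨i₂, by rw [hi₂]; exact fun h => h.elim hfd hfe⟩
    push_neg at hnq
    have hmem2 : src (w.get j) ∈ inn v d ∪ inn v e := by
      rcases hq with h | h
      · exact Or.inl ⟨hnq.1, hsrc_mem j, hd, w.get j, hget_mem j, rfl, by rwa [h] at hnt⟩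
      · exact Or.inr ⟨hnq.2, hsrc_mem j, he, w.get j, hget_mem j, rfl, by rwa [h] at hnt⟩
    have := hsub hmem2
    simp only [Set.mem_insert_iff, Set.mem_singleton_iff] at this
    rcases this with h | h
    · exact hnq.1 h
    · exact hnq.2 h
  · -- (3)
    intro d hd e he hde
    obtain ⟨i₁, hi₁⟩ := hsrc_iff d hd
    obtain ⟨i₂, hi₂⟩ := hsrc_iff e he
    obtain ⟨id', jd, hjd, hqd, hnqd, hntd⟩ := anticycle_boundary w hw (fun a => a = d)
      ⟨i₁, hi₁⟩ ⟨i₂, by rw [hi₂]; exact fun h => hde h.symm⟩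
    obtain ⟨ie', je, hje, hqe, hnqe, hnte⟩ := anticycle_boundary w hw (fun a => a = e)
      ⟨i₂, hi₂⟩ ⟨i₁, by rw [hi₁]; exact hde⟩
    set α := w.get jd with hα
    set β := w.get je with hβ
    set P := precSet v d ∪ precSet v e with hP
    have hαP : α ∈ P := Or.inl ⟨hget_mem jd, hnqd, by rwa [hqd] at hntd⟩
    have hβP : β ∈ P := Or.inr ⟨hget_mem je, hnqe, by rwa [hqe] at hnte⟩
    have hjdje : jd ≠ je := by
      intro h
      have : (id' : ℕ) = (ie' : ℕ) :=
        predIdx_inj id'.2 ie'.2 (by rw [← hjd, ← hje, h])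
      have : id' = ie' := Fin.ext this
      rw [this, hqe] at hqd
      exact hde hqd.symm
    rcases Classical.em (α = β) with hab | hab
    · -- same letter occurs at two distinct positions: multiplicity ≥ 2
      have hdup : w.Duplicate α := by
        rw [List.duplicate_iff_exists_distinct_get]
        rcases lt_or_gt_of_ne hjdje with h | h
        · exact ⟨jd, je, h, rfl, hab⟩
        · exact ⟨je, jd, h, hab, rfl⟩
      have hcount : 2 ≤ v α := by
        rw [← hpar]
        convert List.duplicate_iff_two_le_count.mp hdup using 2
        exact lawful_beq_subsingleton _ _
      have hle : ∑ x ∈ ({α} : Finset Letter), v x ≤ mass v P := by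
        apply sum_le_mass
        · intro x hx
          rw [Finset.mem_singleton.mp hx]; exact hget_mem jd
        · intro x hx
          rw [Finset.mem_singleton.mp hx]; exact hαP
      rw [Finset.sum_singleton] at hle
      omega
    · -- two different letters, each of multiplicity ≥ 1
      have hsum : ∑ x ∈ ({α, β} : Finset Letter), v x ≤ mass v P := by
        apply sum_le_mass
        · intro x hx
          rcases Finset.mem_insert.mp hx with h | h
          · rw [h]; exact hget_mem jd
          · rw [Finset.mem_singleton.mp h]; exact hget_mem je
        · intro x hx
          rcases Finset.mem_insert.mp hx with h | h
          · rw [h]; exact hαP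
          · rw [Finset.mem_singleton.mp h]; exact hβP
      rw [Finset.sum_pair hab] at hsum
      have hvα : 1 ≤ v α := Nat.one_le_iff_ne_zero.mpr (Finsupp.mem_support_iff.mp (hget_mem jd))
      have hvβ : 1 ≤ v β := Nat.one_le_iff_ne_zero.mpr (Finsupp.mem_support_iff.mp (hget_mem je))
      omega
end

section
/- Every multiset p ∈ Par(L₃) satisfies sing(p) < |p|/2 and |dom(p)| ≤ |p|/2, where sing(p) is the number of atoms occurring exactly once in p. -/
/-- `L₁`: nonempty words in which every two consecutive letters are distinct. -/
def L1 : Set (List Atom) := {w | w ≠ [] ∧ w.Chain' (· ≠ ·)}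

/-- `L_a = aa (a K_a)*` where `K_a` consists of the one-letter words `b ≠ a`. -/
def La (a : Atom) : Set (List Atom) :=
  {w | ∃ l : List Atom, (∀ b ∈ l, b ≠ a) ∧ w = a :: a :: l.flatMap (fun b => [a, b])}

/-- `L₃`: the language obtained from `L₁` by substituting `a ↦ L_a`. -/
def L3 : Set (List Atom) :=
  {w | ∃ u ∈ L1, ∃ ps : List (List Atom),
    List.Forall₂ (fun a p => p ∈ La a) u ps ∧ w = ps.flatten}

/-- Number of atoms occurring exactly once in a word. -/
def sing (w : List Atom) : ℕ := (w.toFinset.filter (fun a => w.count a = 1)).card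

lemma L3_key (u : List Atom) (ps : List (List Atom))
    (h : List.Forall₂ (fun a p => p ∈ La a) u ps) :
    ∃ B : List Atom,
      ps.flatten.length = 2 * B.length + 2 * u.length ∧
      (∀ a ∈ u, 2 ≤ ps.flatten.count a) ∧
      (∀ c ∈ ps.flatten, c ∈ u ∨ c ∈ B) := by
  induction h with
  | nil => exact ⟨[], by simp, by simp, by simp⟩
  | @cons a p u' ps' hp _ ih =>
    obtain ⟨B', hlen, hcnt, hmem⟩ := ih
    obtain ⟨l, hl, rfl⟩ := hp
    refine ⟨l ++ B', ?_, ?_, ?_⟩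
    · have hfl : (l.flatMap (fun b => [a, b])).length = 2 * l.length := by
        induction l with
        | nil => simp
        | cons x xs ihx => simp_all; omega
      simp only [List.flatten_cons, List.length_append, List.length_cons, hfl, hlen,
        List.length_append]
      ring
    · intro a' ha'
      rw [List.mem_cons] at ha'
      rcases ha' with rfl | ha'
      · simp only [List.flatten_cons, List.count_append, List.count_cons_self]
        omega
      · have := hcnt a' ha'
        simp only [List.flatten_cons, List.count_append]
        omega
    · intro c hc
      simp only [List.flatten_cons, List.mem_append] at hc
      rcases hc with hc | hc
      · simp only [List.mem_cons, List.mem_flatMap] at hc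
        rcases hc with rfl | rfl | ⟨b, hb, hcb⟩
        · exact Or.inl List.mem_cons_self
        · exact Or.inl List.mem_cons_self
        · rcases hcb with rfl | rfl | h0
          · exact Or.inl List.mem_cons_self
          · exact Or.inr (List.mem_append_left _ hb)
          · exact absurd h0 List.not_mem_nil
      · rcases hmem c hc with h1 | h1
        · exact Or.inl (List.mem_cons_of_mem _ h1)
        · exact Or.inr (List.mem_append_right _ h1)

/-- Every Parikh image `p` of a word of `L₃` satisfies `sing(p) < |p|/2` and
`|dom(p)| ≤ |p|/2`. -/
theorem L3_singularity (w : List Atom) (hw : w ∈ L3) :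
    2 * sing w < w.length ∧ 2 * w.toFinset.card ≤ w.length := by
  obtain ⟨u, hu, ps, h, rfl⟩ := hw
  obtain ⟨B, hlen, hcnt, hmem⟩ := L3_key u ps h
  have hune : u ≠ [] := hu.1
  have huk : 1 ≤ u.length := List.length_pos_iff.mpr hune
  constructor
  · -- sing bound
    have hsub : (ps.flatten.toFinset.filter (fun a => ps.flatten.count a = 1)) ⊆ B.toFinset := by
      intro c hc
      simp only [Finset.mem_filter, List.mem_toFinset] at hc
      obtain ⟨hcw, hc1⟩ := hc
      rcases hmem c hcw with h1 | h1
      · have := hcnt c h1; omega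
      · exact List.mem_toFinset.mpr h1
    have h1 : sing ps.flatten ≤ B.toFinset.card := Finset.card_le_card hsub
    have h2 : B.toFinset.card ≤ B.length := B.toFinset_card_le
    omega
  · -- card bound
    have hsub : ps.flatten.toFinset ⊆ u.toFinset ∪ B.toFinset := by
      intro c hc
      rw [List.mem_toFinset] at hc
      rcases hmem c hc with h1 | h1
      · exact Finset.mem_union_left _ (List.mem_toFinset.mpr h1)
      · exact Finset.mem_union_right _ (List.mem_toFinset.mpr h1)
    have h1 : ps.flatten.toFinset.card ≤ u.toFinset.card + B.toFinset.card :=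
      le_trans (Finset.card_le_card hsub) (Finset.card_union_le _ _)
    have h2 : u.toFinset.card ≤ u.length := u.toFinset_card_le
    have h3 : B.toFinset.card ≤ B.length := B.toFinset_card_le
    omega
end

section
/- The Parikh image of the language L₃ is not semi-linear: there is no orbit-finite family (g_i, P_i)_{i∈I} of bases g_i and orbit-finite period sets P_i with Par(L₃) = ⋃_{i∈I} g_i + P_i*. -/
open scoped Pointwise

/-- Atom permutations. -/
abbrev APerm := Equiv.Perm Atom

/-- The action of an atom permutation on lists (words), letter-wise. -/
instance listPermAction (X : Type*) [MulAction APerm X] : MulAction APerm (List X) where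
  smul π w := w.map (π • ·)
  one_smul w := by
    show w.map _ = w
    simp
  mul_smul π σ w := by
    show w.map _ = (w.map _).map _
    simp [List.map_map, mul_smul]

/-- The action of an atom permutation on finite multisets (data vectors), by
relabelling. -/
noncomputable instance finsuppPermAction (X : Type*) [MulAction APerm X] :
    MulAction APerm (X →₀ ℕ) where
  smul π v := v.mapDomain (π • ·)
  one_smul v := by
    show v.mapDomain _ = v
    have : (fun x : X => (1 : APerm) • x) = id := by funext x; simp
    rw [this, Finsupp.mapDomain_id]
  mul_smul π σ v := by
    show v.mapDomain _ = (v.mapDomain _).mapDomain _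
    rw [← Finsupp.mapDomain_comp]
    congr 1
    funext x
    simp [mul_smul]

/-- `π` fixes (pointwise) the finite set of atoms `S`. -/
def Fixes (π : APerm) (S : Finset Atom) : Prop := ∀ a ∈ S, π a = a

/-- An element of a set with an action of atom permutations is finitely
supported if some finite set of atoms supports it. -/
def FinSupported {X : Type*} [MulAction APerm X] (x : X) : Prop :=
  ∃ S : Finset Atom, ∀ π : APerm, Fixes π S → π • x = x

/-- A function is finitely supported if it is equivariant up to a finite set of
atoms. -/
def FinSupportedFun {I X : Type*} [MulAction APerm I] [MulAction APerm X]
    (f : I → X) : Prop :=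
  ∃ S : Finset Atom, ∀ π : APerm, Fixes π S → ∀ i : I, f (π • i) = π • f i

/-- A set is orbit-finite if, for some finite set `S` of atoms, it is a finite
union of orbits under the group of atom permutations fixing `S` pointwise. -/
def OrbitFinite {X : Type*} [MulAction APerm X] (Y : Set X) : Prop :=
  ∃ (S : Finset Atom) (R : Finset X),
    Y = ⋃ r ∈ R, {x : X | ∃ π : APerm, Fixes π S ∧ π • r = x}

/-- Concatenation of languages. -/
def lconcat {A : Type*} (L K : Set (List A)) : Set (List A) :=
  {w | ∃ u ∈ L, ∃ v ∈ K, w = u ++ v}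

/-- Kleene star of a language. -/
def lstar {A : Type*} (L : Set (List A)) : Set (List A) :=
  {w | ∃ ws : List (List A), (∀ u ∈ ws, u ∈ L) ∧ w = ws.flatten}

/-- Rational data languages over an alphabet with an action of atom
permutations: the smallest class containing all singleton languages and closed
under concatenation, Kleene star, and orbit-finite unions (indexed by
orbit-finite sets of tuples of atoms, via finitely supported families). -/
inductive IsRational {A : Type*} [MulAction APerm A] : Set (List A) → Prop
  | singleton (w : List A) : IsRational {w}
  | concat {L K : Set (List A)} : IsRational L → IsRational K → IsRational (lconcat L K)
  | star {L : Set (List A)} : IsRational L → IsRational (lstar L)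
  | union (D : Set (List Atom)) (f : List Atom → Set (List A)) :
      OrbitFinite D → FinSupportedFun f → (∀ i ∈ D, IsRational (f i)) →
      IsRational (⋃ i ∈ D, f i)

/-- Minkowski sum of sets of data vectors. -/
def vsum {A : Type*} (X Y : Set (A →₀ ℕ)) : Set (A →₀ ℕ) :=
  {v | ∃ x ∈ X, ∃ y ∈ Y, v = x + y}

/-- Star of a set of data vectors: all finite sums of its elements. -/
def vstar {A : Type*} (X : Set (A →₀ ℕ)) : Set (A →₀ ℕ) :=
  {v | ∃ l : List (A →₀ ℕ), (∀ x ∈ l, x ∈ X) ∧ v = l.sum}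

/-- Rational sets of data vectors: the smallest class containing all singletons
and closed under (Minkowski) addition, star, and orbit-finite unions. -/
inductive IsRationalVec {A : Type*} [MulAction APerm A] : Set (A →₀ ℕ) → Prop
  | singleton (v : A →₀ ℕ) : IsRationalVec {v}
  | add {X Y : Set (A →₀ ℕ)} : IsRationalVec X → IsRationalVec Y → IsRationalVec (vsum X Y)
  | star {X : Set (A →₀ ℕ)} : IsRationalVec X → IsRationalVec (vstar X)
  | union (D : Set (List Atom)) (f : List Atom → Set (A →₀ ℕ)) :
      OrbitFinite D → FinSupportedFun f → (∀ i ∈ D, IsRationalVec (f i)) →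
      IsRationalVec (⋃ i ∈ D, f i)

/-- The Parikh image (commutative image) of a word: the multiset of its letters. -/
noncomputable def parikh {A : Type*} (w : List A) : A →₀ ℕ :=
  letI := Classical.decEq A
  Multiset.toFinsupp (w : Multiset A)

/-- The Parikh image of a language. -/
noncomputable def parikhImg {A : Type*} (L : Set (List A)) : Set (A →₀ ℕ) :=
  parikh '' L

/-- Semi-linear sets of data vectors: orbit-finite unions of linear sets
`g_i + P_i*` with orbit-finite period sets `P_i` (legal indexing). -/
def IsSemiLinear {A : Type*} [MulAction APerm A] (X : Set (A →₀ ℕ)) : Prop :=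
  ∃ (D : Set (List Atom)) (g : List Atom → (A →₀ ℕ))
    (P : List Atom → Set (A →₀ ℕ)),
    OrbitFinite D ∧ FinSupportedFun g ∧ FinSupportedFun P ∧
    (∀ i ∈ D, OrbitFinite (P i)) ∧
    X = ⋃ i ∈ D, vsum {g i} (vstar (P i))

/-! ### Auxiliary development -/

section Aux

/-- Total size (number of letters, with multiplicity) of a data vector. -/
noncomputable def msize (v : Atom →₀ ℕ) : ℕ := v.sum fun _ n => n

lemma perm_smul_atom (π : APerm) (a : Atom) : π • a = π a := rfl

lemma smul_fs_def (π : APerm) (v : Atom →₀ ℕ) : π • v = v.mapDomain π := rfl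

lemma msize_add (x y : Atom →₀ ℕ) : msize (x + y) = msize x + msize y := by
  unfold msize
  exact Finsupp.sum_add_index' (fun _ => rfl) (fun _ _ _ => rfl)

lemma msize_zero : msize 0 = 0 := by simp [msize]

lemma msize_list_sum (l : List (Atom →₀ ℕ)) : msize l.sum = (l.map msize).sum := by
  induction l with
  | nil => simp [msize_zero]
  | cons x xs ih => simp [msize_add, ih]

lemma msize_smul (π : APerm) (v : Atom →₀ ℕ) : msize (π • v) = msize v := by
  rw [smul_fs_def]
  unfold msize
  exact Finsupp.sum_mapDomain_index (fun _ => rfl) (fun _ _ _ => rfl)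

lemma apply_le_msize (v : Atom →₀ ℕ) (a : Atom) : v a ≤ msize v := by
  by_cases h : a ∈ v.support
  · exact Finset.single_le_sum (fun _ _ => Nat.zero_le _) h
  · simp [Finsupp.notMem_support_iff.mp h]

lemma supp_add (x y : Atom →₀ ℕ) : (x + y).support = x.support ∪ y.support := by
  ext a
  simp only [Finsupp.mem_support_iff, Finset.mem_union, Finsupp.add_apply]
  omega

lemma supp_smul (π : APerm) (v : Atom →₀ ℕ) :
    (π • v).support = v.support.image π := by
  rw [smul_fs_def]
  exact Finsupp.mapDomain_support_of_injective π.injective v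

lemma smul_fs_apply (π : APerm) (v : Atom →₀ ℕ) (a : Atom) :
    (π • v) (π a) = v a := by
  rw [smul_fs_def]
  exact Finsupp.mapDomain_apply π.injective v a

lemma smul_fs_apply' (π : APerm) (v : Atom →₀ ℕ) (a : Atom) :
    (π • v) a = v (π⁻¹ a) := by
  have := smul_fs_apply π v (π⁻¹ a)
  simpa using this

end Aux
section Parikh

lemma parikh_eq_std (w : List Atom) :
    parikh w = @Multiset.toFinsupp Atom instDecidableEqNat (↑w) := by
  unfold parikh
  rw [Subsingleton.elim (Classical.decEq Atom) instDecidableEqNat]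

lemma parikh_apply (w : List Atom) (a : Atom) : parikh w a = w.count a := by
  rw [parikh_eq_std, Multiset.toFinsupp_apply, Multiset.coe_count]

lemma parikh_support (w : List Atom) : (parikh w).support = w.toFinset := by
  ext a
  simp [Finsupp.mem_support_iff, parikh_apply, List.mem_toFinset]
  rw [← List.count_pos_iff]
  omega

lemma parikh_append (x y : List Atom) : parikh (x ++ y) = parikh x + parikh y := by
  ext a
  simp [parikh_apply, List.count_append]

lemma parikh_nil : parikh ([] : List Atom) = 0 := by
  ext a; simp [parikh_apply]

lemma msize_parikh (w : List Atom) : msize (parikh w) = w.length := by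
  induction w with
  | nil => simp [parikh_nil, msize_zero]
  | cons a w ih =>
    have h : parikh (a :: w) = parikh [a] + parikh w := by
      have := parikh_append [a] w
      simpa using this
    have h1 : msize (parikh [a]) = 1 := by
      have : (parikh [a]).support = {a} := by simp [parikh_support]
      unfold msize
      rw [Finsupp.sum, this]
      simp [parikh_apply]
    rw [h, msize_add, h1, ih]
    simp [Nat.add_comm]

end Parikh
section Bound

lemma La_shape {a : Atom} {p : List Atom} (hp : p ∈ La a) :
    2 * (parikh p).support.card ≤ p.length := by
  obtain ⟨l, hl, rfl⟩ := hp
  rw [parikh_support]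
  have hsub : (a :: a :: l.flatMap (fun b => [a, b])).toFinset ⊆ insert a l.toFinset := by
    intro x hx
    simp only [List.mem_toFinset, List.mem_cons, List.mem_flatMap] at hx
    simp only [Finset.mem_insert, List.mem_toFinset]
    rcases hx with rfl | rfl | ⟨b, hb, hxb⟩
    · exact Or.inl rfl
    · exact Or.inl rfl
    · simp only [List.mem_cons, List.not_mem_nil, or_false] at hxb
      rcases hxb with rfl | rfl
      · exact Or.inl rfl
      · exact Or.inr hb
  have hc1 : l.toFinset.card ≤ l.length := l.toFinset_card_le
  have hcard : (a :: a :: l.flatMap (fun b => [a, b])).toFinset.card ≤ 1 + l.length := by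
    have h1 := Finset.card_le_card hsub
    have h2 := Finset.card_insert_le a l.toFinset
    omega
  have hsum : ∀ l' : List Atom, (List.map (List.length ∘ fun b => [a, b]) l').sum
      = 2 * l'.length := by
    intro l'
    induction l' with
    | nil => rfl
    | cons b bs ih => simp [ih]; omega
  have hlen : (a :: a :: l.flatMap (fun b => [a, b])).length = 2 + 2 * l.length := by
    rw [List.length_cons, List.length_cons, List.length_flatMap]
    have := hsum l
    simp only [Function.comp_def] at this
    omega
  omega

lemma parikh_append' (x y : List Atom) : parikh (x ++ y) = parikh x + parikh y :=
  parikh_append x y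

lemma blocks_bound {u : List Atom} {ps : List (List Atom)}
    (h : List.Forall₂ (fun a p => p ∈ La a) u ps) :
    2 * (parikh ps.flatten).support.card ≤ ps.flatten.length := by
  induction h with
  | nil => simp [parikh_nil]
  | @cons a p u' ps' ha _ ih =>
    rw [List.flatten_cons, parikh_append, List.length_append]
    have h1 := La_shape ha
    have h2 : (parikh p + parikh ps'.flatten).support.card ≤
        (parikh p).support.card + (parikh ps'.flatten).support.card := by
      rw [supp_add]; exact Finset.card_union_le _ _
    omega

/-- Key upper bound: any vector in the Parikh image of `L₃` has at least twice
as many letters as distinct letters. -/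
lemma L3_two_supp_le {v : Atom →₀ ℕ} (hv : v ∈ parikhImg L3) :
    2 * v.support.card ≤ msize v := by
  obtain ⟨w, hw, rfl⟩ := hv
  obtain ⟨u, _, ps, hps, rfl⟩ := hw
  rw [msize_parikh]
  exact blocks_bound hps

end Bound
section Witness

/-- The `i`-th block of the canonical witness word. -/
def blockW (n K i : ℕ) : List Atom :=
  i :: i :: (((List.range K).map (fun j => n + i * K + j)).flatMap (fun b => [i, b]))

/-- The canonical witness word: `n` blocks, each with one head atom of
multiplicity `K + 2` and `K` fresh singleton atoms. -/
def WW (n K : ℕ) : List Atom := (List.range n).flatMap (blockW n K)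

lemma blockW_mem_La (n K i : ℕ) (hi : i < n) : blockW n K i ∈ La i := by
  refine ⟨(List.range K).map (fun j => n + i * K + j), ?_, rfl⟩
  intro b hb
  simp only [List.mem_map, List.mem_range] at hb
  obtain ⟨j, _, rfl⟩ := hb
  intro hc
  have h1 : n ≤ n + i * K + j :=
    le_trans (Nat.le_add_right n (i * K)) (Nat.le_add_right _ j)
  rw [hc] at h1
  omega

lemma WW_mem_L3 (n K : ℕ) (hn : 1 ≤ n) : WW n K ∈ L3 := by
  refine ⟨List.range n, ⟨?_, ?_⟩, (List.range n).map (blockW n K), ?_, ?_⟩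
  · intro h
    have := (List.length_range : (List.range n).length = n)
    rw [h] at this
    simp at this
    omega
  · exact List.Pairwise.isChain (List.nodup_range : (List.range n).Nodup)
  · rw [List.forall₂_map_right_iff, List.forall₂_same]
    intro i hi
    exact blockW_mem_La n K i (List.mem_range.mp hi)
  · rw [WW, List.flatMap_def]

lemma sum_map_len_pair (i : ℕ) (js : List ℕ) :
    (js.map (List.length ∘ fun b => [i, b])).sum = 2 * js.length := by
  induction js with
  | nil => rfl
  | cons b bs ih => simp [ih]; omega

lemma count_pair_flat (i a : ℕ) (js : List ℕ) (hne : ∀ b ∈ js, b ≠ i) :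
    (js.flatMap (fun b => [i, b])).count a
      = (if a = i then js.length else 0) + js.count a := by
  induction js with
  | nil => simp
  | cons b bs ih =>
    have hbi : b ≠ i := hne b (by simp)
    rw [List.flatMap_cons, List.count_append, ih (fun x hx => hne x (by simp [hx]))]
    by_cases h : a = i
    · subst h
      simp [List.count_cons, Ne.symm hbi, hbi]
      omega
    · by_cases h' : a = b
      · subst h'
        simp [List.count_cons, h]
        split_ifs <;> omega
      · simp [List.count_cons, h, h', Ne.symm h, Ne.symm h']

lemma count_blockW (n K i a : ℕ) (hi : i < n) :
    (blockW n K i).count a =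
      (if a = i then K + 2 else 0) +
      (if n + i * K ≤ a ∧ a < n + i * K + K then 1 else 0) := by
  set js := (List.range K).map (fun j => n + i * K + j) with hjsdef
  have hne : ∀ b ∈ js, b ≠ i := by
    intro b hb
    simp only [hjsdef, List.mem_map, List.mem_range] at hb
    obtain ⟨j, _, rfl⟩ := hb
    have h1 : n ≤ n + i * K + j :=
      le_trans (Nat.le_add_right n (i * K)) (Nat.le_add_right _ j)
    omega
  have hjs : js.count a = (if n + i * K ≤ a ∧ a < n + i * K + K then 1 else 0) := by
    have hnd : js.Nodup := List.nodup_range.map (fun x y h => by omega)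
    have hmem : a ∈ js ↔ (n + i * K ≤ a ∧ a < n + i * K + K) := by
      simp only [hjsdef, List.mem_map, List.mem_range]
      constructor
      · rintro ⟨j, hj, rfl⟩
        have h1 : n + i * K ≤ n + i * K + j := Nat.le_add_right _ _
        omega
      · rintro ⟨h1, h2⟩; exact ⟨a - (n + i * K), by omega, by omega⟩
    by_cases h : a ∈ js
    · rw [if_pos (hmem.mp h)]
      exact List.count_eq_one_of_mem hnd h
    · rw [if_neg (fun hc => h (hmem.mpr hc))]
      exact List.count_eq_zero_of_not_mem h
  have hlenjs : js.length = K := by simp [hjsdef]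
  rw [blockW, ← hjsdef, List.count_cons, List.count_cons, count_pair_flat i a js hne, hjs,
    hlenjs]
  by_cases h : a = i
  · subst h
    simp
    split_ifs <;> omega
  · simp [h]
    split_ifs <;> omega

lemma count_WWp (n K : ℕ) : ∀ m ≤ n, ∀ a : ℕ,
    ((List.range m).flatMap (blockW n K)).count a =
      (if a < m then K + 2 else 0) + (if n ≤ a ∧ a < n + m * K then 1 else 0) := by
  intro m
  induction m with
  | zero =>
    intro _ a
    simp only [List.range_zero, List.flatMap_nil, List.count_nil, Nat.zero_mul,
      Nat.add_zero]
    split_ifs <;> omega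
  | succ m ih =>
    intro hm a
    rw [List.range_succ, List.flatMap_append, List.count_append, ih (by omega) a,
      List.flatMap_cons]
    simp only [List.flatMap_nil, List.append_nil]
    rw [count_blockW n K m a (by omega)]
    have hsucc : (m + 1) * K = m * K + K := by ring
    split_ifs <;> omega

lemma count_WW (n K a : ℕ) :
    (WW n K).count a =
      (if a < n then K + 2 else 0) + (if n ≤ a ∧ a < n + n * K then 1 else 0) :=
  count_WWp n K n le_rfl a

lemma length_blockW (n K i : ℕ) : (blockW n K i).length = 2 * K + 2 := by
  rw [blockW]
  simp only [List.length_cons, List.length_flatMap, sum_map_len_pair]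
  simp [Function.comp_def, mul_comm]

lemma length_WWp (n K : ℕ) : ∀ m, ((List.range m).flatMap (blockW n K)).length
    = m * (2 * K + 2) := by
  intro m
  induction m with
  | zero => simp
  | succ m ih =>
    rw [List.range_succ, List.flatMap_append, List.length_append, ih, List.flatMap_cons]
    simp only [List.flatMap_nil, List.append_nil, length_blockW]
    ring

lemma length_WW (n K : ℕ) : (WW n K).length = n * (2 * K + 2) :=
  length_WWp n K n

end Witness
section Classes

/-- Atoms with value exactly `c`. -/
def vclass (x : Atom →₀ ℕ) (c : ℕ) : Finset Atom :=
  x.support.filter (fun a => x a = c)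

/-- Atoms with value at least `c`. -/
def vge (x : Atom →₀ ℕ) (c : ℕ) : Finset Atom :=
  x.support.filter (fun a => c ≤ x a)

lemma vclass_smul (π : APerm) (x : Atom →₀ ℕ) (c : ℕ) :
    vclass (π • x) c = (vclass x c).image π := by
  ext a
  simp only [vclass, Finset.mem_filter, Finset.mem_image, supp_smul]
  constructor
  · rintro ⟨⟨b, hb, rfl⟩, hval⟩
    rw [smul_fs_apply] at hval
    exact ⟨b, ⟨⟨hb, hval⟩, rfl⟩⟩
  · rintro ⟨b, ⟨hb, hval⟩, rfl⟩
    exact ⟨⟨b, hb, rfl⟩, by rw [smul_fs_apply]; exact hval⟩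

lemma vge_smul (π : APerm) (x : Atom →₀ ℕ) (c : ℕ) :
    vge (π • x) c = (vge x c).image π := by
  ext a
  simp only [vge, Finset.mem_filter, Finset.mem_image, supp_smul]
  constructor
  · rintro ⟨⟨b, hb, rfl⟩, hval⟩
    rw [smul_fs_apply] at hval
    exact ⟨b, ⟨⟨hb, hval⟩, rfl⟩⟩
  · rintro ⟨b, ⟨hb, hval⟩, rfl⟩
    exact ⟨⟨b, hb, rfl⟩, by rw [smul_fs_apply]; exact hval⟩

lemma vclass_smul_card (π : APerm) (x : Atom →₀ ℕ) (c : ℕ) :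
    (vclass (π • x) c).card = (vclass x c).card := by
  rw [vclass_smul, Finset.card_image_of_injective _ π.injective]

lemma vge_smul_card (π : APerm) (x : Atom →₀ ℕ) (c : ℕ) :
    (vge (π • x) c).card = (vge x c).card := by
  rw [vge_smul, Finset.card_image_of_injective _ π.injective]

lemma supp_smul_card (π : APerm) (x : Atom →₀ ℕ) :
    (π • x).support.card = x.support.card := by
  rw [supp_smul, Finset.card_image_of_injective _ π.injective]

lemma card_sdiff_ge (A T : Finset Atom) : A.card ≤ (A \ T).card + T.card := by
  have h1 : A ⊆ (A \ T) ∪ T := by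
    intro a ha
    by_cases h : a ∈ T
    · exact Finset.mem_union_right _ h
    · exact Finset.mem_union_left _ (Finset.mem_sdiff.mpr ⟨ha, h⟩)
  calc A.card ≤ ((A \ T) ∪ T).card := Finset.card_le_card h1
    _ ≤ (A \ T).card + T.card := Finset.card_union_le _ _

/-- Facts about the canonical witness vector. -/
lemma vWW_apply (n K : ℕ) (a : ℕ) :
    parikh (WW n K) a =
      (if a < n then K + 2 else 0) + (if n ≤ a ∧ a < n + n * K then 1 else 0) := by
  rw [parikh_apply, count_WW]

lemma vWW_supp (n K : ℕ) : (parikh (WW n K)).support = Finset.range (n + n * K) := by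
  ext a
  obtain ⟨b, rfl⟩ : ∃ b : ℕ, b = a := ⟨a, rfl⟩
  rw [Finsupp.mem_support_iff, vWW_apply, Finset.mem_range]
  split_ifs <;> omega

lemma vWW_supp_card (n K : ℕ) : (parikh (WW n K)).support.card = n + n * K := by
  rw [vWW_supp, Finset.card_range]

lemma vWW_msize (n K : ℕ) : msize (parikh (WW n K)) = n * (2 * K + 2) := by
  rw [msize_parikh, length_WW]

lemma vWW_vclass_one (n K : ℕ) : vclass (parikh (WW n K)) 1 = Finset.Ico n (n + n * K) := by
  ext a
  obtain ⟨b, rfl⟩ : ∃ b : ℕ, b = a := ⟨a, rfl⟩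
  rw [vclass, Finset.mem_filter, Finsupp.mem_support_iff, vWW_apply, Finset.mem_Ico]
  show (¬((if b < n then K + 2 else 0) + (if n ≤ b ∧ b < n + n * K then 1 else 0) = 0)
      ∧ (if b < n then K + 2 else 0) + (if n ≤ b ∧ b < n + n * K then 1 else 0) = 1)
      ↔ (n ≤ b ∧ b < n + n * K)
  constructor
  · rintro ⟨-, h1⟩
    split_ifs at h1 <;> omega
  · intro h
    have h1 : ¬ b < n := by omega
    rw [if_neg h1, if_pos h]
    omega

lemma vWW_vclass_one_card (n K : ℕ) : (vclass (parikh (WW n K)) 1).card = n * K := by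
  rw [vWW_vclass_one, Nat.card_Ico]
  omega

lemma vWW_vge_card (n K : ℕ) : n ≤ (vge (parikh (WW n K)) (K + 2)).card := by
  have h : Finset.range n ⊆ vge (parikh (WW n K)) (K + 2) := by
    intro a ha
    rw [Finset.mem_range] at ha
    rw [vge, Finset.mem_filter, Finsupp.mem_support_iff, vWW_apply]
    rw [if_pos ha]
    constructor
    · omega
    · have : (if n ≤ a ∧ a < n + n * K then 1 else 0) = 0 := by
        rw [if_neg]; omega
      omega
  simpa using Finset.card_le_card h

end Classes
section Counting

lemma list_sum_apply (l : List (Atom →₀ ℕ)) (a : Atom) :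
    l.sum a = (l.map (fun p => p a)).sum := by
  induction l with
  | nil => simp
  | cons p l ih => simp [ih]

/-- Number of vectors in the list whose support contains `a`. -/
def cntl (l : List (Atom →₀ ℕ)) (a : Atom) : ℕ :=
  (l.map (fun p => if p a ≠ 0 then 1 else 0)).sum

lemma cntl_ge_one {l : List (Atom →₀ ℕ)} {a : Atom} (h : l.sum a ≠ 0) :
    1 ≤ cntl l a := by
  induction l with
  | nil => simp at h
  | cons p l ih =>
    rw [List.sum_cons, Finsupp.add_apply] at h
    unfold cntl
    rw [List.map_cons, List.sum_cons]
    by_cases hp : p a ≠ 0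
    · rw [if_pos hp]; omega
    · rw [if_neg hp]
      push_neg at hp
      have := ih (by omega)
      unfold cntl at this
      omega

lemma cntl_ge_two {l : List (Atom →₀ ℕ)} {a : Atom} {C : ℕ}
    (hC : ∀ p ∈ l, p a ≤ C) (h : C + 1 ≤ l.sum a) :
    2 ≤ cntl l a := by
  induction l with
  | nil => simp at h
  | cons p l ih =>
    rw [List.sum_cons, Finsupp.add_apply] at h
    unfold cntl
    rw [List.map_cons, List.sum_cons]
    by_cases hp : p a ≠ 0
    · rw [if_pos hp]
      have hpa : p a ≤ C := hC p (by simp)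
      have hl : l.sum a ≠ 0 := by omega
      have := cntl_ge_one hl
      unfold cntl at this
      omega
    · rw [if_neg hp]
      push_neg at hp
      have := ih (fun q hq => hC q (by simp [hq])) (by omega)
      unfold cntl at this
      omega

lemma sum_cntl (U : Finset Atom) (l : List (Atom →₀ ℕ)) :
    ∑ a ∈ U, cntl l a = (l.map (fun p => (U.filter (fun a => p a ≠ 0)).card)).sum := by
  induction l with
  | nil => simp [cntl]
  | cons p l ih =>
    unfold cntl
    simp only [List.map_cons, List.sum_cons]
    rw [Finset.sum_add_distrib]
    unfold cntl at ih
    rw [ih, Finset.card_filter]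

lemma double_count_le (S' U : Finset Atom) (hUS : ∀ a ∈ U, a ∉ S')
    (l : List (Atom →₀ ℕ))
    (hcon : ∀ p ∈ l, 2 * ((p.support \ S').card) ≤ msize p) :
    2 * (l.map (fun p => (U.filter (fun a => p a ≠ 0)).card)).sum ≤ (l.map msize).sum := by
  induction l with
  | nil => simp
  | cons p l ih =>
    simp only [List.map_cons, List.sum_cons]
    have hsub : U.filter (fun a => p a ≠ 0) ⊆ p.support \ S' := by
      intro a ha
      rw [Finset.mem_filter] at ha
      rw [Finset.mem_sdiff, Finsupp.mem_support_iff]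
      exact ⟨ha.2, hUS a ha.1⟩
    have h1 : 2 * (U.filter (fun a => p a ≠ 0)).card ≤ msize p := by
      have hc := Finset.card_le_card hsub
      have := hcon p (by simp)
      omega
    have h2 := ih (fun q hq => hcon q (by simp [hq]))
    omega

/-- The core pigeonhole argument: in any decomposition of the (transported)
witness vector into a base plus periods of size at most `C < K + 2`, some
period `p` has more than `msize p / 2` support atoms outside `S'`. -/
lemma exists_good_period
    (g0 : Atom →₀ ℕ) (l : List (Atom →₀ ℕ)) (S' : Finset Atom) (C n K : ℕ)
    (hC : ∀ p ∈ l, msize p ≤ C) (hKC : C < K + 2)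
    (hB : 3 * (S' ∪ g0.support).card + 1 ≤ n)
    (hs : (vclass (g0 + l.sum) 1).card = n * K)
    (hh : n ≤ (vge (g0 + l.sum) (K + 2)).card)
    (hm : msize (g0 + l.sum) = n * (2 * K + 2)) :
    ∃ p ∈ l, msize p < 2 * ((p.support \ S').card) := by
  by_contra hcon
  push_neg at hcon
  set w := g0 + l.sum with hw
  set T := S' ∪ g0.support with hT
  set U1 := vclass w 1 \ T with hU1
  set U2 := vge w (K + 2) \ T with hU2
  have hU1w : ∀ a ∈ U1, w a = 1 ∧ a ∉ S' ∧ g0 a = 0 := by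
    intro a ha
    rw [hU1, Finset.mem_sdiff, hT, Finset.mem_union] at ha
    obtain ⟨hmem, hnot⟩ := ha
    rw [vclass, Finset.mem_filter] at hmem
    push_neg at hnot
    exact ⟨hmem.2, hnot.1, Finsupp.notMem_support_iff.mp hnot.2⟩
  have hU2w : ∀ a ∈ U2, K + 2 ≤ w a ∧ a ∉ S' ∧ g0 a = 0 := by
    intro a ha
    rw [hU2, Finset.mem_sdiff, hT, Finset.mem_union] at ha
    obtain ⟨hmem, hnot⟩ := ha
    rw [vge, Finset.mem_filter] at hmem
    push_neg at hnot
    exact ⟨hmem.2, hnot.1, Finsupp.notMem_support_iff.mp hnot.2⟩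
  have hdisj : Disjoint U1 U2 := by
    rw [Finset.disjoint_left]
    intro a h1 h2
    have := (hU1w a h1).1
    have := (hU2w a h2).1
    omega
  have hcnt1 : ∀ a ∈ U1, 1 ≤ cntl l a := by
    intro a ha
    obtain ⟨hval, -, hg⟩ := hU1w a ha
    apply cntl_ge_one
    have : w a = g0 a + l.sum a := by rw [hw]; rfl
    omega
  have hcnt2 : ∀ a ∈ U2, 2 ≤ cntl l a := by
    intro a ha
    obtain ⟨hval, -, hg⟩ := hU2w a ha
    apply cntl_ge_two (C := C)
    · intro p hp
      exact le_trans (apply_le_msize p a) (hC p hp)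
    · have : w a = g0 a + l.sum a := by rw [hw]; rfl
      omega
  -- lower bound for the total count
  have hlow : U1.card * 1 + U2.card * 2 ≤ ∑ a ∈ U1 ∪ U2, cntl l a := by
    rw [Finset.sum_union hdisj]
    have l1 : U1.card * 1 ≤ ∑ a ∈ U1, cntl l a := by
      calc U1.card * 1 = ∑ _a ∈ U1, 1 := by rw [Finset.sum_const, smul_eq_mul]
        _ ≤ _ := Finset.sum_le_sum hcnt1
    have l2 : U2.card * 2 ≤ ∑ a ∈ U2, cntl l a := by
      calc U2.card * 2 = ∑ _a ∈ U2, 2 := by rw [Finset.sum_const, smul_eq_mul]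
        _ ≤ _ := Finset.sum_le_sum hcnt2
    omega
  -- upper bound for the total count
  have hUS : ∀ a ∈ U1 ∪ U2, a ∉ S' := by
    intro a ha
    rcases Finset.mem_union.mp ha with h | h
    · exact (hU1w a h).2.1
    · exact (hU2w a h).2.1
  have hup : 2 * (∑ a ∈ U1 ∪ U2, cntl l a) ≤ (l.map msize).sum := by
    rw [sum_cntl]
    exact double_count_le S' (U1 ∪ U2) hUS l hcon
  have hU1card := card_sdiff_ge (vclass w 1) T
  have hU2card := card_sdiff_ge (vge w (K + 2)) T
  rw [← hU1] at hU1card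
  rw [← hU2] at hU2card
  have hmw : msize w = msize g0 + (l.map msize).sum := by
    rw [hw, msize_add, msize_list_sum]
  have hexp : n * (2 * K + 2) = 2 * (n * K) + 2 * n := by ring
  omega

end Counting
section Perms

lemma fixes_mono {π : APerm} {S S' : Finset Atom} (h : S' ⊆ S) (hπ : Fixes π S) :
    Fixes π S' := fun a ha => hπ a (h ha)

lemma fixes_inv {π : APerm} {S : Finset Atom} (hπ : Fixes π S) : Fixes π⁻¹ S := by
  intro a ha
  have := hπ a ha
  conv_lhs => rw [← this]
  exact π.symm_apply_apply a

lemma fixes_mul {π σ : APerm} {S : Finset Atom} (hπ : Fixes π S) (hσ : Fixes σ S) :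
    Fixes (π * σ) S := by
  intro a ha
  show π (σ a) = a
  rw [hσ a ha, hπ a ha]

lemma smul_fs_add (π : APerm) (x y : Atom →₀ ℕ) : π • (x + y) = π • x + π • y := by
  rw [smul_fs_def, smul_fs_def, smul_fs_def]
  exact Finsupp.mapDomain_add

lemma smul_list_sum (π : APerm) (l : List (Atom →₀ ℕ)) :
    π • l.sum = (l.map (π • ·)).sum := by
  induction l with
  | nil =>
    simp only [List.sum_nil, List.map_nil]
    rw [smul_fs_def]
    exact Finsupp.mapDomain_zero
  | cons x xs ih => rw [List.sum_cons, smul_fs_add, ih, List.map_cons, List.sum_cons]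

lemma smul_list_def (π : APerm) (w : List Atom) : π • w = w.map π := rfl

lemma exists_perm_list : ∀ (xs ys : List ℕ), xs.Nodup → ys.Nodup →
    (∀ x ∈ xs, ∀ y ∈ ys, x ≠ y) → xs.length = ys.length →
    ∃ π : APerm, (∀ t ∈ xs.zip ys, π t.1 = t.2) ∧ (∀ a, a ∉ xs → a ∉ ys → π a = a) := by
  intro xs
  induction xs with
  | nil => exact fun ys _ _ _ _ => ⟨1, by simp, fun a _ _ => rfl⟩
  | cons x xs ih =>
    intro ys hxs hys hdisj hlen
    cases ys with
    | nil => simp at hlen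
    | cons y ys =>
      obtain ⟨π', h1, h2⟩ := ih ys (List.nodup_cons.mp hxs).2 (List.nodup_cons.mp hys).2
        (fun a ha b hb => hdisj a (by simp [ha]) b (by simp [hb]))
        (by simpa using hlen)
      have hπ'x : π' x = x := h2 x (List.nodup_cons.mp hxs).1
        (fun hc => hdisj x (by simp) x (by simp [hc]) rfl)
      refine ⟨Equiv.swap x y * π', ?_, ?_⟩
      · intro t ht
        rw [List.zip_cons_cons, List.mem_cons] at ht
        rcases ht with rfl | ht
        · show Equiv.swap x y (π' x) = y
          rw [hπ'x, Equiv.swap_apply_left]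
        · obtain ⟨ht1, ht2⟩ := List.of_mem_zip ht
          show Equiv.swap x y (π' t.1) = t.2
          rw [h1 t ht]
          have hne1 : t.2 ≠ x := fun hc => hdisj x (by simp) t.2 (by simp [ht2]) hc.symm
          have hne2 : t.2 ≠ y := fun hc => (List.nodup_cons.mp hys).1 (hc ▸ ht2)
          rw [Equiv.swap_apply_of_ne_of_ne hne1 hne2]
      · intro a ha hb
        have h3 : π' a = a := h2 a (fun hc => ha (by simp [hc])) (fun hc => hb (by simp [hc]))
        show Equiv.swap x y (π' a) = a
        rw [h3, Equiv.swap_apply_of_ne_of_ne (fun hc => ha (by simp [hc]))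
          (fun hc => hb (by simp [hc]))]

lemma zip_left : ∀ (xs ys : List ℕ), xs.length = ys.length → ∀ a ∈ xs,
    ∃ b, (a, b) ∈ xs.zip ys ∧ b ∈ ys := by
  intro xs
  induction xs with
  | nil => intro ys _ a ha; simp at ha
  | cons x xs ih =>
    intro ys hlen a ha
    cases ys with
    | nil => simp at hlen
    | cons y ys =>
      rcases List.mem_cons.mp ha with rfl | ha
      · exact ⟨y, by simp, by simp⟩
      · obtain ⟨b, hb1, hb2⟩ := ih ys (by simpa using hlen) a ha
        exact ⟨b, by simp [hb1], by simp [hb2]⟩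

lemma exists_pump_perm (S' D0 avoid : Finset ℕ)
    (hD0S : ∀ a ∈ D0, a ∉ S') (hSav : S' ⊆ avoid) (hD0av : D0 ⊆ avoid) :
    ∃ τ : APerm, Fixes τ S' ∧ (∀ a ∈ D0, τ a ∉ avoid) := by
  set M := avoid.sup id + 1 with hM
  have hav : ∀ a ∈ avoid, a < M := by
    intro a ha
    have := Finset.le_sup (f := id) ha
    simp only [id_eq] at this
    omega
  set xs := D0.toList with hxs
  set ys := (List.range D0.card).map (fun t => M + t) with hys
  have hlen : xs.length = ys.length := by
    simp [hxs, hys, Finset.length_toList]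
  have hysbig : ∀ b ∈ ys, M ≤ b := by
    intro b hb
    simp only [hys, List.mem_map, List.mem_range] at hb
    obtain ⟨t, _, rfl⟩ := hb
    omega
  have hdisj : ∀ x ∈ xs, ∀ y ∈ ys, x ≠ y := by
    intro x hx y hy
    have hx' : x ∈ D0 := by rwa [hxs, Finset.mem_toList] at hx
    have := hav x (hD0av hx')
    have := hysbig y hy
    omega
  obtain ⟨τ, h1, h2⟩ := exists_perm_list xs ys (Finset.nodup_toList D0)
    (List.nodup_range.map (fun a b h => by omega)) hdisj hlen
  refine ⟨τ, ?_, ?_⟩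
  · intro a ha
    refine h2 a ?_ ?_
    · rw [hxs, Finset.mem_toList]
      exact fun hc => hD0S a hc ha
    · intro hc
      have := hysbig a hc
      have := hav a (hSav ha)
      omega
  · intro a ha
    obtain ⟨b, hb1, hb2⟩ := zip_left xs ys hlen a (by rwa [hxs, Finset.mem_toList])
    have : τ a = b := h1 (a, b) hb1
    rw [this]
    intro hc
    have := hav b hc
    have := hysbig b hb2
    omega

end Perms
section Normalize

/-- All lists of length at most `L` over the alphabet `s`. -/
def allLists (s : Finset ℕ) : ℕ → Finset (List ℕ)
  | 0 => {[]}
  | L + 1 => {[]} ∪ (s ×ˢ allLists s L).image (fun q => q.1 :: q.2)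

lemma mem_allLists (s : Finset ℕ) : ∀ (L : ℕ) (l : List ℕ), l.length ≤ L →
    (∀ a ∈ l, a ∈ s) → l ∈ allLists s L := by
  intro L
  induction L with
  | zero =>
    intro l hl _
    cases l with
    | nil => simp [allLists]
    | cons x xs => simp at hl
  | succ L ih =>
    intro l hl hmem
    cases l with
    | nil => simp [allLists]
    | cons x xs =>
      rw [allLists]
      apply Finset.mem_union_right
      rw [Finset.mem_image]
      refine ⟨(x, xs), Finset.mem_product.mpr ⟨hmem x (by simp), ?_⟩, rfl⟩
      exact ih xs (by simpa using hl) (fun a ha => hmem a (by simp [ha]))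

lemma orbit_closed {X : Type*} [MulAction APerm X] {Y : Set X} {S : Finset Atom}
    {R : Finset X}
    (hY : Y = ⋃ r ∈ R, {x : X | ∃ π : APerm, Fixes π S ∧ π • r = x})
    {q : X} (hq : q ∈ Y) {ρ : APerm} (hρ : Fixes ρ S) : ρ • q ∈ Y := by
  rw [hY] at hq ⊢
  rw [Set.mem_iUnion₂] at hq ⊢
  obtain ⟨r, hr, π, hπ, rfl⟩ := hq
  exact ⟨r, hr, ρ * π, fixes_mul hρ hπ, mul_smul ρ π r⟩

lemma le_foldr_max : ∀ (l : List ℕ), ∀ a ∈ l, a ≤ l.foldr max 0 := by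
  intro l
  induction l with
  | nil => intro a ha; simp at ha
  | cons x xs ih =>
    intro a ha
    rcases List.mem_cons.mp ha with rfl | ha'
    · simp [List.foldr_cons]
    · have := ih a ha'
      simp only [List.foldr_cons]
      omega

lemma exists_normalize_perm (S : Finset ℕ) (L : ℕ) (i : List ℕ) (hi : i.length ≤ L) :
    ∃ π : APerm, Fixes π S ∧
      ∀ a ∈ i, π a ∈ S ∪ (Finset.range L).image (fun t => S.sup id + 1 + t) := by
  classical
  set base := S.sup id + 1 with hbase
  have hSbase : ∀ a ∈ S, a < base := by
    intro a ha
    have := Finset.le_sup (f := id) ha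
    simp only [id_eq] at this
    omega
  set zs := (i.filter (fun a => a ∉ S)).dedup with hzs
  set m := zs.length with hm
  have hmL : m ≤ L :=
    le_trans (le_trans (List.Sublist.length_le (List.dedup_sublist _))
      (List.length_filter_le _ _)) hi
  have hzsi : ∀ a ∈ zs, a ∈ i ∧ a ∉ S := by
    intro a ha
    rw [hzs, List.mem_dedup, List.mem_filter] at ha
    exact ⟨ha.1, by simpa using ha.2⟩
  set big := base + L + 1 + i.foldr max 0 with hbig
  have hifold : ∀ a ∈ i, a ≤ i.foldr max 0 := le_foldr_max i
  have hibig : ∀ a ∈ i, a < big := by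
    intro a ha
    have := hifold a ha
    omega
  set ws := (List.range m).map (fun t => big + t) with hws
  set fs := (List.range m).map (fun t => base + t) with hfs
  have hwsmem : ∀ b ∈ ws, big ≤ b ∧ b < big + m := by
    intro b hb
    simp only [hws, List.mem_map, List.mem_range] at hb
    obtain ⟨t, ht, rfl⟩ := hb
    omega
  have hfsmem : ∀ b ∈ fs, base ≤ b ∧ b < base + m := by
    intro b hb
    simp only [hfs, List.mem_map, List.mem_range] at hb
    obtain ⟨t, ht, rfl⟩ := hb
    omega
  have hlen1 : zs.length = ws.length := by simp [hws, hm]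
  have hlen2 : ws.length = fs.length := by simp [hws, hfs]
  obtain ⟨π₁, h11, h12⟩ := exists_perm_list zs ws (List.nodup_dedup _)
    (List.nodup_range.map (fun a b h => by omega))
    (fun x hx y hy => by
      have h1 := (hzsi x hx).1
      have := hibig x h1
      have := (hwsmem y hy).1
      omega) hlen1
  obtain ⟨π₂, h21, h22⟩ := exists_perm_list ws fs
    (List.nodup_range.map (fun a b h => by omega))
    (List.nodup_range.map (fun a b h => by omega))
    (fun x hx y hy => by
      have := (hwsmem x hx).1
      have := (hfsmem y hy).2
      omega) hlen2
  have hfix : ∀ a ∈ S, (π₂ * π₁) a = a := by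
    intro a ha
    have h1 : π₁ a = a := h12 a
      (fun hc => (hzsi a hc).2 ha)
      (fun hc => by have := (hwsmem a hc).1; have := hSbase a ha; omega)
    show π₂ (π₁ a) = a
    rw [h1]
    exact h22 a
      (fun hc => by have := (hwsmem a hc).1; have := hSbase a ha; omega)
      (fun hc => by have := (hfsmem a hc).1; have := hSbase a ha; omega)
  refine ⟨π₂ * π₁, hfix, ?_⟩
  intro a ha
  by_cases hS : a ∈ S
  · rw [hfix a hS]
    exact Finset.mem_union_left _ hS
  · have haz : a ∈ zs := by
      rw [hzs, List.mem_dedup, List.mem_filter]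
      exact ⟨ha, by simpa using hS⟩
    obtain ⟨b, hb1, hb2⟩ := zip_left zs ws hlen1 a haz
    have e1 : π₁ a = b := h11 _ hb1
    obtain ⟨c, hc1, hc2⟩ := zip_left ws fs hlen2 b hb2
    have e2 : π₂ b = c := h21 _ hc1
    show π₂ (π₁ a) ∈ _
    rw [e1, e2]
    apply Finset.mem_union_right
    simp only [hfs, List.mem_map, List.mem_range] at hc2
    obtain ⟨t, ht, rfl⟩ := hc2
    rw [Finset.mem_image]
    exact ⟨t, Finset.mem_range.mpr (by omega), rfl⟩

end Normalize
/-- The Parikh image of `L₃` is not semi-linear. -/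
theorem L3_parikh_not_semilinear : ¬ IsSemiLinear (parikhImg L3) := by
  classical
  rintro ⟨D, g, P, hD, hg, hP, hOP, hX⟩
  obtain ⟨SD, RD, hDeq⟩ := hD
  obtain ⟨Sg, hgS⟩ := hg
  obtain ⟨SP, hPS⟩ := hP
  choose! SOf ROf hOf using hOP
  set Sall := SD ∪ Sg ∪ SP with hSall
  have hSDsub : SD ⊆ Sall := by
    intro a ha; rw [hSall]; exact Finset.mem_union_left _ (Finset.mem_union_left _ ha)
  have hSgsub : Sg ⊆ Sall := by
    intro a ha; rw [hSall]; exact Finset.mem_union_left _ (Finset.mem_union_right _ ha)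
  have hSPsub : SP ⊆ Sall := by
    intro a ha; rw [hSall]; exact Finset.mem_union_right _ ha
  set L := RD.sup List.length with hL
  set F := (Finset.range L).image (fun t => Sall.sup id + 1 + t) with hF
  set R' := allLists (Sall ∪ F) L with hR'
  set Bmax := R'.sup (fun r => (SOf r ∪ (g r).support).card) with hBmax
  set Cmax := R'.sup (fun r => (ROf r).sup msize) with hCmax
  set n := 3 * Bmax + 1 with hn
  set K := Cmax + 1 with hK
  set v := parikh (WW n K) with hv
  have hvX : v ∈ parikhImg L3 := ⟨WW n K, WW_mem_L3 n K (by omega), hv.symm⟩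
  rw [hX, Set.mem_iUnion₂] at hvX
  obtain ⟨i, hiD, hvin⟩ := hvX
  obtain ⟨x, hx, y, hy, hvxy⟩ := hvin
  rw [Set.mem_singleton_iff] at hx
  subst hx
  obtain ⟨lst, hlst, hysum⟩ := hy
  -- length bound for the index
  have hiD' := hiD
  rw [hDeq, Set.mem_iUnion₂] at hiD'
  obtain ⟨r0, hr0, π0, hπ0, hπ0i⟩ := hiD'
  have hilen : i.length ≤ L := by
    rw [← hπ0i, smul_list_def, List.length_map]
    exact Finset.le_sup (f := List.length) hr0
  -- normalization
  obtain ⟨π, hπfix, hπmem⟩ := exists_normalize_perm Sall L i hilen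
  set r' := π • i with hr'def
  have hπr' : π⁻¹ • r' = i := by rw [hr'def, inv_smul_smul]
  have hr'D : r' ∈ D := orbit_closed hDeq hiD (fixes_mono hSDsub hπfix)
  have hr'R' : r' ∈ R' := by
    rw [hR']
    apply mem_allLists
    · rw [hr'def, smul_list_def, List.length_map]; exact hilen
    · intro a ha
      rw [hr'def, smul_list_def, List.mem_map] at ha
      obtain ⟨b, hb, rfl⟩ := ha
      exact hπmem b hb
  -- equivariance
  have hgi : g i = π⁻¹ • g r' := by
    conv_lhs => rw [← hπr']
    exact hgS π⁻¹ (fixes_inv (fixes_mono hSgsub hπfix)) r'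
  have hPi : P i = π⁻¹ • P r' := by
    conv_lhs => rw [← hπr']
    exact hPS π⁻¹ (fixes_inv (fixes_mono hSPsub hπfix)) r'
  -- transported decomposition
  set w' := π • v with hw'
  set lst' := lst.map (π • ·) with hlst'
  have hdecomp : w' = g r' + lst'.sum := by
    rw [hw', hvxy, hysum, smul_fs_add, smul_list_sum, ← hlst', hgi, smul_inv_smul]
  have hlst'P : ∀ p ∈ lst', p ∈ P r' := by
    intro p hp
    rw [hlst', List.mem_map] at hp
    obtain ⟨q, hq, rfl⟩ := hp
    have hqPi : q ∈ P i := hlst q hq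
    rw [hPi, Set.mem_smul_set] at hqPi
    obtain ⟨z, hz, hzq⟩ := hqPi
    rw [← hzq, smul_inv_smul]
    exact hz
  -- uniform constants
  have hBr' : (SOf r' ∪ (g r').support).card ≤ Bmax :=
    Finset.le_sup (f := fun r => (SOf r ∪ (g r).support).card) hr'R'
  have hCr' : ∀ p ∈ P r', msize p ≤ Cmax := by
    intro p hp
    rw [hOf r' hr'D, Set.mem_iUnion₂] at hp
    obtain ⟨q, hq, ρ, hρ, rfl⟩ := hp
    rw [msize_smul]
    exact le_trans (Finset.le_sup (f := msize) hq)
      (Finset.le_sup (f := fun r => (ROf r).sup msize) hr'R')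
  -- transported counting facts
  have hs : (vclass (g r' + lst'.sum) 1).card = n * K := by
    rw [← hdecomp, hw', vclass_smul_card, hv, vWW_vclass_one_card]
  have hh : n ≤ (vge (g r' + lst'.sum) (K + 2)).card := by
    rw [← hdecomp, hw', vge_smul_card, hv]
    exact vWW_vge_card n K
  have hmsz : msize (g r' + lst'.sum) = n * (2 * K + 2) := by
    rw [← hdecomp, hw', msize_smul, hv, vWW_msize]
  -- find a good period
  obtain ⟨p, hpl, hpgood⟩ := exists_good_period (g r') lst' (SOf r') Cmax n K
    (fun p hp => hCr' p (hlst'P p hp)) (by omega) (by omega) hs hh hmsz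
  -- pumping permutation
  set S' := SOf r' with hS'
  set avoid := w'.support ∪ p.support ∪ S' with havoid
  obtain ⟨τ, hτfix, hτfresh⟩ := exists_pump_perm S' (p.support \ S') avoid
    (fun a ha => (Finset.mem_sdiff.mp ha).2)
    (fun a ha => by rw [havoid]; exact Finset.mem_union_right _ ha)
    (fun a ha => by
      rw [havoid]
      exact Finset.mem_union_left _
        (Finset.mem_union_right _ (Finset.mem_sdiff.mp ha).1))
  have hτpP : τ • p ∈ P r' := orbit_closed (hOf r' hr'D) (hlst'P p hpl) hτfix
  -- the pumped vector
  set u := w' + τ • p with hu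
  have huX : u ∈ parikhImg L3 := by
    rw [hX, Set.mem_iUnion₂]
    refine ⟨r', hr'D, g r', rfl, (lst' ++ [τ • p]).sum, ?_, ?_⟩
    · refine ⟨lst' ++ [τ • p], ?_, rfl⟩
      intro q hq
      rcases List.mem_append.mp hq with h | h
      · exact hlst'P q h
      · rw [List.mem_singleton] at h
        rw [h]
        exact hτpP
    · rw [hu, hdecomp, List.sum_append, List.sum_cons, List.sum_nil, add_zero, add_assoc]
  -- the violation
  have hineq := L3_two_supp_le huX
  have hmu : msize u = msize w' + msize p := by rw [hu, msize_add, msize_smul τ p]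
  have hwsupp : 2 * w'.support.card = msize w' := by
    rw [hw', supp_smul_card, msize_smul, hv, vWW_supp_card, vWW_msize]
    ring
  have hinj : Function.Injective (τ : Atom → Atom) := τ.injective
  have hdisj2 : Disjoint w'.support ((p.support \ S').image τ) := by
    rw [Finset.disjoint_right]
    intro a ha
    rw [Finset.mem_image] at ha
    obtain ⟨b, hb, rfl⟩ := ha
    intro hc
    exact hτfresh b hb (by rw [havoid]; exact Finset.mem_union_left _ (Finset.mem_union_left _ hc))
  have hsubu : w'.support ∪ (p.support \ S').image τ ⊆ u.support := by
    rw [hu, supp_add]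
    apply Finset.union_subset_union_right
    intro a ha
    rw [Finset.mem_image] at ha
    obtain ⟨b, hb, rfl⟩ := ha
    rw [supp_smul, Finset.mem_image]
    exact ⟨b, (Finset.mem_sdiff.mp hb).1, rfl⟩
  have hcard : w'.support.card + (p.support \ S').card ≤ u.support.card := by
    have h1 := Finset.card_le_card hsubu
    rw [Finset.card_union_of_disjoint hdisj2, Finset.card_image_of_injective _ hinj] at h1
    exact h1
  omega
end

section
/- For sufficiently large n: if v is a non-degenerate data vector over Σ of order at least n+1 (order = number of distinct sources), then there exists a letter α ∈ dom(v) such that removing one occurrence of α preserves the kernel (ker(v − α) = ker(v)) and preserves non-degeneracy (v − α is non-degenerate). -/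
open Letter

/-- The kernel of a data vector: the intersection of the targets of all letters
appearing in it. -/
def ker (v : Letter →₀ ℕ) : Set Atom :=
  ⋂ α ∈ (v.support : Set Letter), (trg α : Set Atom)

-- helper lemmas
lemma sub1_apply (v : Letter →₀ ℕ) (α β : Letter) :
    (v - Finsupp.single α 1 : Letter →₀ ℕ) β = v β - (if β = α then 1 else 0) := by
  classical
  rw [Finsupp.tsub_apply, Finsupp.single_apply]
  congr 1
  simp [eq_comm]

lemma support_sub1 (v : Letter →₀ ℕ) (α β : Letter) :
    β ∈ (v - Finsupp.single α 1).support ↔ β ∈ v.support ∧ (β = α → 2 ≤ v α) := by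
  classical
  simp only [Finsupp.mem_support_iff, sub1_apply]
  by_cases h : β = α <;> simp [h] <;> omega

lemma srcs_sub1_subset (v : Letter →₀ ℕ) (α : Letter) :
    srcs (v - Finsupp.single α 1) ⊆ srcs v := by
  intro d hd
  simp only [srcs, Finset.mem_image] at hd ⊢
  obtain ⟨β, hβ, rfl⟩ := hd
  exact ⟨β, ((support_sub1 v α β).1 hβ).1, rfl⟩

lemma mem_srcs_sub1 (v : Letter →₀ ℕ) (α : Letter) {f : Atom}
    (hf : f ∈ srcs v) (hfs : f ≠ src α) : f ∈ srcs (v - Finsupp.single α 1) := by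
  simp only [srcs, Finset.mem_image] at hf ⊢
  obtain ⟨β, hβ, rfl⟩ := hf
  refine ⟨β, (support_sub1 v α β).2 ⟨hβ, fun h => absurd (by rw [h]) hfs⟩, rfl⟩

lemma edge_sub1 (v : Letter →₀ ℕ) (α : Letter) {f e : Atom}
    (h : Edge v f e) (hf : f ≠ src α) (he : e ∈ srcs (v - Finsupp.single α 1)) :
    Edge (v - Finsupp.single α 1) f e := by
  obtain ⟨hne, hfv, hev, β, hβ, hsrc, htrg⟩ := h
  refine ⟨hne, mem_srcs_sub1 v α hfv hf, he, β, ?_, hsrc, htrg⟩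
  exact (support_sub1 v α β).2 ⟨hβ, fun h => absurd (by rw [← hsrc, h]) hf⟩

lemma card_le_mass (v : Letter →₀ ℕ) (P : Set Letter) (T : Finset Letter)
    (hT : T ⊆ v.support) (hP : ∀ β ∈ T, β ∈ P) : T.card ≤ mass v P := by
  classical
  have h1 : T.card = ∑ β ∈ T, 1 := by simp
  rw [h1, mass]
  calc ∑ β ∈ T, 1 ≤ ∑ β ∈ T, (if β ∈ P then v β else 0) := by
        apply Finset.sum_le_sum
        intro β hβ
        have := Finsupp.mem_support_iff.1 (hT hβ)
        simp [hP β hβ]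
        omega
    _ ≤ ∑ α ∈ v.support, (if α ∈ P then v α else 0) := by
        apply Finset.sum_le_sum_of_subset hT

lemma support_sub1_subset (v : Letter →₀ ℕ) (α : Letter) :
    (v - Finsupp.single α 1).support ⊆ v.support := fun β hβ => ((support_sub1 v α β).1 hβ).1

open Classical in
lemma mass_le_mass_add (v v' : Letter →₀ ℕ) (P P' : Set Letter) (α : Letter)
    (hsupp : v'.support ⊆ v.support)
    (hP' : ∀ β, β ∈ P' → β ∈ v'.support)
    (hpoint : ∀ β ∈ v.support,
      (if β ∈ P then v β else 0) ≤ (if β ∈ P' then v' β else 0) + (if β = α ∧ α ∈ P then 1 else 0)) :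
    mass v P ≤ mass v' P' + (if α ∈ P then 1 else 0) := by
  have hstep1 : mass v' P' = ∑ β ∈ v.support, (if β ∈ P' then v' β else 0) := by
    apply Finset.sum_subset hsupp
    intro β _ hβ
    have : β ∉ P' := fun h => hβ (hP' β h)
    simp [this]
  have hstep3 : ∑ β ∈ v.support, (if β = α ∧ α ∈ P then 1 else 0) ≤ (if α ∈ P then 1 else 0) := by
    by_cases hαS : α ∈ P
    · simp only [hαS, and_true]
      rw [Finset.sum_ite_eq' v.support α (fun _ => (1 : ℕ))]
      by_cases h : α ∈ v.support <;> simp [h]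
    · simp [hαS]
  calc mass v P = ∑ β ∈ v.support, (if β ∈ P then v β else 0) := rfl
    _ ≤ ∑ β ∈ v.support, ((if β ∈ P' then v' β else 0) + (if β = α ∧ α ∈ P then 1 else 0)) :=
        Finset.sum_le_sum hpoint
    _ = (∑ β ∈ v.support, (if β ∈ P' then v' β else 0)) + ∑ β ∈ v.support, (if β = α ∧ α ∈ P then 1 else 0) := Finset.sum_add_distrib
    _ ≤ mass v' P' + (if α ∈ P then 1 else 0) := by rw [← hstep1]; exact Nat.add_le_add_left hstep3 _

open Classical in
lemma mass_sub1_ge (v : Letter →₀ ℕ) (α : Letter) (d e : Atom) :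
    mass v (precSet v d ∪ precSet v e) ≤
      mass (v - Finsupp.single α 1)
        (precSet (v - Finsupp.single α 1) d ∪ precSet (v - Finsupp.single α 1) e) +
      (if α ∈ precSet v d ∪ precSet v e then 1 else 0) := by
  have H := mass_le_mass_add v (v - Finsupp.single α 1)
    (precSet v d ∪ precSet v e)
    (precSet (v - Finsupp.single α 1) d ∪ precSet (v - Finsupp.single α 1) e)
    α (support_sub1_subset v α) ?_ ?_
  · by_cases h : α ∈ precSet v d ∪ precSet v e
    · rw [if_pos h] at H ⊢; exact H
    · rw [if_neg h] at H ⊢; exact H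
  · intro β hβ
    rcases hβ with h | h
    · exact h.1
    · exact h.1
  · intro β hβ
    have happ : ((v - Finsupp.single α 1 : Letter →₀ ℕ)) β = v β - (if β = α then 1 else 0) :=
      sub1_apply v α β
    by_cases hba : β = α
    · subst hba
      by_cases hS1 : β ∈ precSet v d ∪ precSet v e
      · simp only [hS1, if_pos, and_true, if_pos rfl, true_and]
        by_cases h2 : 2 ≤ v β
        · have hβ' : β ∈ (v - Finsupp.single β 1).support := (support_sub1 v β β).2 ⟨hβ, fun _ => h2⟩
          have hmem : β ∈ precSet (v - Finsupp.single β 1) d ∪ precSet (v - Finsupp.single β 1) e := by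
            rcases hS1 with h | h
            · exact Or.inl ⟨hβ', h.2⟩
            · exact Or.inr ⟨hβ', h.2⟩
          rw [if_pos hmem, happ, if_pos rfl]
          have := Finsupp.mem_support_iff.1 hβ
          omega
        · have h1 : v β ≤ 1 := by omega
          have h0 : 0 ≤ (if β ∈ precSet (v - Finsupp.single β 1) d ∪ precSet (v - Finsupp.single β 1) e
              then (v - Finsupp.single β 1 : Letter →₀ ℕ) β else 0) := Nat.zero_le _
          omega
      · simp [hS1]
    · have hmem' : β ∈ (v - Finsupp.single α 1).support ↔ β ∈ v.support := by
        rw [support_sub1]; simp [hba]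
      have happβ : ((v - Finsupp.single α 1 : Letter →₀ ℕ)) β = v β := by
        rw [happ, if_neg hba]; omega
      have hiff : (β ∈ precSet v d ∪ precSet v e) ↔
          (β ∈ precSet (v - Finsupp.single α 1) d ∪ precSet (v - Finsupp.single α 1) e) := by
        constructor
        · rintro (h | h)
          · exact Or.inl ⟨hmem'.2 h.1, h.2⟩
          · exact Or.inr ⟨hmem'.2 h.1, h.2⟩
        · rintro (h | h)
          · exact Or.inl ⟨hmem'.1 h.1, h.2⟩
          · exact Or.inr ⟨hmem'.1 h.1, h.2⟩
      by_cases h1 : β ∈ precSet v d ∪ precSet v e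
      · rw [if_pos h1, if_pos (hiff.1 h1), happβ]; simp
      · rw [if_neg h1, if_neg (fun h => h1 (hiff.2 h))]; simp

lemma ker_mem_iff (v : Letter →₀ ℕ) (x : Atom) :
    x ∈ ker v ↔ ∀ β ∈ v.support, x ∈ trg β := by
  simp [ker, Set.mem_iInter]

lemma main_lemma (v : Letter →₀ ℕ) (hv : NonDeg v) (α : Letter) (hα : α ∈ v.support)
    (hK : 2 ≤ v α ∨ ∀ x : Atom, (∀ β ∈ v.support, β ≠ α → x ∈ trg β) → x ∈ trg α)
    (h1 : ∀ e ∈ srcs v, e ≠ src α → ∃ f, f ≠ src α ∧ Edge v f e)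
    (h2 : ∀ d ∈ srcs v, ∀ e ∈ srcs v, d ≠ e →
      ∃ f, f ≠ src α ∧ f ≠ d ∧ f ≠ e ∧ (Edge v f d ∨ Edge v f e))
    (h3 : ∀ d ∈ srcs v, ∀ e ∈ srcs v, d ≠ e → α ∈ precSet v d ∪ precSet v e →
      3 ≤ mass v (precSet v d ∪ precSet v e)) :
    ker (v - Finsupp.single α 1) = ker v ∧ NonDeg (v - Finsupp.single α 1) := by
  constructor
  · -- kernel preservation
    by_cases h2α : 2 ≤ v α
    · have hsupp : (v - Finsupp.single α 1).support = v.support := by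
        ext β
        rw [support_sub1]
        exact ⟨And.left, fun h => ⟨h, fun _ => h2α⟩⟩
      unfold ker
      rw [hsupp]
    · have hKr : ∀ x : Atom, (∀ β ∈ v.support, β ≠ α → x ∈ trg β) → x ∈ trg α := by
        rcases hK with h | h
        · exact absurd h h2α
        · exact h
      ext x
      rw [ker_mem_iff, ker_mem_iff]
      constructor
      · intro hx β hβ
        by_cases hβα : β = α
        · rw [hβα]
          apply hKr
          intro γ hγ hγα
          exact hx γ ((support_sub1 v α γ).2 ⟨hγ, fun h => absurd h hγα⟩)
        · exact hx β ((support_sub1 v α β).2 ⟨hβ, fun h => absurd h hβα⟩)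
      · intro hx β hβ
        exact hx β (support_sub1_subset v α hβ)
  · refine ⟨?_, ?_, ?_⟩
    · intro e he'
      have he : e ∈ srcs v := srcs_sub1_subset v α he'
      by_cases hes : e = src α
      · obtain ⟨f, hf⟩ := hv.1 e he
        have hfne : f ≠ src α := by rw [← hes]; exact hf.1
        exact ⟨f, edge_sub1 v α hf hfne he'⟩
      · obtain ⟨f, hfs, hfe⟩ := h1 e he hes
        exact ⟨f, edge_sub1 v α hfe hfs he'⟩
    · intro d hd' e he' hde hsub
      obtain ⟨f, hfs, hfd, hfe, hor⟩ :=
        h2 d (srcs_sub1_subset v α hd') e (srcs_sub1_subset v α he') hde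
      have hmem : f ∈ inn (v - Finsupp.single α 1) d ∪ inn (v - Finsupp.single α 1) e := by
        rcases hor with h | h
        · exact Or.inl (edge_sub1 v α h hfs hd')
        · exact Or.inr (edge_sub1 v α h hfs he')
      rcases hsub hmem with h | h
      · exact hfd h
      · exact hfe h
    · intro d hd' e he' hde
      have hd := srcs_sub1_subset v α hd'
      have he := srcs_sub1_subset v α he'
      have hge := mass_sub1_ge v α d e
      by_cases hm : α ∈ precSet v d ∪ precSet v e
      · have h3' := h3 d hd e he hde hm
        rw [if_pos hm] at hge
        omega
      · have h2' := hv.2.2 d hd e he hde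
        rw [if_neg hm] at hge
        omega

lemma exists_avoid {γ : Type*} (R A : Finset γ) (h : A.card < R.card) :
    ∃ t ∈ R, t ∉ A := by
  by_contra hc
  push_neg at hc
  exact absurd (Finset.card_le_card hc) (by omega)

lemma card3 {γ : Type*} [DecidableEq γ] (a b c : γ) : ({a, b, c} : Finset γ).card ≤ 3 := by
  refine le_trans (Finset.card_insert_le _ _) ?_
  refine le_trans (Nat.add_le_add_right (Finset.card_insert_le _ _) 1) ?_
  simp

lemma trg_ne_pair {β : Letter} {d0 e0 : Atom} (hde : d0 ≠ e0)
    (h : trg β ≠ ({d0, e0} : Finset Atom)) : d0 ∉ trg β ∨ e0 ∉ trg β := by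
  by_contra hc
  push_neg at hc
  apply h
  refine (Finset.eq_of_subset_of_card_le ?_ ?_).symm
  · intro x hx
    rcases Finset.mem_insert.1 hx with h' | h'
    · rw [h']; exact hc.1
    · rw [Finset.mem_singleton.1 h']; exact hc.2
  · have h2 : (trg β).card = 2 := β.2.1
    rw [h2, Finset.card_insert_of_notMem (by simp [hde]), Finset.card_singleton]


/-- For sufficiently large `n`: from any non-degenerate data vector of order at
least `n+1` one can remove one occurrence of some letter, preserving both the
kernel and non-degeneracy. -/
theorem nondeg_remove_letter :
    ∃ N : ℕ, ∀ n : ℕ, N ≤ n → ∀ v : Letter →₀ ℕ, NonDeg v →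
      n + 1 ≤ (srcs v).card →
      ∃ α ∈ v.support,
        ker (v - Finsupp.single α 1) = ker v ∧ NonDeg (v - Finsupp.single α 1) := by
  classical
  use 13
  intro n hn v hv hcard
  have hm : 14 ≤ (srcs v).card := by omega
  have hsupcard : 14 ≤ v.support.card :=
    le_trans hm (Finset.card_image_le)
  have hsrc_mem : ∀ d ∈ srcs v, ∃ β ∈ v.support, src β = d := by
    intro d hd
    exact Finset.mem_image.1 hd
  by_cases hcase : ∀ d ∈ srcs v, ∀ e ∈ srcs v, d ≠ e →
      3 ≤ mass v (precSet v d ∪ precSet v e)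
  · -- Case B : all pairs heavy
    have hexF : ∀ d : {x // x ∈ srcs v}, ∃ β, β ∈ v.support ∧ src β = d.1 := by
      rintro ⟨d, hd⟩
      obtain ⟨β, h1, h2⟩ := hsrc_mem d hd
      exact ⟨β, h1, h2⟩
    choose F hF1 hF2 using hexF
    set InnF : Atom → Finset Atom := fun e => (srcs v).filter (fun d => Edge v d e) with hInnF
    have hmemInnF : ∀ e d, d ∈ InnF e ↔ d ∈ srcs v ∧ Edge v d e := by
      intro e d; rw [hInnF]; exact Finset.mem_filter
    set L : Finset Atom := (srcs v).filter (fun e => (InnF e).card ≤ 3) with hLDef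
    have hmemL : ∀ e, e ∈ L ↔ e ∈ srcs v ∧ (InnF e).card ≤ 3 := by
      intro e; rw [hLDef]; exact Finset.mem_filter
    have hLcard : L.card ≤ 2 := by
      by_contra hc
      push_neg at hc
      set NE : Finset (Atom × Atom) :=
        ((srcs v) ×ˢ (srcs v)).filter (fun p => p.1 ≠ p.2 ∧ ¬ Edge v p.1 p.2) with hNEDef
      have hmemNE : ∀ p : Atom × Atom, p ∈ NE ↔
          (p.1 ∈ srcs v ∧ p.2 ∈ srcs v) ∧ p.1 ≠ p.2 ∧ ¬ Edge v p.1 p.2 := by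
        intro p; rw [hNEDef, Finset.mem_filter, Finset.mem_product]
      have hup : NE.card ≤ 2 * (srcs v).card := by
        have hsub : NE ⊆ (srcs v).attach.biUnion
            (fun d => (trg (F d)).image (fun e => (d.1, e))) := by
          rintro ⟨p1, p2⟩ hp
          obtain ⟨⟨hp1, hp2⟩, hne, hnE⟩ := (hmemNE (p1, p2)).1 hp
          have hclaim : p2 ∈ trg (F ⟨p1, hp1⟩) := by
            by_contra h
            exact hnE ⟨hne, hp1, hp2, F ⟨p1, hp1⟩, hF1 ⟨p1, hp1⟩, hF2 ⟨p1, hp1⟩, h⟩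
          exact Finset.mem_biUnion.2 ⟨⟨p1, hp1⟩, Finset.mem_attach _ _,
            Finset.mem_image.2 ⟨p2, hclaim, rfl⟩⟩
        refine le_trans (Finset.card_le_card hsub) ?_
        refine le_trans Finset.card_biUnion_le ?_
        refine le_trans (Finset.sum_le_card_nsmul _ _ 2 ?_) ?_
        · intro d _
          refine le_trans Finset.card_image_le ?_
          have h2 : (trg (F d)).card = 2 := (F d).2.1
          omega
        · rw [Finset.card_attach, smul_eq_mul]
          omega
      have hlow : ∀ e ∈ L, (srcs v).card ≤
          ((srcs v).filter (fun d => d ≠ e ∧ ¬ Edge v d e)).card + 4 := by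
        intro e heL
        have hsplit : srcs v ⊆
            ((srcs v).filter (fun d => d ≠ e ∧ ¬ Edge v d e)) ∪ insert e (InnF e) := by
          intro d hd
          by_cases h1 : d = e
          · exact Finset.mem_union_right _ (by simp [h1])
          by_cases h2 : Edge v d e
          · exact Finset.mem_union_right _
              (Finset.mem_insert_of_mem ((hmemInnF e d).2 ⟨hd, h2⟩))
          · exact Finset.mem_union_left _ (Finset.mem_filter.2 ⟨hd, h1, h2⟩)
        have h1 := Finset.card_le_card hsplit
        have h2 := Finset.card_union_le
          ((srcs v).filter (fun d => d ≠ e ∧ ¬ Edge v d e)) (insert e (InnF e))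
        have h3 := Finset.card_insert_le e (InnF e)
        have h4 := ((hmemL e).1 heL).2
        omega
      have hbiglow : L.card * ((srcs v).card - 4) ≤ NE.card := by
        have hsub2 : L.biUnion (fun e =>
            ((srcs v).filter (fun d => d ≠ e ∧ ¬ Edge v d e)).image (fun d => (d, e))) ⊆ NE := by
          intro p hp
          obtain ⟨e, heL, hpim⟩ := Finset.mem_biUnion.1 hp
          obtain ⟨d, hdf, rfl⟩ := Finset.mem_image.1 hpim
          obtain ⟨hd, hne, hnE⟩ := Finset.mem_filter.1 hdf
          exact (hmemNE (d, e)).2 ⟨⟨hd, ((hmemL e).1 heL).1⟩, hne, hnE⟩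
        have hdisj : ∀ e1 ∈ L, ∀ e2 ∈ L, e1 ≠ e2 →
            Disjoint (((srcs v).filter (fun d => d ≠ e1 ∧ ¬ Edge v d e1)).image (fun d => (d, e1)))
              (((srcs v).filter (fun d => d ≠ e2 ∧ ¬ Edge v d e2)).image (fun d => (d, e2))) := by
          intro e1 _ e2 _ hne
          rw [Finset.disjoint_left]
          intro p hp1 hp2
          obtain ⟨d1, _, rfl⟩ := Finset.mem_image.1 hp1
          obtain ⟨d2, _, heq⟩ := Finset.mem_image.1 hp2
          exact hne (congrArg Prod.snd heq).symm
        have hcardbi := Finset.card_biUnion hdisj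
        have hlow2 : L.card • ((srcs v).card - 4) ≤ ∑ e ∈ L,
            (((srcs v).filter (fun d => d ≠ e ∧ ¬ Edge v d e)).image (fun d => (d, e))).card := by
          apply Finset.card_nsmul_le_sum
          intro e heL
          have himg : (((srcs v).filter (fun d => d ≠ e ∧ ¬ Edge v d e)).image
              (fun d => (d, e))).card = ((srcs v).filter (fun d => d ≠ e ∧ ¬ Edge v d e)).card := by
            apply Finset.card_image_of_injOn
            intro a _ b _ hab
            exact congrArg Prod.fst hab
          rw [himg]
          have := hlow e heL
          omega
        rw [smul_eq_mul] at hlow2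
        calc L.card * ((srcs v).card - 4) ≤ _ := hlow2
          _ = _ := hcardbi.symm
          _ ≤ NE.card := Finset.card_le_card hsub2
      have hmul : 3 * ((srcs v).card - 4) ≤ L.card * ((srcs v).card - 4) :=
        Nat.mul_le_mul_right _ (by omega)
      omega
    set Crit : Finset Letter := v.support.filter
      (fun γ => ∃ x, x ∉ trg γ ∧ ∀ β ∈ v.support, β ≠ γ → x ∈ trg β) with hCritDef
    have hmemCrit : ∀ γ, γ ∈ Crit ↔ γ ∈ v.support ∧
        ∃ x, x ∉ trg γ ∧ ∀ β ∈ v.support, β ≠ γ → x ∈ trg β := by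
      intro γ; rw [hCritDef]; exact Finset.mem_filter
    have hCritcard : Crit.card ≤ 2 := by
      by_contra hcc
      push_neg at hcc
      obtain ⟨T3, hT3sub, hT3card⟩ := Finset.exists_subset_card_eq
        (show 3 ≤ Crit.card by omega)
      obtain ⟨a, b, c, hab, hac, hbc, hT3⟩ := Finset.card_eq_three.1 hT3card
      have ha := (hmemCrit a).1 (hT3sub (by rw [hT3]; simp))
      have hb := (hmemCrit b).1 (hT3sub (by rw [hT3]; simp))
      have hc' := (hmemCrit c).1 (hT3sub (by rw [hT3]; simp))
      obtain ⟨xa, hxa1, hxa2⟩ := ha.2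
      obtain ⟨xb, hxb1, hxb2⟩ := hb.2
      obtain ⟨xc, hxc1, hxc2⟩ := hc'.2
      obtain ⟨β, hβsupp, hβn⟩ := exists_avoid v.support ({a, b, c} : Finset Letter) (by
        have := card3 a b c
        omega)
      simp only [Finset.mem_insert, Finset.mem_singleton, not_or] at hβn
      have hxab : xa ∈ trg b := hxa2 b hb.1 (Ne.symm hab)
      have hxac : xa ∈ trg c := hxa2 c hc'.1 (Ne.symm hac)
      have hxba : xb ∈ trg a := hxb2 a ha.1 hab
      have hxbc : xb ∈ trg c := hxb2 c hc'.1 (Ne.symm hbc)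
      have hxca : xc ∈ trg a := hxc2 a ha.1 hac
      have hxcb : xc ∈ trg b := hxc2 b hb.1 hbc
      have hne_ab : xa ≠ xb := fun h => hxb1 (h ▸ hxab)
      have hne_ac : xa ≠ xc := fun h => hxc1 (h ▸ hxac)
      have hne_bc : xb ≠ xc := fun h => hxc1 (h ▸ hxbc)
      have hxaβ : xa ∈ trg β := hxa2 β hβsupp hβn.1
      have hxbβ : xb ∈ trg β := hxb2 β hβsupp hβn.2.1
      have hxcβ : xc ∈ trg β := hxc2 β hβsupp hβn.2.2
      have hsubx : ({xa, xb, xc} : Finset Atom) ⊆ trg β := by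
        intro x hx
        rcases Finset.mem_insert.1 hx with h | h
        · exact h ▸ hxaβ
        rcases Finset.mem_insert.1 h with h' | h'
        · exact h' ▸ hxbβ
        · exact (Finset.mem_singleton.1 h') ▸ hxcβ
      have hcardx : ({xa, xb, xc} : Finset Atom).card = 3 := by
        rw [Finset.card_insert_of_notMem (by simp [hne_ab, hne_ac]),
          Finset.card_insert_of_notMem (by simp [hne_bc]), Finset.card_singleton]
      have hle3 := Finset.card_le_card hsubx
      have h2 : (trg β).card = 2 := β.2.1
      rw [hcardx, h2] at hle3
      omega
    set Sbad : Finset Atom := (L ∪ L.biUnion (fun e => InnF e)) ∪ Crit.image src with hSbadDef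
    have hSbadcard : Sbad.card ≤ 10 := by
      have h1 : (L.biUnion (fun e => InnF e)).card ≤ 6 := by
        refine le_trans Finset.card_biUnion_le ?_
        refine le_trans (Finset.sum_le_card_nsmul L _ 3 ?_) ?_
        · intro e he; exact ((hmemL e).1 he).2
        · rw [smul_eq_mul]; omega
      have h2 : (Crit.image src).card ≤ 2 := le_trans Finset.card_image_le hCritcard
      have h3 := Finset.card_union_le (L ∪ L.biUnion fun e => InnF e) (Crit.image src)
      have h4 := Finset.card_union_le L (L.biUnion fun e => InnF e)
      rw [hSbadDef]
      omega
    obtain ⟨s, hs, hsbad⟩ := exists_avoid (srcs v) Sbad (by omega)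
    obtain ⟨α, hαsupp, hαsrc⟩ := hsrc_mem s hs
    have hsnL : s ∉ L := fun h =>
      hsbad (Finset.mem_union_left _ (Finset.mem_union_left _ h))
    have hsnInn : ∀ e ∈ L, ¬ Edge v s e := by
      intro e he hE
      exact hsbad (Finset.mem_union_left _ (Finset.mem_union_right _
        (Finset.mem_biUnion.2 ⟨e, he, (hmemInnF e s).2 ⟨hE.2.1, hE⟩⟩)))
    have hsnCrit : α ∉ Crit := by
      intro h
      apply hsbad
      refine Finset.mem_union_right _ ?_
      rw [← hαsrc]
      exact Finset.mem_image_of_mem src h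
    have hbigInn : ∀ e ∈ srcs v, e ∉ L → 4 ≤ (InnF e).card := by
      intro e he heL
      by_contra h
      exact heL ((hmemL e).2 ⟨he, by omega⟩)
    refine ⟨α, hαsupp, main_lemma v hv α hαsupp ?_ ?_ ?_ ?_⟩
    · refine Or.inr (fun x hx => ?_)
      by_contra hxn
      exact hsnCrit ((hmemCrit α).2 ⟨hαsupp, x, hxn, hx⟩)
    · intro e he _
      by_cases heL : e ∈ L
      · obtain ⟨f, hf⟩ := hv.1 e he
        refine ⟨f, fun hfs => hsnInn e heL ?_, hf⟩
        rw [hαsrc] at hfs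
        rw [← hfs]
        exact hf
      · obtain ⟨f, hfI, hfn⟩ := exists_avoid (InnF e) ({src α} : Finset Atom) (by
          rw [Finset.card_singleton]
          have := hbigInn e he heL
          omega)
        rw [Finset.mem_singleton] at hfn
        exact ⟨f, hfn, ((hmemInnF e f).1 hfI).2⟩
    · intro d hd e he hde
      by_cases hdL : d ∈ L
      · by_cases heL : e ∈ L
        · obtain ⟨f, hfmem, hfnot⟩ := Set.not_subset.1 (hv.2.1 d hd e he hde)
          simp only [Set.mem_insert_iff, Set.mem_singleton_iff, not_or] at hfnot
          have hfor : Edge v f d ∨ Edge v f e := (Set.mem_union _ _ _).1 hfmem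
          refine ⟨f, fun hfs => ?_, hfnot.1, hfnot.2, hfor⟩
          rw [hαsrc] at hfs
          rcases hfor with hE | hE
          · exact hsnInn d hdL (by rw [← hfs]; exact hE)
          · exact hsnInn e heL (by rw [← hfs]; exact hE)
        · obtain ⟨f, hfI, hfn⟩ := exists_avoid (InnF e) ({src α, d, e} : Finset Atom) (by
            have h2 := card3 (src α) d e
            have := hbigInn e he heL
            omega)
          simp only [Finset.mem_insert, Finset.mem_singleton, not_or] at hfn
          exact ⟨f, hfn.1, hfn.2.1, hfn.2.2, Or.inr ((hmemInnF e f).1 hfI).2⟩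
      · obtain ⟨f, hfI, hfn⟩ := exists_avoid (InnF d) ({src α, d, e} : Finset Atom) (by
          have h2 := card3 (src α) d e
          have := hbigInn d hd hdL
          omega)
        simp only [Finset.mem_insert, Finset.mem_singleton, not_or] at hfn
        exact ⟨f, hfn.1, hfn.2.1, hfn.2.2, Or.inl ((hmemInnF d f).1 hfI).2⟩
    · intro d hd e he hde _
      exact hcase d hd e he hde
  · -- Case A : a light pair exists
    push_neg at hcase
    obtain ⟨d0, hd0, e0, he0, hde0, hmass0⟩ := hcase
    set Rigid : Finset Atom := (srcs v).filter
      (fun t => t ≠ d0 ∧ t ≠ e0 ∧ ∀ β ∈ v.support, src β = t → trg β = ({d0, e0} : Finset Atom))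
      with hRigidDef
    have hmemRigid : ∀ t, t ∈ Rigid ↔ t ∈ srcs v ∧ t ≠ d0 ∧ t ≠ e0 ∧
        ∀ β ∈ v.support, src β = t → trg β = ({d0, e0} : Finset Atom) := by
      intro t; rw [hRigidDef, Finset.mem_filter]
    -- letters of rigid sources
    have hRL : ∀ t ∈ Rigid, ∃ β ∈ v.support, src β = t ∧ trg β = ({d0, e0} : Finset Atom) := by
      intro t ht
      obtain ⟨hts, _, _, hall⟩ := (hmemRigid t).1 ht
      obtain ⟨β, hβ, hβs⟩ := hsrc_mem t hts
      exact ⟨β, hβ, hβs, hall β hβ hβs⟩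
    -- the non-rigid sources outside {d0,e0} number at most 2
    set NR : Finset Atom := (srcs v).filter
      (fun t => t ≠ d0 ∧ t ≠ e0 ∧ ¬ ∀ β ∈ v.support, src β = t → trg β = ({d0, e0} : Finset Atom))
      with hNRDef
    have hmemNR : ∀ t, t ∈ NR ↔ t ∈ srcs v ∧ t ≠ d0 ∧ t ≠ e0 ∧
        ¬ ∀ β ∈ v.support, src β = t → trg β = ({d0, e0} : Finset Atom) := by
      intro t; rw [hNRDef, Finset.mem_filter]
    have hNRcard : NR.card ≤ 2 := by
      have hexNR : ∀ t : {x // x ∈ NR}, ∃ β, β ∈ v.support ∧ src β = t.1 ∧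
          trg β ≠ ({d0, e0} : Finset Atom) := by
        rintro ⟨t, ht⟩
        have h1 := ((hmemNR t).1 ht).2.2.2
        push_neg at h1
        obtain ⟨β, hβ, hβs, hβt⟩ := h1
        exact ⟨β, hβ, hβs, hβt⟩
      choose W hW1 hW2 hW3 using hexNR
      have hTcard : (NR.attach.image W).card = NR.card := by
        rw [Finset.card_image_of_injOn, Finset.card_attach]
        intro a _ b _ hab
        apply Subtype.ext
        rw [← hW2 a, ← hW2 b, hab]
      have hle := card_le_mass v (precSet v d0 ∪ precSet v e0) (NR.attach.image W) ?_ ?_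
      · omega
      · intro β hβ
        obtain ⟨a, _, rfl⟩ := Finset.mem_image.1 hβ
        exact hW1 a
      · intro β hβ
        obtain ⟨a, _, rfl⟩ := Finset.mem_image.1 hβ
        obtain ⟨_, had, hae, _⟩ := (hmemNR a.1).1 a.2
        rcases trg_ne_pair hde0 (hW3 a) with h | h
        · exact Or.inl ⟨hW1 a, by rw [hW2 a]; exact had, h⟩
        · exact Or.inr ⟨hW1 a, by rw [hW2 a]; exact hae, h⟩
    have hRcard : 10 ≤ Rigid.card := by
      have hsub : srcs v ⊆ Rigid ∪ NR ∪ {d0, e0} := by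
        intro t ht
        by_cases h1 : t = d0
        · exact Finset.mem_union_right _ (by simp [h1])
        by_cases h2 : t = e0
        · exact Finset.mem_union_right _ (by simp [h2])
        by_cases h3 : ∀ β ∈ v.support, src β = t → trg β = ({d0, e0} : Finset Atom)
        · exact Finset.mem_union_left _ (Finset.mem_union_left _
            ((hmemRigid t).2 ⟨ht, h1, h2, h3⟩))
        · exact Finset.mem_union_left _ (Finset.mem_union_right _
            ((hmemNR t).2 ⟨ht, h1, h2, h3⟩))
      have h1 := Finset.card_le_card hsub
      have h2 := Finset.card_union_le (Rigid ∪ NR) ({d0, e0} : Finset Atom)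
      have h3 := Finset.card_union_le Rigid NR
      have h4 : ({d0, e0} : Finset Atom).card ≤ 2 :=
        le_trans (Finset.card_insert_le _ _) (by simp)
      omega
    -- rigid sources are never in-neighbours of d0 or e0
    have hnoedge : ∀ t ∈ Rigid, ∀ x, (x = d0 ∨ x = e0) → ¬ Edge v t x := by
      rintro t ht x hx ⟨hne, _, _, β, hβ, hβs, hβt⟩
      apply hβt
      rw [((hmemRigid t).1 ht).2.2.2 β hβ hβs]
      rcases hx with h | h
      · simp [h]
      · simp [h]
    -- rigid sources give edges to everything outside {d0,e0}
    have hedge : ∀ t ∈ Rigid, ∀ e ∈ srcs v, e ≠ t → e ≠ d0 → e ≠ e0 → Edge v t e := by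
      intro t ht e he het hed0 hee0
      obtain ⟨β, hβ, hβs, hβt⟩ := hRL t ht
      refine ⟨fun h => het h.symm, ((hmemRigid t).1 ht).1, he, β, hβ, hβs, ?_⟩
      rw [hβt]
      simp [hed0, hee0]
    -- all pairs other than {d0,e0} are heavy
    have hheavy : ∀ d ∈ srcs v, ∀ e ∈ srcs v, d ≠ e →
        ((d ≠ d0 ∧ d ≠ e0) ∨ (e ≠ d0 ∧ e ≠ e0)) →
        3 ≤ mass v (precSet v d ∪ precSet v e) := by
      intro d hd e he hde hnp
      have h8 : 3 ≤ (Rigid \ {d, e}).card := by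
        have hsd := Finset.le_card_sdiff ({d, e} : Finset Atom) Rigid
        have h4 : ({d, e} : Finset Atom).card ≤ 2 :=
          le_trans (Finset.card_insert_le _ _) (by simp)
        omega
      obtain ⟨T3, hT3sub, hT3card⟩ := Finset.exists_subset_card_eq h8
      obtain ⟨t1, t2, t3, h12, h13, h23, hT3⟩ := Finset.card_eq_three.1 hT3card
      have hmem3 : ∀ t ∈ T3, t ∈ Rigid ∧ t ≠ d ∧ t ≠ e := by
        intro t ht
        have := Finset.mem_sdiff.1 (hT3sub ht)
        refine ⟨this.1, ?_, ?_⟩ <;> intro h <;> apply this.2 <;> simp [h]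
      have ht1 := hmem3 t1 (by rw [hT3]; simp)
      have ht2 := hmem3 t2 (by rw [hT3]; simp)
      have ht3 := hmem3 t3 (by rw [hT3]; simp)
      obtain ⟨β1, hβ1, hβ1s, hβ1t⟩ := hRL t1 ht1.1
      obtain ⟨β2, hβ2, hβ2s, hβ2t⟩ := hRL t2 ht2.1
      obtain ⟨β3, hβ3, hβ3s, hβ3t⟩ := hRL t3 ht3.1
      have hne12 : β1 ≠ β2 := fun h => h12 (by rw [← hβ1s, ← hβ2s, h])
      have hne13 : β1 ≠ β3 := fun h => h13 (by rw [← hβ1s, ← hβ3s, h])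
      have hne23 : β2 ≠ β3 := fun h => h23 (by rw [← hβ2s, ← hβ3s, h])
      have hcardβ : ({β1, β2, β3} : Finset Letter).card = 3 := by
        rw [Finset.card_insert_of_notMem (by simp [hne12, hne13]),
          Finset.card_insert_of_notMem (by simp [hne23]), Finset.card_singleton]
      have hmemS : ∀ γ ∈ ({β1, β2, β3} : Finset Letter),
          γ ∈ precSet v d ∪ precSet v e := by
        intro γ hγ
        have hprops : γ ∈ v.support ∧ (src γ = t1 ∨ src γ = t2 ∨ src γ = t3) ∧
            trg γ = ({d0, e0} : Finset Atom) := by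
          rcases Finset.mem_insert.1 hγ with h | h
          · exact h ▸ ⟨hβ1, Or.inl hβ1s, hβ1t⟩
          rcases Finset.mem_insert.1 h with h' | h'
          · exact h' ▸ ⟨hβ2, Or.inr (Or.inl hβ2s), hβ2t⟩
          · exact (Finset.mem_singleton.1 h') ▸ ⟨hβ3, Or.inr (Or.inr hβ3s), hβ3t⟩
        obtain ⟨hsupp, hsrcs, htrg⟩ := hprops
        have hsrcd : src γ ≠ d := by
          rcases hsrcs with h | h | h <;> rw [h]
          · exact ht1.2.1
          · exact ht2.2.1
          · exact ht3.2.1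
        have hsrce : src γ ≠ e := by
          rcases hsrcs with h | h | h <;> rw [h]
          · exact ht1.2.2
          · exact ht2.2.2
          · exact ht3.2.2
        rcases hnp with ⟨ha, hb⟩ | ⟨ha, hb⟩
        · exact Or.inl ⟨hsupp, hsrcd, by rw [htrg]; simp [ha, hb]⟩
        · exact Or.inr ⟨hsupp, hsrce, by rw [htrg]; simp [ha, hb]⟩
      have hsub3 : ({β1, β2, β3} : Finset Letter) ⊆ v.support := by
        intro γ hγ
        rcases Finset.mem_insert.1 hγ with h | h
        · exact h ▸ hβ1
        rcases Finset.mem_insert.1 h with h' | h'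
        · exact h' ▸ hβ2
        · exact (Finset.mem_singleton.1 h') ▸ hβ3
      have := card_le_mass v (precSet v d ∪ precSet v e) _ hsub3 hmemS
      omega
    -- choose a rigid source and its letter
    obtain ⟨s, hsR, -⟩ := exists_avoid Rigid (∅ : Finset Atom) (by rw [Finset.card_empty]; omega)
    obtain ⟨α, hαsupp, hαsrc, hαtrg⟩ := hRL s hsR
    obtain ⟨s', hs'R, hs'ne⟩ := exists_avoid Rigid ({s} : Finset Atom)
      (by rw [Finset.card_singleton]; omega)
    rw [Finset.mem_singleton] at hs'ne
    obtain ⟨β', hβ's, hβ'src, hβ'trg⟩ := hRL s' hs'R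
    have hsd0 : s ≠ d0 := ((hmemRigid s).1 hsR).2.1
    have hse0 : s ≠ e0 := ((hmemRigid s).1 hsR).2.2.1
    refine ⟨α, hαsupp, main_lemma v hv α hαsupp ?_ ?_ ?_ ?_⟩
    · -- hK
      refine Or.inr (fun x hx => ?_)
      have hβ'α : β' ≠ α := fun h => hs'ne (by rw [← hβ'src, h, hαsrc])
      have := hx β' hβ's hβ'α
      rw [hαtrg, ← hβ'trg]
      exact this
    · -- h1
      intro e he hene
      rw [hαsrc] at hene
      by_cases hep : e = d0 ∨ e = e0
      · obtain ⟨f, hf⟩ := hv.1 e he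
        refine ⟨f, fun hfs => ?_, hf⟩
        rw [hαsrc] at hfs
        exact hnoedge s hsR e hep (hfs ▸ hf)
      · push_neg at hep
        obtain ⟨f, hfR, hfn⟩ := exists_avoid Rigid ({s, e} : Finset Atom) (by
          have h2 : ({s, e} : Finset Atom).card ≤ 2 :=
            le_trans (Finset.card_insert_le _ _) (by simp)
          omega)
        simp only [Finset.mem_insert, Finset.mem_singleton, not_or] at hfn
        refine ⟨f, by rw [hαsrc]; exact hfn.1, hedge f hfR e he (fun h => hfn.2 h.symm) hep.1 hep.2⟩
    · -- h2
      intro d hd e he hde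
      by_cases hdp : d = d0 ∨ d = e0
      · by_cases hep : e = d0 ∨ e = e0
        · have hns := hv.2.1 d hd e he hde
          obtain ⟨f, hfmem, hfnot⟩ := Set.not_subset.1 hns
          simp only [Set.mem_insert_iff, Set.mem_singleton_iff, not_or] at hfnot
          have hfs : f ≠ src α := by
            intro h
            rw [hαsrc] at h
            rcases hfmem with hEd | hEe
            · exact hnoedge s hsR d hdp (h ▸ hEd)
            · exact hnoedge s hsR e hep (h ▸ hEe)
          exact ⟨f, hfs, hfnot.1, hfnot.2, hfmem⟩
        · push_neg at hep
          obtain ⟨f, hfR, hfn⟩ := exists_avoid Rigid ({s, d, e} : Finset Atom) (by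
            have h2 := card3 s d e
            omega)
          simp only [Finset.mem_insert, Finset.mem_singleton, not_or] at hfn
          exact ⟨f, by rw [hαsrc]; exact hfn.1, hfn.2.1, hfn.2.2,
            Or.inr (hedge f hfR e he (fun h => hfn.2.2 h.symm) hep.1 hep.2)⟩
      · push_neg at hdp
        obtain ⟨f, hfR, hfn⟩ := exists_avoid Rigid ({s, d, e} : Finset Atom) (by
          have h2 := card3 s d e
          omega)
        simp only [Finset.mem_insert, Finset.mem_singleton, not_or] at hfn
        exact ⟨f, by rw [hαsrc]; exact hfn.1, hfn.2.1, hfn.2.2,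
          Or.inl (hedge f hfR d hd (fun h => hfn.2.1 h.symm) hdp.1 hdp.2)⟩
    · -- h3
      intro d hd e he hde hmem
      apply hheavy d hd e he hde
      rcases hmem with ⟨_, _, hdtrg⟩ | ⟨_, _, hetrg⟩
      · rw [hαtrg] at hdtrg
        simp only [Finset.mem_insert, Finset.mem_singleton, not_or] at hdtrg
        exact Or.inl hdtrg
      · rw [hαtrg] at hetrg
        simp only [Finset.mem_insert, Finset.mem_singleton, not_or] at hetrg
        exact Or.inr hetrg
end

section
/- The language L₁ = {a₁a₂...a_n ∈ Atoms* : n ≥ 1, a_i ≠ a_{i+1} for all i < n} of nonempty words over the infinite atom alphabet with all consecutive letters distinct is not a rational data language. -/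
open scoped Pointwise

namespace L1Proof

lemma smul_list (π : APerm) (w : List Atom) : π • w = w.map π := rfl

lemma fixes_mono {π : APerm} {S T : Finset Atom} (hST : S ⊆ T) (h : Fixes π T) :
    Fixes π S := fun a ha => h a (hST ha)

lemma fixes_inv {π : APerm} {S : Finset Atom} (h : Fixes π S) : Fixes π⁻¹ S := by
  intro a ha
  conv_lhs => rw [← h a ha]
  simp

lemma fixes_mul {π σ : APerm} {S : Finset Atom} (hπ : Fixes π S) (hσ : Fixes σ S) :
    Fixes (π * σ) S := by
  intro a ha
  simp [Equiv.Perm.mul_apply, hσ a ha, hπ a ha]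

lemma chain'_map_iff (π : APerm) (w : List Atom) :
    (w.map π).Chain' (· ≠ ·) ↔ w.Chain' (· ≠ ·) := by
  unfold List.Chain'
  rw [List.isChain_map]
  constructor <;> intro h <;> apply h.imp ?_ <;> intro a b <;>
    simp [π.injective.ne_iff]

/-- The pumping property: any long word with pairwise distinct letters in `L`
forces a word violating the consecutive-distinctness condition. -/
def Pump (L : Set (List Atom)) (N : ℕ) : Prop :=
  ∀ w ∈ L, w.Nodup → N < w.length → ∃ w' ∈ L, ¬ w'.Chain' (· ≠ ·)

lemma pump_mono {L : Set (List Atom)} {N N' : ℕ} (h : N ≤ N') (hp : Pump L N) :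
    Pump L N' := fun w hw hnd hlen => hp w hw hnd (lt_of_le_of_lt h hlen)

lemma pump_smul (π : APerm) {L : Set (List Atom)} {N : ℕ} (h : Pump L N) :
    Pump (π • L) N := by
  intro w hw hnd hlen
  rcases hw with ⟨u, hu, rfl⟩
  have hnd' : u.Nodup := by
    have : (u.map π).Nodup := by simpa [smul_list] using hnd
    exact this.of_map π
  obtain ⟨w', hw', hbad⟩ := h u hu hnd' (by simpa [smul_list] using hlen)
  refine ⟨π • w', Set.smul_mem_smul_set hw', ?_⟩
  rw [smul_list, chain'_map_iff]
  exact hbad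

lemma pump_smul_iff (π : APerm) {L : Set (List Atom)} {N : ℕ} :
    Pump (π • L) N ↔ Pump L N := by
  constructor
  · intro h
    have := pump_smul π⁻¹ h
    rwa [inv_smul_smul] at this
  · exact pump_smul π

/-- Every rational data language (over atoms) is closed under finitely-supported
renaming: it has a finite support. -/
lemma rat_closed {L : Set (List Atom)} (h : IsRational L) :
    ∃ S : Finset Atom, ∀ π : APerm, Fixes π S → ∀ w ∈ L, π • w ∈ L := by
  induction h with
  | singleton w =>
      refine ⟨w.toFinset, fun π hπ u hu => ?_⟩
      rcases hu with rfl
      have : u.map π = u := by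
        conv_rhs => rw [← List.map_id u]
        exact List.map_congr_left (fun a ha => hπ a (List.mem_toFinset.mpr ha))
      simp only [Set.mem_singleton_iff, smul_list, this]
  | concat hL hK ihL ihK =>
      obtain ⟨SL, hSL⟩ := ihL
      obtain ⟨SK, hSK⟩ := ihK
      refine ⟨SL ∪ SK, fun π hπ w hw => ?_⟩
      obtain ⟨u, hu, v, hv, rfl⟩ := hw
      exact ⟨π • u, hSL π (fixes_mono Finset.subset_union_left hπ) u hu,
        π • v, hSK π (fixes_mono Finset.subset_union_right hπ) v hv,
        by simp [smul_list, List.map_append]⟩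
  | star hL ihL =>
      obtain ⟨SL, hSL⟩ := ihL
      refine ⟨SL, fun π hπ w hw => ?_⟩
      obtain ⟨ws, hws, rfl⟩ := hw
      refine ⟨ws.map (π • ·), fun u hu => ?_, by simp [smul_list, List.map_flatten]⟩
      obtain ⟨u', hu', rfl⟩ := List.mem_map.mp hu
      exact hSL π hπ u' (hws u' hu')
  | union D f hD hf _ _ =>
      obtain ⟨SD, R, hDR⟩ := hD
      obtain ⟨Sf, hSf⟩ := hf
      refine ⟨SD ∪ Sf, fun π hπ w hw => ?_⟩
      rw [Set.mem_iUnion₂] at hw ⊢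
      obtain ⟨i, hiD, hwf⟩ := hw
      refine ⟨π • i, ?_, ?_⟩
      · rw [hDR] at hiD ⊢
        rw [Set.mem_iUnion₂] at hiD ⊢
        obtain ⟨r, hr, σ, hσ, hσr⟩ := hiD
        exact ⟨r, hr, π * σ, fixes_mul (fixes_mono Finset.subset_union_left hπ) hσ,
          by rw [mul_smul, hσr]⟩
      · rw [hSf π (fixes_mono Finset.subset_union_right hπ) i]
        exact Set.smul_mem_smul_set hwf

end L1Proof

namespace L1Proof

/-- Any finite set of atoms disjoint from `S` can be moved into any sufficiently
large finite target set disjoint from `S`, by a permutation fixing `S`. -/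
lemma exists_perm_maps :
    ∀ (n : ℕ) (A T S : Finset Atom), A.card = n → Disjoint A S → Disjoint T S →
      n ≤ T.card → ∃ π : APerm, Fixes π S ∧ ∀ a ∈ A, π a ∈ T := by
  intro n
  induction n with
  | zero =>
      intro A T S hA _ _ _
      refine ⟨1, fun a _ => rfl, fun a ha => absurd ha ?_⟩
      simp [Finset.card_eq_zero.mp hA]
  | succ n ih =>
      intro A T S hA hAS hTS hT
      obtain ⟨a, ha⟩ := Finset.card_pos.mp (by omega : 0 < A.card)
      obtain ⟨t, ht⟩ := Finset.card_pos.mp (by omega : 0 < T.card)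
      set σ : APerm := Equiv.swap a t with hσdef
      have haS : a ∉ S := Finset.disjoint_left.mp hAS ha
      have htS : t ∉ S := Finset.disjoint_left.mp hTS ht
      have hσS : Fixes σ S := by
        intro x hx
        exact Equiv.swap_apply_of_ne_of_ne (fun h => haS (h ▸ hx)) (fun h => htS (h ▸ hx))
      set A' : Finset Atom := (A.erase a).image σ with hA'def
      have hA'card : A'.card = n := by
        rw [hA'def, Finset.card_image_of_injective _ σ.injective,
          Finset.card_erase_of_mem ha, hA]
        omega
      have hA'mem : ∀ x ∈ A', (∃ y ∈ A.erase a, σ y = x) := by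
        intro x hx
        simpa [hA'def] using hx
      have hA'S : Disjoint A' (S ∪ {t}) := by
        rw [Finset.disjoint_left]
        intro x hx
        obtain ⟨y, hy, rfl⟩ := hA'mem x hx
        have hyA : y ∈ A := Finset.mem_of_mem_erase hy
        have hya : y ≠ a := Finset.ne_of_mem_erase hy
        have hyS : y ∉ S := Finset.disjoint_left.mp hAS hyA
        intro hmem
        have hσy : σ y = y ∨ σ y = a := by
          rcases eq_or_ne y t with rfl | hyt
          · right; simp [hσdef]
          · left; exact Equiv.swap_apply_of_ne_of_ne hya hyt
        have hσyt : σ y ≠ t := by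
          intro h
          apply hya
          have h2 : σ (σ y) = σ t := congrArg σ h
          simpa [hσdef, Equiv.swap_apply_self] using h2
        rcases Finset.mem_union.mp hmem with h | h
        · rcases hσy with h' | h'
          · exact hyS (h' ▸ h)
          · exact haS (h' ▸ h)
        · exact hσyt (by simpa using h)
      have hT'S : Disjoint (T.erase t) (S ∪ {t}) := by
        rw [Finset.disjoint_left]
        intro x hx hmem
        rcases Finset.mem_union.mp hmem with h | h
        · exact Finset.disjoint_left.mp hTS (Finset.mem_of_mem_erase hx) h
        · exact Finset.ne_of_mem_erase hx (by simpa using h)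
      have hT'card : n ≤ (T.erase t).card := by
        rw [Finset.card_erase_of_mem ht]; omega
      obtain ⟨π', hπ'S, hπ'⟩ := ih A' (T.erase t) (S ∪ {t}) hA'card hA'S hT'S hT'card
      refine ⟨π' * σ, ?_, ?_⟩
      · intro x hx
        simp only [Equiv.Perm.mul_apply]
        rw [hσS x hx, hπ'S x (Finset.mem_union_left _ hx)]
      · intro x hx
        simp only [Equiv.Perm.mul_apply]
        rcases eq_or_ne x a with rfl | hxa
        · have : σ x = t := by simp [hσdef]
          rw [this, hπ'S t (Finset.mem_union_right _ (by simp))]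
          exact ht
        · have hx' : σ x ∈ A' := by
            rw [hA'def]
            exact Finset.mem_image_of_mem _ (Finset.mem_erase.mpr ⟨hxa, hx⟩)
          exact Finset.mem_of_mem_erase (hπ' _ hx')

/-- Lists of bounded length with entries below a bound form a finite set. -/
lemma finite_bounded_lists (M B : ℕ) :
    {l : List Atom | l.length ≤ M ∧ ∀ a ∈ l, a < B}.Finite := by
  have h1 : {l : List (Fin B) | l.length ≤ M}.Finite := List.finite_length_le (Fin B) M
  have h2 := h1.image (fun l : List (Fin B) => l.map (Fin.val))
  refine h2.subset ?_
  intro l ⟨hlen, hmem⟩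
  refine ⟨l.pmap (fun a ha => (⟨a, ha⟩ : Fin B)) hmem, by simpa using hlen, ?_⟩
  simp [List.map_pmap]

end L1Proof

namespace L1Proof

lemma headI_mem {u : List Atom} (h : u ≠ []) : u.headI ∈ u := by
  cases u with
  | nil => exact absurd rfl h
  | cons a t => exact List.mem_cons_self

lemma headI_cons_tail {u : List Atom} (h : u ≠ []) : u = u.headI :: u.tail := by
  cases u with
  | nil => exact absurd rfl h
  | cons a t => rfl

lemma getLastD_eq {u : List Atom} (h : u ≠ []) : u.getLastD 0 = u.getLast h := by
  rw [List.getLastD_eq_getLast?, List.getLast?_eq_getLast h, Option.getD_some]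

lemma getLastD_decomp {u : List Atom} (h : u ≠ []) :
    u = u.dropLast ++ [u.getLastD 0] := by
  rw [getLastD_eq h]
  exact (List.dropLast_append_getLast h).symm

lemma getLastD_mem {u : List Atom} (h : u ≠ []) : u.getLastD 0 ∈ u := by
  rw [getLastD_eq h]
  exact List.getLast_mem h

lemma heads_sublist : ∀ (us : List (List Atom)), (∀ u ∈ us, u ≠ []) →
    (us.map List.headI).Sublist us.flatten := by
  intro us
  induction us with
  | nil => intro _; simp
  | cons u t ih =>
      intro h
      have hu : u ≠ [] := h u List.mem_cons_self
      have iht := ih (fun v hv => h v (List.mem_cons_of_mem u hv))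
      rw [List.map_cons, List.flatten_cons]
      conv_rhs => rw [headI_cons_tail hu]
      rw [List.cons_append]
      exact List.cons_sublist_cons.mpr (iht.trans (List.sublist_append_right _ _))

lemma lasts_sublist : ∀ (us : List (List Atom)), (∀ u ∈ us, u ≠ []) →
    (us.map (fun u => u.getLastD 0)).Sublist us.flatten := by
  intro us
  induction us with
  | nil => intro _; simp
  | cons u t ih =>
      intro h
      have hu : u ≠ [] := h u List.mem_cons_self
      have iht := ih (fun v hv => h v (List.mem_cons_of_mem u hv))
      rw [List.map_cons, List.flatten_cons]
      have h1 : [u.getLastD 0].Sublist u := List.singleton_sublist.mpr (getLastD_mem hu)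
      exact List.Sublist.append h1 iht

lemma flatten_infix_of_decomp (s t : List (List Atom)) (u v : List Atom) :
    u ++ v <:+: (s ++ u :: v :: t).flatten := by
  refine ⟨s.flatten, t.flatten, ?_⟩
  simp [List.flatten_append, List.flatten_cons, List.append_assoc]

end L1Proof

namespace L1Proof

lemma rat_pump {L : Set (List Atom)} (h : IsRational L) : ∃ N, Pump L N := by
  induction h with
  | singleton w =>
      refine ⟨w.length, fun u hu _ hlen => ?_⟩
      rcases hu with rfl
      exact absurd hlen (lt_irrefl _)
  | concat hL hK ihL ihK =>
      obtain ⟨NL, hNL⟩ := ihL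
      obtain ⟨NK, hNK⟩ := ihK
      refine ⟨NL + NK, ?_⟩
      intro w hw hnd hlen
      obtain ⟨u, hu, v, hv, rfl⟩ := hw
      rw [List.length_append] at hlen
      rcases Nat.lt_or_ge NL u.length with h1 | h1
      · obtain ⟨u', hu', hbad⟩ :=
          hNL u hu ((List.sublist_append_left u v).nodup hnd) h1
        refine ⟨u' ++ v, ⟨u', hu', v, hv, rfl⟩, fun hch => hbad ?_⟩
        exact hch.infix ⟨[], v, by simp⟩
      · have h2 : NK < v.length := by omega
        obtain ⟨v', hv', hbad⟩ :=
          hNK v hv ((List.sublist_append_right u v).nodup hnd) h2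
        refine ⟨u ++ v', ⟨u, hu, v', hv', rfl⟩, fun hch => hbad ?_⟩
        exact hch.infix ⟨u, [], by simp⟩
  | @star K hK ihK =>
      classical
      obtain ⟨NL, hNL⟩ := ihK
      obtain ⟨SL, hSL⟩ := rat_closed hK
      refine ⟨(NL + 1) * (2 * SL.card + 2), ?_⟩
      intro w hw hnd hlen
      obtain ⟨ws, hws, rfl⟩ := hw
      set us := ws.filter (fun u => decide (u ≠ [])) with husdef
      have hflat : us.flatten = ws.flatten := List.flatten_filter_ne_nil
      rw [← hflat] at hnd hlen
      have husL : ∀ u ∈ us, u ∈ K := fun u hu => hws u (List.mem_of_mem_filter hu)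
      have husne : ∀ u ∈ us, u ≠ [] := fun u hu => by
        simpa using List.of_mem_filter hu
      by_cases hlong : ∃ u ∈ us, NL < u.length
      · -- a long block: pump inside it
        obtain ⟨u, hu, hul⟩ := hlong
        have hinf : u <:+: us.flatten := List.infix_of_mem_flatten hu
        have hund : u.Nodup := hinf.sublist.nodup hnd
        obtain ⟨u', hu', hbad⟩ := hNL u (husL u hu) hund hul
        obtain ⟨s, t, hst⟩ := List.append_of_mem hu
        refine ⟨(s ++ u' :: t).flatten, ⟨s ++ u' :: t, ?_, rfl⟩, fun hch => hbad ?_⟩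
        · intro x hx
          rcases List.mem_append.mp hx with hxs | hxc
          · exact husL x (hst ▸ List.mem_append_left _ hxs)
          · rcases List.mem_cons.mp hxc with rfl | hxt
            · exact hu'
            · exact husL x (hst ▸ List.mem_append_right _ (List.mem_cons_of_mem _ hxt))
        · exact hch.infix (List.infix_of_mem_flatten
            (List.mem_append_right _ List.mem_cons_self))
      · -- all blocks short: many blocks, find a clean boundary and swap
        push_neg at hlong
        set m := us.length with hmdef
        set c := SL.card with hcdef
        have hsum : us.flatten.length ≤ m * NL := by
          rw [List.length_flatten]
          have := List.sum_le_card_nsmul (us.map List.length) NL (by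
            intro x hx
            obtain ⟨u, hu, rfl⟩ := List.mem_map.mp hx
            exact hlong u hu)
          simpa [smul_eq_mul, hmdef] using this
        have hm : 2 * c + 2 < m := by
          by_contra hmc
          push_neg at hmc
          have h5 : (NL + 1) * (2 * c + 2) < (NL + 1) * (2 * c + 2) := by
            calc (NL + 1) * (2 * c + 2) < us.flatten.length := hlen
              _ ≤ m * NL := hsum
              _ ≤ (2 * c + 2) * NL := Nat.mul_le_mul hmc le_rfl
              _ ≤ (2 * c + 2) * (NL + 1) := Nat.mul_le_mul le_rfl (by omega)
              _ = (NL + 1) * (2 * c + 2) := mul_comm _ _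
          exact absurd h5 (lt_irrefl _)
        set lasts := us.map (fun u => u.getLastD 0) with hlastsdef
        set heads := us.map List.headI with hheadsdef
        have hlastlen : lasts.length = m := by simp [hlastsdef, hmdef]
        have hheadlen : heads.length = m := by simp [hheadsdef, hmdef]
        have hlastnd : lasts.Nodup := (lasts_sublist us husne).nodup hnd
        have hheadnd : heads.Nodup := (heads_sublist us husne).nodup hnd
        have hcard1 :
            ((Finset.range (m - 1)).filter (fun j => lasts.getD j 0 ∈ SL)).card ≤ c := by
          refine Finset.card_le_card_of_injOn (fun j => lasts.getD j 0)
            (fun j hj => (Finset.mem_filter.mp hj).2) ?_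
          intro j hj j' hj' hEq
          have hjm : j < lasts.length := by
            have := Finset.mem_range.mp (Finset.mem_filter.mp (Finset.mem_coe.mp hj)).1
            omega
          have hj'm : j' < lasts.length := by
            have := Finset.mem_range.mp (Finset.mem_filter.mp (Finset.mem_coe.mp hj')).1
            omega
          have hEq' : lasts.getD j 0 = lasts.getD j' 0 := hEq
          rw [List.getD_eq_getElem _ _ hjm, List.getD_eq_getElem _ _ hj'm] at hEq'
          exact hlastnd.getElem_inj_iff.mp hEq'
        have hcard2 :
            ((Finset.range (m - 1)).filter (fun j => heads.getD (j + 1) 0 ∈ SL)).card ≤ c := by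
          refine Finset.card_le_card_of_injOn (fun j => heads.getD (j + 1) 0)
            (fun j hj => (Finset.mem_filter.mp hj).2) ?_
          intro j hj j' hj' hEq
          have hjm : j + 1 < heads.length := by
            have := Finset.mem_range.mp (Finset.mem_filter.mp (Finset.mem_coe.mp hj)).1
            omega
          have hj'm : j' + 1 < heads.length := by
            have := Finset.mem_range.mp (Finset.mem_filter.mp (Finset.mem_coe.mp hj')).1
            omega
          have hEq' : heads.getD (j + 1) 0 = heads.getD (j' + 1) 0 := hEq
          rw [List.getD_eq_getElem _ _ hjm, List.getD_eq_getElem _ _ hj'm] at hEq'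
          have := hheadnd.getElem_inj_iff.mp hEq'
          omega
        obtain ⟨j, hjmem, hclean⟩ :
            ∃ j ∈ Finset.range (m - 1),
              ¬(lasts.getD j 0 ∈ SL ∨ heads.getD (j + 1) 0 ∈ SL) := by
          by_contra hall
          push_neg at hall
          have heq : (Finset.range (m - 1)).filter
              (fun j => lasts.getD j 0 ∈ SL ∨ heads.getD (j + 1) 0 ∈ SL) =
              Finset.range (m - 1) := Finset.filter_eq_self.mpr hall
          have hle : ((Finset.range (m - 1)).filter
              (fun j => lasts.getD j 0 ∈ SL ∨ heads.getD (j + 1) 0 ∈ SL)).card ≤ 2 * c := by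
            rw [Finset.filter_or]
            calc _ ≤ _ := Finset.card_union_le _ _
              _ ≤ 2 * c := by omega
          rw [heq, Finset.card_range] at hle
          omega
        push_neg at hclean
        obtain ⟨hbS, haS⟩ := hclean
        have hjlt : j < m - 1 := Finset.mem_range.mp hjmem
        have hj1 : j + 1 < us.length := by omega
        have hjlt' : j < us.length := by omega
        set u := us[j]'hjlt' with hudef
        set v := us[j + 1]'hj1 with hvdef
        have hdecomp : us = us.take j ++ u :: v :: us.drop (j + 2) := by
          conv_lhs => rw [← List.take_append_drop j us]
          congr 1
          rw [List.drop_eq_getElem_cons hjlt']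
          congr 1
          rw [List.drop_eq_getElem_cons hj1]
        have humem : u ∈ us := List.getElem_mem hjlt'
        have hvmem : v ∈ us := List.getElem_mem hj1
        have hune : u ≠ [] := husne u humem
        have hvne : v ≠ [] := husne v hvmem
        set b := u.getLastD 0 with hbdef
        set a := v.headI with hadef
        have hbval : lasts.getD j 0 = b := by
          rw [hlastsdef,
            List.getD_eq_getElem _ _ (by simp only [List.length_map]; omega),
            List.getElem_map]
        have haval : heads.getD (j + 1) 0 = a := by
          rw [hheadsdef,
            List.getD_eq_getElem _ _ (by simp only [List.length_map]; omega),
            List.getElem_map]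
        rw [hbval] at hbS
        rw [haval] at haS
        have hbu : b ∈ u := getLastD_mem hune
        have hav : a ∈ v := headI_mem hvne
        have huvinf : u ++ v <:+: us.flatten := by
          conv_rhs => rw [hdecomp]
          exact flatten_infix_of_decomp _ _ _ _
        have huvnd : (u ++ v).Nodup := huvinf.sublist.nodup hnd
        have hdisj : u.Disjoint v := (List.nodup_append'.mp huvnd).2.2
        have hba : b ≠ a := fun hEq => hdisj hbu (hEq ▸ hav)
        set π : APerm := Equiv.swap b a with hπdef
        have hπS : Fixes π SL := fun x hx =>
          Equiv.swap_apply_of_ne_of_ne (fun hEq => hbS (hEq ▸ hx)) (fun hEq => haS (hEq ▸ hx))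
        have hπu : π • u ∈ K := hSL π hπS u (husL u humem)
        refine ⟨(us.take j ++ (π • u) :: v :: us.drop (j + 2)).flatten,
          ⟨us.take j ++ (π • u) :: v :: us.drop (j + 2), ?_, rfl⟩, ?_⟩
        · intro x hx
          rcases List.mem_append.mp hx with hxs | hxc
          · exact husL x (List.mem_of_mem_take hxs)
          · rcases List.mem_cons.mp hxc with rfl | hxc'
            · exact hπu
            · rcases List.mem_cons.mp hxc' with rfl | hxt
              · exact husL _ hvmem
              · exact husL x (List.mem_of_mem_drop hxt)
        · intro hch
          have hinfuv : (π • u) ++ v <:+: (us.take j ++ (π • u) :: v :: us.drop (j + 2)).flatten :=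
            flatten_infix_of_decomp _ _ _ _
          have hlastu : π • u = (u.dropLast.map π) ++ [a] := by
            rw [smul_list]
            conv_lhs => rw [getLastD_decomp hune]
            rw [List.map_append, List.map_singleton, ← hbdef, hπdef,
              Equiv.swap_apply_left]
          have haa : [a, a] <:+: (π • u) ++ v := by
            refine ⟨u.dropLast.map π, v.tail, ?_⟩
            rw [hlastu]
            conv_rhs => rw [headI_cons_tail hvne]
            simp [← hadef]
          have := (hch.infix hinfuv).infix haa
          rw [List.isChain_cons_cons] at this
          exact this.1 rfl
  | union D f hD hf hrat ih =>
      classical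
      obtain ⟨SD, R, hDR⟩ := hD
      obtain ⟨Sf, hSf⟩ := hf
      set M := R.sup List.length with hMdef
      set B := Sf.sup id + 1 + M with hBdef
      set g : List Atom → ℕ := fun i => sInf {N | Pump (f i) N} with hgdef
      have hginv : ∀ (π : APerm), Fixes π Sf → ∀ i, g (π • i) = g i := by
        intro π hπ i
        have hset : {N | Pump (f (π • i)) N} = {N | Pump (f i) N} := by
          ext N
          simp only [Set.mem_setOf_eq]
          rw [hSf π hπ i, pump_smul_iff]
        simp only [hgdef, hset]
      obtain ⟨N, hN⟩ := ((finite_bounded_lists M B).image g).bddAbove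
      refine ⟨N, ?_⟩
      intro w hw hnd hlen
      rw [Set.mem_iUnion₂] at hw
      obtain ⟨i, hiD, hwf⟩ := hw
      have hiD' := hiD
      rw [hDR, Set.mem_iUnion₂] at hiD'
      obtain ⟨r, hrR, σ, hσ, hσr⟩ := hiD'
      have hilen : i.length ≤ M := by
        rw [← hσr, smul_list, List.length_map]
        exact Finset.le_sup hrR
      have key : ∃ π : APerm, Fixes π Sf ∧ ∀ x ∈ i, π x < B := by
        set A := i.toFinset \ Sf with hAdef
        set T := (Finset.range B) \ Sf with hTdef
        have hAS : Disjoint A Sf := Finset.sdiff_disjoint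
        have hTS : Disjoint T Sf := Finset.sdiff_disjoint
        have hsub : Sf ⊆ Finset.range B := by
          intro s hs
          rw [Finset.mem_range, hBdef]
          have hle : s ≤ Sf.sup id := Finset.le_sup (f := id) hs
          exact Nat.lt_of_le_of_lt hle
            (Nat.lt_of_lt_of_le (Nat.lt_succ_self _) (Nat.le_add_right _ _))
        have hTcard : T.card = B - Sf.card := by
          rw [hTdef, Finset.card_sdiff_of_subset hsub, Finset.card_range]
        have hAcard : A.card ≤ M :=
          le_trans (Finset.card_le_card Finset.sdiff_subset)
            (le_trans i.toFinset_card_le hilen)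
        have hSfcard : Sf.card ≤ Sf.sup id + 1 := by
          have hsub2 : Sf ⊆ Finset.range (Sf.sup id + 1) := by
            intro s hs
            rw [Finset.mem_range]
            have hle : s ≤ Sf.sup id := Finset.le_sup (f := id) hs
            exact Nat.lt_succ_of_le hle
          simpa using Finset.card_le_card hsub2
        have hTge : A.card ≤ T.card := by
          rw [hTcard, hBdef]
          have h1 : M + Sf.card ≤ Sf.sup id + 1 + M := by
            rw [add_comm M Sf.card]
            exact Nat.add_le_add_right hSfcard M
          exact le_trans hAcard (Nat.le_sub_of_add_le h1)
        obtain ⟨π, hπ, hmaps⟩ := exists_perm_maps A.card A T Sf rfl hAS hTS hTge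
        refine ⟨π, hπ, fun x hx => ?_⟩
        by_cases hxS : x ∈ Sf
        · rw [hπ x hxS, hBdef]
          have hle : x ≤ Sf.sup id := Finset.le_sup (f := id) hxS
          exact Nat.lt_of_le_of_lt hle
            (Nat.lt_of_lt_of_le (Nat.lt_succ_self _) (Nat.le_add_right _ _))
        · have hxA : x ∈ A := Finset.mem_sdiff.mpr ⟨List.mem_toFinset.mpr hx, hxS⟩
          have := hmaps x hxA
          rw [hTdef, Finset.mem_sdiff, Finset.mem_range] at this
          exact this.1
      obtain ⟨π, hπ, hmaps⟩ := key
      have hc : π • i ∈ {l : List Atom | l.length ≤ M ∧ ∀ a ∈ l, a < B} := by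
        constructor
        · rw [smul_list, List.length_map]; exact hilen
        · intro x hx
          rw [smul_list, List.mem_map] at hx
          obtain ⟨y, hy, rfl⟩ := hx
          exact hmaps y hy
      have hgle : g i ≤ N := by
        rw [← hginv π hπ i]
        exact hN (Set.mem_image_of_mem g hc)
      have hpump : Pump (f i) (g i) := by
        have hne : Set.Nonempty {N | Pump (f i) N} := by
          obtain ⟨N0, hN0⟩ := ih i hiD
          exact ⟨N0, hN0⟩
        exact Nat.sInf_mem hne
      obtain ⟨w', hw', hbad⟩ := hpump w hwf hnd (lt_of_le_of_lt hgle hlen)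
      exact ⟨w', Set.mem_iUnion₂.mpr ⟨i, hiD, hw'⟩, hbad⟩

end L1Proof

/-- The language `L₁` is not a rational data language. -/
theorem L1_not_rational : ¬ IsRational L1 := by
  intro h
  obtain ⟨N, hN⟩ := L1Proof.rat_pump h
  have hw : (List.range (N + 1)) ∈ L1 := by
    constructor
    · simp
    · exact (List.nodup_range : (List.range (N + 1)).Nodup).isChain
  obtain ⟨w', hw', hbad⟩ := hN _ hw List.nodup_range (by simp)
  exact hbad hw'.2
end
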